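/- arXiv:2303.04817 — 10 statements merged into one kernel-verified Lean document; each statement's English description precedes it below -/
import Mathlib

section
/- For all m, n ≥ 1 with m·n even, any two perfect matchings of the grid graph on Fin m × Fin n are related by a finite sequence of plaquette flips (each flip performed along a 4-cycle entirely contained in the graph). -/
abbrev V2 : Type := ℤ × ℤ

/-- The list of edges of the closed cycle through the vertices of `l`, in order. -/
def cycEdges {V : Type*} (l : List V) : List (Sym2 V) :=
  (l.zip (l.rotate 1)).map fun p => s(p.1, p.2)

/-- The edges of `es` lie alternately inside and outside of `M`. -/
def Alternates {V : Type*} (M : Set (Sym2 V)) (es : List (Sym2 V)) : Prop :=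
  (∀ (i : ℕ) (h : i < es.length), es.get ⟨i, h⟩ ∈ M ↔ Even i) ∨
  (∀ (i : ℕ) (h : i < es.length), es.get ⟨i, h⟩ ∈ M ↔ ¬ Even i)

/-- `M'` is obtained from `M` by a flip along the closed cycle through `l`:
the cycle edges alternate in and out of `M`, and `M'` is the symmetric difference. -/
def FlipAlong {V : Type*} (M M' : Set (Sym2 V)) (l : List V) : Prop :=
  Alternates M (cycEdges l) ∧ M' = symmDiff M {e | e ∈ cycEdges l}

/-- The face/cycle with vertex list `l` admits a flip with respect to `M`. -/
def AdmitsFlip {V : Type*} (M : Set (Sym2 V)) (l : List V) : Prop :=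
  Alternates M (cycEdges l)

/-- `M` is a perfect matching of `G`, viewed as a set of edges. -/
def IsPerfectMatching {V : Type*} (G : SimpleGraph V) (M : Set (Sym2 V)) : Prop :=
  M ⊆ G.edgeSet ∧ ∀ v : V, ∃! e, e ∈ M ∧ v ∈ e

/-- `M` is a perfect matching of the induced subgraph of `G` on vertex set `R`. -/
def IsPerfectMatchingOn {V : Type*} (G : SimpleGraph V) (R : Set V) (M : Set (Sym2 V)) : Prop :=
  (∀ e ∈ M, e ∈ G.edgeSet ∧ ∀ x ∈ e, x ∈ R) ∧ ∀ v ∈ R, ∃! e, e ∈ M ∧ v ∈ e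

/-- The grid graph on `Fin m × Fin n`: two vertices are adjacent iff they agree in
one coordinate and differ by exactly 1 in the other. -/
def gridGraph (m n : ℕ) : SimpleGraph (Fin m × Fin n) :=
  SimpleGraph.fromRel (fun u v =>
    (u.1 = v.1 ∧ (v.2 : ℕ) = (u.2 : ℕ) + 1) ∨ (u.2 = v.2 ∧ (v.1 : ℕ) = (u.1 : ℕ) + 1))

/-- `l` is the vertex list of a plaquette 4-cycle `v, v+(1,0), v+(1,1), v+(0,1)`
entirely contained in the grid. -/
def IsPlaquette (m n : ℕ) (l : List (Fin m × Fin n)) : Prop :=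
  ∃ (i j : ℕ) (hi : i + 1 < m) (hj : j + 1 < n),
    l = [(⟨i, Nat.lt_of_succ_lt hi⟩, ⟨j, Nat.lt_of_succ_lt hj⟩),
         (⟨i + 1, hi⟩, ⟨j, Nat.lt_of_succ_lt hj⟩),
         (⟨i + 1, hi⟩, ⟨j + 1, hj⟩),
         (⟨i, Nat.lt_of_succ_lt hi⟩, ⟨j + 1, hj⟩)]

/-- One plaquette flip. -/
def PlaqStep (m n : ℕ) (M M' : Set (Sym2 (Fin m × Fin n))) : Prop :=
  ∃ l, IsPlaquette m n l ∧ FlipAlong M M' l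

namespace GridFlip

variable {m n : ℕ}

/-- vertex constructor -/
def vt (r c : ℕ) (hr : r < m) (hc : c < n) : Fin m × Fin n := (⟨r, hr⟩, ⟨c, hc⟩)

/-- vertical edge from (r,c) to (r+1,c) -/
def EV (r c : ℕ) (hr : r + 1 < m) (hc : c < n) : Sym2 (Fin m × Fin n) :=
  s(vt r c (Nat.lt_of_succ_lt hr) hc, vt (r+1) c hr hc)

/-- horizontal edge from (r,c) to (r,c+1) -/
def EH (r c : ℕ) (hr : r < m) (hc : c + 1 < n) : Sym2 (Fin m × Fin n) :=
  s(vt r c hr (Nat.lt_of_succ_lt hc), vt r (c+1) hr hc)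

lemma vt_inj {r c r' c' : ℕ} {h1 h2 h3 h4} :
    (vt r c h1 h2 : Fin m × Fin n) = vt r' c' h3 h4 ↔ r = r' ∧ c = c' := by
  simp [vt, Prod.ext_iff, Fin.ext_iff]

lemma mem_vt_EV {r c a b : ℕ} {h1 h2 h3 h4} :
    (vt a b h1 h2 : Fin m × Fin n) ∈ EV r c h3 h4 ↔ (a = r ∨ a = r + 1) ∧ b = c := by
  simp [EV, Sym2.mem_iff, vt_inj]; tauto

lemma mem_vt_EH {r c a b : ℕ} {h1 h2 h3 h4} :
    (vt a b h1 h2 : Fin m × Fin n) ∈ EH r c h3 h4 ↔ a = r ∧ (b = c ∨ b = c + 1) := by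
  simp [EH, Sym2.mem_iff, vt_inj]; tauto

lemma EV_inj {r c r' c' : ℕ} {h1 h2 h3 h4} :
    (EV r c h1 h2 : Sym2 (Fin m × Fin n)) = EV r' c' h3 h4 ↔ r = r' ∧ c = c' := by
  constructor
  · intro h
    rw [EV, EV, Sym2.eq_iff] at h
    rcases h with ⟨ha, hb⟩ | ⟨ha, hb⟩ <;> rw [vt_inj] at ha hb <;> omega
  · rintro ⟨rfl, rfl⟩; rfl

lemma EH_inj {r c r' c' : ℕ} {h1 h2 h3 h4} :
    (EH r c h1 h2 : Sym2 (Fin m × Fin n)) = EH r' c' h3 h4 ↔ r = r' ∧ c = c' := by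
  constructor
  · intro h
    rw [EH, EH, Sym2.eq_iff] at h
    rcases h with ⟨ha, hb⟩ | ⟨ha, hb⟩ <;> rw [vt_inj] at ha hb <;> omega
  · rintro ⟨rfl, rfl⟩; rfl

lemma EV_ne_EH {r c r' c' : ℕ} {h1 h2 h3 h4} :
    (EV r c h1 h2 : Sym2 (Fin m × Fin n)) ≠ EH r' c' h3 h4 := by
  intro h
  rw [EV, EH, Sym2.eq_iff] at h
  rcases h with ⟨ha, hb⟩ | ⟨ha, hb⟩ <;> rw [vt_inj] at ha hb <;> omega

lemma adj_iff {u v : Fin m × Fin n} :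
    (gridGraph m n).Adj u v ↔
      ((u.1 = v.1 ∧ ((v.2 : ℕ) = (u.2 : ℕ) + 1 ∨ (u.2 : ℕ) = (v.2 : ℕ) + 1)) ∨
       (u.2 = v.2 ∧ ((v.1 : ℕ) = (u.1 : ℕ) + 1 ∨ (u.1 : ℕ) = (v.1 : ℕ) + 1))) := by
  rw [gridGraph, SimpleGraph.fromRel_adj]
  constructor
  · rintro ⟨hne, (⟨h1, h2⟩ | ⟨h1, h2⟩) | (⟨h1, h2⟩ | ⟨h1, h2⟩)⟩
    · exact Or.inl ⟨h1, Or.inl h2⟩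
    · exact Or.inr ⟨h1, Or.inl h2⟩
    · exact Or.inl ⟨h1.symm, Or.inr h2⟩
    · exact Or.inr ⟨h1.symm, Or.inr h2⟩
  · intro h
    constructor
    · rintro rfl
      rcases h with ⟨-, h | h⟩ | ⟨-, h | h⟩ <;> omega
    · rcases h with ⟨h1, h2 | h2⟩ | ⟨h1, h2 | h2⟩
      · exact Or.inl (Or.inl ⟨h1, h2⟩)
      · exact Or.inr (Or.inl ⟨h1.symm, h2⟩)
      · exact Or.inl (Or.inr ⟨h1, h2⟩)
      · exact Or.inr (Or.inr ⟨h1.symm, h2⟩)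

lemma EV_mem_edgeSet {r c : ℕ} (h1 : r + 1 < m) (h2 : c < n) :
    (EV r c h1 h2 : Sym2 (Fin m × Fin n)) ∈ (gridGraph m n).edgeSet := by
  rw [EV, SimpleGraph.mem_edgeSet, adj_iff]
  simp [vt]

lemma EH_mem_edgeSet {r c : ℕ} (h1 : r < m) (h2 : c + 1 < n) :
    (EH r c h1 h2 : Sym2 (Fin m × Fin n)) ∈ (gridGraph m n).edgeSet := by
  rw [EH, SimpleGraph.mem_edgeSet, adj_iff]
  simp [vt]

variable {M : Set (Sym2 (Fin m × Fin n))}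

lemma unique_at {G : SimpleGraph (Fin m × Fin n)} (hM : IsPerfectMatching G M) {a b : Fin m × Fin n}
    {e : Sym2 (Fin m × Fin n)} (h1 : s(a,b) ∈ M) (h2 : e ∈ M) (ha : a ∈ e) : e = s(a,b) := by
  obtain ⟨e', -, uniq⟩ := hM.2 a
  rw [uniq e ⟨h2, ha⟩, uniq s(a,b) ⟨h1, by simp⟩]

lemma partner_eq {G : SimpleGraph (Fin m × Fin n)} (hM : IsPerfectMatching G M)
    {a b c : Fin m × Fin n} (h1 : s(a,b) ∈ M) (h2 : s(a,c) ∈ M) : c = b := by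
  have := unique_at hM h1 h2 (by simp)
  rw [Sym2.eq_iff] at this
  rcases this with ⟨-, h⟩ | ⟨h1, h2⟩
  · exact h
  · rw [h2, h1]

lemma partner_quad (hM : IsPerfectMatching (gridGraph m n) M) (r c : ℕ) (hr : r < m) (hc : c < n) :
    ∃ w, s(vt r c hr hc, w) ∈ M ∧
      ((∃ h : r + 1 < m, w = vt (r+1) c h hc) ∨
       (∃ (r' : ℕ) (h : r' < m), r = r' + 1 ∧ w = vt r' c h hc) ∨
       (∃ h : c + 1 < n, w = vt r (c+1) hr h) ∨
       (∃ (c' : ℕ) (h : c' < n), c = c' + 1 ∧ w = vt r c' hr h)) := by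
  obtain ⟨e, ⟨heM, hve⟩, -⟩ := hM.2 (vt r c hr hc)
  rw [Sym2.mem_iff_exists] at hve
  obtain ⟨w, rfl⟩ := hve
  refine ⟨w, heM, ?_⟩
  have hadj : (gridGraph m n).Adj (vt r c hr hc) w := (hM.1 heM)
  rw [adj_iff] at hadj
  have hw1 := w.1.isLt
  have hw2 := w.2.isLt
  rcases hadj with ⟨h1, h2 | h2⟩ | ⟨h1, h2 | h2⟩
  · refine Or.inr (Or.inr (Or.inl ⟨by simp [vt] at h2 ⊢; omega, ?_⟩))
    rw [Prod.ext_iff]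
    constructor
    · exact h1.symm
    · simp [vt] at h2 ⊢; exact Fin.ext (by simpa using h2)
  · refine Or.inr (Or.inr (Or.inr ⟨(w.2 : ℕ), hw2, by simp [vt] at h2 ⊢; omega, ?_⟩))
    rw [Prod.ext_iff]
    exact ⟨h1.symm, Fin.ext (by simp [vt])⟩
  · refine Or.inl ⟨by simp [vt] at h2 ⊢; omega, ?_⟩
    rw [Prod.ext_iff]
    constructor
    · simp [vt] at h2 ⊢; exact Fin.ext (by simpa using h2)
    · exact h1.symm
  · refine Or.inr (Or.inl ⟨(w.1 : ℕ), hw1, by simp [vt] at h2 ⊢; omega, ?_⟩)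
    rw [Prod.ext_iff]
    exact ⟨Fin.ext (by simp [vt]), h1.symm⟩

end GridFlip

namespace GridFlip

variable {m n : ℕ} {M : Set (Sym2 (Fin m × Fin n))}

lemma symmDiff_four {x y z w : Sym2 (Fin m × Fin n)}
    (hx : x ∈ M) (hz : z ∈ M) (hy : y ∉ M) (hw : w ∉ M) :
    symmDiff M {e | e = x ∨ e = y ∨ e = z ∨ e = w} = (M \ {x, z}) ∪ {y, w} := by
  ext e
  simp only [Set.mem_symmDiff, Set.mem_setOf_eq, Set.mem_union, Set.mem_diff,
    Set.mem_insert_iff, Set.mem_singleton_iff]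
  constructor
  · rintro (⟨heM, hP⟩ | ⟨(rfl | rfl | rfl | rfl), heM⟩)
    · exact Or.inl ⟨heM, fun h => hP (by tauto)⟩
    · exact absurd hx heM
    · exact Or.inr (Or.inl rfl)
    · exact absurd hz heM
    · exact Or.inr (Or.inr rfl)
  · rintro (⟨heM, hne⟩ | (rfl | rfl))
    · left
      refine ⟨heM, ?_⟩
      rintro (rfl | rfl | rfl | rfl)
      · exact hne (Or.inl rfl)
      · exact hy heM
      · exact hne (Or.inr rfl)
      · exact hw heM
    · exact Or.inr ⟨Or.inr (Or.inl rfl), hy⟩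
    · exact Or.inr ⟨Or.inr (Or.inr (Or.inr rfl)), hw⟩

lemma alternates_explicit {e0 e1 e2 e3 : Sym2 (Fin m × Fin n)}
    (h0 : e0 ∈ M) (h1 : e1 ∉ M) (h2 : e2 ∈ M) (h3 : e3 ∉ M) :
    Alternates M [e0, e1, e2, e3] := by
  left
  rintro (_|_|_|_|i) h
  · exact iff_of_true h0 (by decide)
  · exact iff_of_false h1 (by decide)
  · exact iff_of_true h2 (by decide)
  · exact iff_of_false h3 (by decide)
  · simp only [List.length] at h; omega

lemma alternates_explicit' {e0 e1 e2 e3 : Sym2 (Fin m × Fin n)}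
    (h0 : e0 ∉ M) (h1 : e1 ∈ M) (h2 : e2 ∉ M) (h3 : e3 ∈ M) :
    Alternates M [e0, e1, e2, e3] := by
  right
  rintro (_|_|_|_|i) h
  · exact iff_of_false h0 (by decide)
  · exact iff_of_true h1 (by decide)
  · exact iff_of_false h2 (by decide)
  · exact iff_of_true h3 (by decide)
  · simp only [List.length] at h; omega

lemma flip_core {G : SimpleGraph (Fin m × Fin n)} (hM : IsPerfectMatching G M)
    {a b c d : Fin m × Fin n}
    (hab : s(a,b) ∈ G.edgeSet) (hbc : s(b,c) ∈ G.edgeSet)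
    (hcd : s(c,d) ∈ G.edgeSet) (hda : s(d,a) ∈ G.edgeSet)
    (hac : a ≠ c) (hbd : b ≠ d)
    (h1 : s(a,b) ∈ M) (h2 : s(c,d) ∈ M) :
    s(b,c) ∉ M ∧ s(d,a) ∉ M ∧
      IsPerfectMatching G ((M \ {s(a,b), s(c,d)}) ∪ {s(b,c), s(d,a)}) := by
  have hnab : a ≠ b := ((SimpleGraph.mem_edgeSet G).mp hab).ne
  have hnbc : b ≠ c := ((SimpleGraph.mem_edgeSet G).mp hbc).ne
  have hncd : c ≠ d := ((SimpleGraph.mem_edgeSet G).mp hcd).ne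
  have hnda : d ≠ a := ((SimpleGraph.mem_edgeSet G).mp hda).ne
  have h1' : s(b,a) ∈ M := by rwa [Sym2.eq_swap] at h1
  have h2' : s(d,c) ∈ M := by rwa [Sym2.eq_swap] at h2
  have hbcM : s(b,c) ∉ M := fun h => hac (partner_eq hM h1' h).symm
  have hdaM : s(d,a) ∉ M := fun h => hac (partner_eq hM h2' h)
  refine ⟨hbcM, hdaM, ?_, ?_⟩
  · rintro e he
    rw [Set.mem_union] at he
    rcases he with ⟨heM, -⟩ | he
    · exact hM.1 heM
    · simp only [Set.mem_insert_iff, Set.mem_singleton_iff] at he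
      rcases he with rfl | rfl
      exacts [hbc, hda]
  · intro v
    by_cases hva : v = a
    · subst hva
      refine ⟨s(d,v), ⟨Set.mem_union_right _ (by simp), by simp⟩, ?_⟩
      rintro y ⟨hyN, hvy⟩
      rw [Set.mem_union] at hyN
      rcases hyN with ⟨hyM, hy⟩ | hy <;>
        simp only [Set.mem_insert_iff, Set.mem_singleton_iff] at hy
      · push_neg at hy
        exact absurd (unique_at hM h1 hyM hvy) hy.1
      · rcases hy with rfl | rfl
        · rcases Sym2.mem_iff.mp hvy with rfl | rfl
          · exact absurd rfl hnab
          · exact absurd rfl hac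
        · rfl
    · by_cases hvb : v = b
      · subst hvb
        refine ⟨s(v,c), ⟨Set.mem_union_right _ (by simp), by simp⟩, ?_⟩
        rintro y ⟨hyN, hvy⟩
        rw [Set.mem_union] at hyN
        rcases hyN with ⟨hyM, hy⟩ | hy <;>
          simp only [Set.mem_insert_iff, Set.mem_singleton_iff] at hy
        · push_neg at hy
          exact (hy.1 (by rw [unique_at hM h1' hyM hvy, Sym2.eq_swap])).elim
        · rcases hy with rfl | rfl
          · rfl
          · rcases Sym2.mem_iff.mp hvy with rfl | rfl
            · exact absurd rfl hbd
            · exact absurd rfl hnab.symm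
      · by_cases hvc : v = c
        · subst hvc
          refine ⟨s(b,v), ⟨Set.mem_union_right _ (by simp), by simp⟩, ?_⟩
          rintro y ⟨hyN, hvy⟩
          rw [Set.mem_union] at hyN
          rcases hyN with ⟨hyM, hy⟩ | hy <;>
            simp only [Set.mem_insert_iff, Set.mem_singleton_iff] at hy
          · push_neg at hy
            exact absurd (unique_at hM h2 hyM hvy) hy.2
          · rcases hy with rfl | rfl
            · rfl
            · rcases Sym2.mem_iff.mp hvy with rfl | rfl
              · exact absurd rfl hncd
              · exact absurd rfl hac.symm
        · by_cases hvd : v = d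
          · subst hvd
            refine ⟨s(v,a), ⟨Set.mem_union_right _ (by simp), by simp⟩, ?_⟩
            rintro y ⟨hyN, hvy⟩
            rw [Set.mem_union] at hyN
            rcases hyN with ⟨hyM, hy⟩ | hy <;>
              simp only [Set.mem_insert_iff, Set.mem_singleton_iff] at hy
            · push_neg at hy
              exact (hy.2 (by rw [unique_at hM h2' hyM hvy, Sym2.eq_swap])).elim
            · rcases hy with rfl | rfl
              · rcases Sym2.mem_iff.mp hvy with rfl | rfl
                · exact absurd rfl hbd.symm
                · exact absurd rfl hncd.symm
              · rfl
          · obtain ⟨e, ⟨heM, hve⟩, uniq⟩ := hM.2 v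
            have hene1 : e ≠ s(a,b) := by
              rintro rfl
              rcases Sym2.mem_iff.mp hve with rfl | rfl
              exacts [hva rfl, hvb rfl]
            have hene2 : e ≠ s(c,d) := by
              rintro rfl
              rcases Sym2.mem_iff.mp hve with rfl | rfl
              exacts [hvc rfl, hvd rfl]
            refine ⟨e, ⟨Set.mem_union_left _ ⟨heM, by simp [hene1, hene2]⟩, hve⟩, ?_⟩
            rintro y ⟨hyN, hvy⟩
            rw [Set.mem_union] at hyN
            rcases hyN with ⟨hyM, -⟩ | hy
            · exact uniq y ⟨hyM, hvy⟩
            · simp only [Set.mem_insert_iff, Set.mem_singleton_iff] at hy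
              rcases hy with rfl | rfl
              · rcases Sym2.mem_iff.mp hvy with rfl | rfl
                exacts [absurd rfl hvb, absurd rfl hvc]
              · rcases Sym2.mem_iff.mp hvy with rfl | rfl
                exacts [absurd rfl hvd, absurd rfl hva]

lemma symmDiff_four' {x y z w : Sym2 (Fin m × Fin n)}
    (hx : x ∉ M) (hz : z ∉ M) (hy : y ∈ M) (hw : w ∈ M) :
    symmDiff M {e | e = x ∨ e = y ∨ e = z ∨ e = w} = (M \ {y, w}) ∪ {x, z} := by
  have h := symmDiff_four (M := M) hy hw hz hx
  calc symmDiff M {e | e = x ∨ e = y ∨ e = z ∨ e = w}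
      = symmDiff M {e | e = y ∨ e = z ∨ e = w ∨ e = x} := by
        congr 1; ext e; simp only [Set.mem_setOf_eq]; tauto
    _ = (M \ {y, w}) ∪ {z, x} := h
    _ = (M \ {y, w}) ∪ {x, z} := by rw [Set.pair_comm z x]

lemma flipVH (hM : IsPerfectMatching (gridGraph m n) M) {r c : ℕ} (hr : r + 1 < m)
    (hc : c + 1 < n)
    (h1 : EV r c hr (Nat.lt_of_succ_lt hc) ∈ M) (h2 : EV r (c+1) hr hc ∈ M) :
    IsPerfectMatching (gridGraph m n)
        ((M \ {EV r c hr (Nat.lt_of_succ_lt hc), EV r (c+1) hr hc}) ∪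
          {EH r c (Nat.lt_of_succ_lt hr) hc, EH (r+1) c hr hc}) ∧
      PlaqStep m n M
        ((M \ {EV r c hr (Nat.lt_of_succ_lt hc), EV r (c+1) hr hc}) ∪
          {EH r c (Nat.lt_of_succ_lt hr) hc, EH (r+1) c hr hc}) := by
  set a := vt r c (Nat.lt_of_succ_lt hr) (Nat.lt_of_succ_lt hc) with ha
  set b := vt (r+1) c hr (Nat.lt_of_succ_lt hc) with hb
  set cc := vt (r+1) (c+1) hr hc with hcc
  set d := vt r (c+1) (Nat.lt_of_succ_lt hr) hc with hd
  have e1 : EV r c hr (Nat.lt_of_succ_lt hc) = s(a,b) := rfl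
  have e2 : EV r (c+1) hr hc = s(cc,d) := Sym2.eq_swap.symm
  have e3 : EH r c (Nat.lt_of_succ_lt hr) hc = s(d,a) := Sym2.eq_swap.symm
  have e4 : EH (r+1) c hr hc = s(b,cc) := rfl
  have m1 : s(a,b) ∈ M := e1 ▸ h1
  have m2 : s(cc,d) ∈ M := e2 ▸ h2
  have hcore := flip_core hM (a := a) (b := b) (c := cc) (d := d)
    (e1 ▸ EV_mem_edgeSet hr (Nat.lt_of_succ_lt hc))
    (e4 ▸ EH_mem_edgeSet hr hc)
    (e2 ▸ EV_mem_edgeSet hr hc)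
    (e3 ▸ EH_mem_edgeSet (Nat.lt_of_succ_lt hr) hc)
    (by rw [ha, hcc, Ne, vt_inj]; omega)
    (by rw [hb, hd, Ne, vt_inj]; omega)
    m1 m2
  obtain ⟨hbcM, hdaM, hPM⟩ := hcore
  have hNeq : (M \ {s(a,b), s(cc,d)}) ∪ {s(b,cc), s(d,a)} =
      (M \ {EV r c hr (Nat.lt_of_succ_lt hc), EV r (c+1) hr hc}) ∪
        {EH r c (Nat.lt_of_succ_lt hr) hc, EH (r+1) c hr hc} := by
    rw [e1, e2, e3, e4, Set.pair_comm s(d,a) s(b,cc)]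
  refine ⟨hNeq ▸ hPM, ?_⟩
  refine ⟨[a, b, cc, d], ⟨r, c, hr, hc, rfl⟩, ?_, ?_⟩
  · exact alternates_explicit m1 hbcM m2 hdaM
  · have hset : {e | e ∈ cycEdges [a, b, cc, d]} =
        {e : Sym2 (Fin m × Fin n) | e = s(a,b) ∨ e = s(b,cc) ∨ e = s(cc,d) ∨ e = s(d,a)} := by
      ext e
      simp [cycEdges, List.rotate]
    rw [hset, symmDiff_four m1 m2 hbcM hdaM, hNeq]

lemma flipHV (hM : IsPerfectMatching (gridGraph m n) M) {r c : ℕ} (hr : r + 1 < m)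
    (hc : c + 1 < n)
    (h1 : EH r c (Nat.lt_of_succ_lt hr) hc ∈ M) (h2 : EH (r+1) c hr hc ∈ M) :
    IsPerfectMatching (gridGraph m n)
        ((M \ {EH r c (Nat.lt_of_succ_lt hr) hc, EH (r+1) c hr hc}) ∪
          {EV r c hr (Nat.lt_of_succ_lt hc), EV r (c+1) hr hc}) ∧
      PlaqStep m n M
        ((M \ {EH r c (Nat.lt_of_succ_lt hr) hc, EH (r+1) c hr hc}) ∪
          {EV r c hr (Nat.lt_of_succ_lt hc), EV r (c+1) hr hc}) := by
  set a := vt (r+1) c hr (Nat.lt_of_succ_lt hc) with ha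
  set b := vt (r+1) (c+1) hr hc with hb
  set cc := vt r (c+1) (Nat.lt_of_succ_lt hr) hc with hcc
  set d := vt r c (Nat.lt_of_succ_lt hr) (Nat.lt_of_succ_lt hc) with hd
  have e1 : EH (r+1) c hr hc = s(a,b) := rfl
  have e2 : EH r c (Nat.lt_of_succ_lt hr) hc = s(cc,d) := Sym2.eq_swap.symm
  have e3 : EV r c hr (Nat.lt_of_succ_lt hc) = s(d,a) := rfl
  have e4 : EV r (c+1) hr hc = s(b,cc) := Sym2.eq_swap.symm
  have m1 : s(a,b) ∈ M := e1 ▸ h2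
  have m2 : s(cc,d) ∈ M := e2 ▸ h1
  have hcore := flip_core hM (a := a) (b := b) (c := cc) (d := d)
    (e1 ▸ EH_mem_edgeSet hr hc)
    (e4 ▸ EV_mem_edgeSet hr hc)
    (e2 ▸ EH_mem_edgeSet (Nat.lt_of_succ_lt hr) hc)
    (e3 ▸ EV_mem_edgeSet hr (Nat.lt_of_succ_lt hc))
    (by rw [ha, hcc, Ne, vt_inj]; omega)
    (by rw [hb, hd, Ne, vt_inj]; omega)
    m1 m2
  obtain ⟨hbcM, hdaM, hPM⟩ := hcore
  have hNeq : (M \ {s(a,b), s(cc,d)}) ∪ {s(b,cc), s(d,a)} =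
      (M \ {EH r c (Nat.lt_of_succ_lt hr) hc, EH (r+1) c hr hc}) ∪
        {EV r c hr (Nat.lt_of_succ_lt hc), EV r (c+1) hr hc} := by
    rw [e1, e2, e3, e4, Set.pair_comm s(cc,d) s(a,b), Set.pair_comm s(d,a) s(b,cc)]
  refine ⟨hNeq ▸ hPM, ?_⟩
  refine ⟨[d, a, b, cc], ⟨r, c, hr, hc, rfl⟩, ?_, ?_⟩
  · exact alternates_explicit' hdaM m1 hbcM m2
  · have hset : {e | e ∈ cycEdges [d, a, b, cc]} =
        {e : Sym2 (Fin m × Fin n) | e = s(d,a) ∨ e = s(a,b) ∨ e = s(b,cc) ∨ e = s(cc,d)} := by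
      ext e
      simp [cycEdges, List.rotate]
    rw [hset, symmDiff_four' hdaM hbcM m1 m2, Set.pair_comm s(d,a) s(b,cc), hNeq]


open Classical in
/-- weight of the vertical edge at (p.1, p.2), if in bounds and in M -/
noncomputable def phiTerm (M : Set (Sym2 (Fin m × Fin n))) (p : ℕ × ℕ) : ℕ :=
  if h : p.1 + 1 < m ∧ p.2 < n then (if EV p.1 p.2 h.1 h.2 ∈ M then n - p.2 else 0) else 0

noncomputable def phi (M : Set (Sym2 (Fin m × Fin n))) : ℕ :=
  ∑ p ∈ Finset.range m ×ˢ Finset.range n, phiTerm M p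

lemma phiTerm_pos {a b : ℕ} (ha : a + 1 < m) (hb : b < n) (h : EV a b ha hb ∈ M) :
    phiTerm M (a, b) = n - b := by
  rw [phiTerm, dif_pos (⟨ha, hb⟩ : a + 1 < m ∧ b < n), if_pos h]

lemma phiTerm_neg {a b : ℕ} (ha : a + 1 < m) (hb : b < n) (h : EV a b ha hb ∉ M) :
    phiTerm M (a, b) = 0 := by
  rw [phiTerm, dif_pos (⟨ha, hb⟩ : a + 1 < m ∧ b < n), if_neg h]

lemma sum_two_swap {α : Type*} [DecidableEq α] {s : Finset α} (f g : α → ℕ) {p q : α}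
    (hp : p ∈ s) (hq : q ∈ s) (hpq : p ≠ q)
    (hoff : ∀ x ∈ s, x ≠ p → x ≠ q → f x = g x) :
    ∑ x ∈ s, f x + g p + g q = ∑ x ∈ s, g x + f p + f q := by
  have hq' : q ∈ s.erase p := Finset.mem_erase.mpr ⟨Ne.symm hpq, hq⟩
  rw [← Finset.add_sum_erase s f hp, ← Finset.add_sum_erase s g hp,
    ← Finset.add_sum_erase _ f hq', ← Finset.add_sum_erase _ g hq']
  have hcong : ∑ x ∈ (s.erase p).erase q, f x = ∑ x ∈ (s.erase p).erase q, g x := by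
    refine Finset.sum_congr rfl fun x hx => ?_
    have hxq : x ≠ q := Finset.ne_of_mem_erase hx
    have hx' := Finset.mem_of_mem_erase hx
    exact hoff x (Finset.mem_of_mem_erase hx') (Finset.ne_of_mem_erase hx') hxq
  rw [hcong]
  omega

lemma phi_swap {N : Set (Sym2 (Fin m × Fin n))} {p q : ℕ × ℕ}
    (hp1 : p.1 < m) (hp2 : p.2 < n) (hq1 : q.1 < m) (hq2 : q.2 < n) (hpq : p ≠ q)
    (hsame : ∀ a b (ha : a + 1 < m) (hb : b < n), (a, b) ≠ p → (a, b) ≠ q →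
      (EV a b ha hb ∈ N ↔ EV a b ha hb ∈ M)) :
    phi N + phiTerm M p + phiTerm M q = phi M + phiTerm N p + phiTerm N q := by
  rw [phi, phi]
  refine sum_two_swap _ _ ?_ ?_ hpq ?_
  · exact Finset.mem_product.mpr ⟨Finset.mem_range.mpr hp1, Finset.mem_range.mpr hp2⟩
  · exact Finset.mem_product.mpr ⟨Finset.mem_range.mpr hq1, Finset.mem_range.mpr hq2⟩
  · rintro ⟨a, b⟩ - hxp hxq
    by_cases hb : a + 1 < m ∧ b < n
    · rw [phiTerm, phiTerm, dif_pos hb, dif_pos hb]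
      by_cases hin : EV a b hb.1 hb.2 ∈ N
      · rw [if_pos hin, if_pos ((hsame a b hb.1 hb.2 hxp hxq).mp hin)]
      · rw [if_neg hin, if_neg fun hm => hin ((hsame a b hb.1 hb.2 hxp hxq).mpr hm)]
    · rw [phiTerm, phiTerm, dif_neg hb, dif_neg hb]

lemma phi_no_vert (h : ∀ (a b : ℕ) (ha : a + 1 < m) (hb : b < n), EV a b ha hb ∉ M) :
    phi M = 0 := by
  rw [phi]
  refine Finset.sum_eq_zero fun p _ => ?_
  by_cases hb : p.1 + 1 < m ∧ p.2 < n
  · rw [phiTerm, dif_pos hb, if_neg (h p.1 p.2 hb.1 hb.2)]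
  · rw [phiTerm, dif_neg hb]

lemma exists_vert_of_phi_ne (h : phi M ≠ 0) :
    ∃ (a b : ℕ) (ha : a + 1 < m) (hb : b < n), EV a b ha hb ∈ M := by
  by_contra hc
  push_neg at hc
  exact h (phi_no_vert hc)

lemma mem_flip_union_iff {A B C D e : Sym2 (Fin m × Fin n)} :
    e ∈ (M \ {A, B}) ∪ {C, D} ↔ ((e ∈ M ∧ e ≠ A ∧ e ≠ B) ∨ e = C ∨ e = D) := by
  simp only [Set.mem_union, Set.mem_diff, Set.mem_insert_iff, Set.mem_singleton_iff, not_or]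


lemma cascade (hM : IsPerfectMatching (gridGraph m n) M) :
    ∀ (t r c : ℕ), m - r ≤ t → ∀ (hr : r + 1 < m) (hc : c + 1 < n),
      EV r c hr (Nat.lt_of_succ_lt hc) ∈ M →
      (∀ (r' : ℕ) (h : r' + 1 < m), r = r' + 1 → EV r' (c+1) h hc ∉ M) →
      ∃ N, IsPerfectMatching (gridGraph m n) N ∧
        Relation.ReflTransGen (PlaqStep m n) M N ∧ phi N < phi M := by
  intro t
  induction t with
  | zero => intro r c ht hr hc _ _; omega
  | succ t ih =>
    intro r c ht hr hc hEV hJ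
    obtain ⟨w, hxw, hwc⟩ := partner_quad hM r (c+1) (Nat.lt_of_succ_lt hr) hc
    rcases hwc with ⟨hd, rfl⟩ | ⟨r', h', hreq, rfl⟩ | ⟨h2, rfl⟩ | ⟨c', h', hceq, rfl⟩
    · -- x matched down: single flip
      have hEV2 : EV r (c+1) hr hc ∈ M := hxw
      obtain ⟨hPMN, hstep⟩ := flipVH hM hr hc hEV hEV2
      refine ⟨_, hPMN, Relation.ReflTransGen.single hstep, ?_⟩
      have hAnot : EV r c hr (Nat.lt_of_succ_lt hc) ∉
          (M \ {EV r c hr (Nat.lt_of_succ_lt hc), EV r (c+1) hr hc}) ∪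
            {EH r c (Nat.lt_of_succ_lt hr) hc, EH (r+1) c hr hc} := by
        rw [mem_flip_union_iff]
        rintro (⟨-, hne, -⟩ | h | h)
        · exact hne rfl
        · exact EV_ne_EH h
        · exact EV_ne_EH h
      have hBnot : EV r (c+1) hr hc ∉
          (M \ {EV r c hr (Nat.lt_of_succ_lt hc), EV r (c+1) hr hc}) ∪
            {EH r c (Nat.lt_of_succ_lt hr) hc, EH (r+1) c hr hc} := by
        rw [mem_flip_union_iff]
        rintro (⟨-, -, hne⟩ | h | h)
        · exact hne rfl
        · exact EV_ne_EH h
        · exact EV_ne_EH h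
      have key := phi_swap (M := M)
        (N := (M \ {EV r c hr (Nat.lt_of_succ_lt hc), EV r (c+1) hr hc}) ∪
            {EH r c (Nat.lt_of_succ_lt hr) hc, EH (r+1) c hr hc})
        (p := (r, c)) (q := (r, c+1))
        (show r < m by omega) (show c < n by omega) (show r < m by omega)
        (show c + 1 < n from hc) (by simp) ?_
      · rw [phiTerm_pos hr (Nat.lt_of_succ_lt hc) hEV,
          phiTerm_pos hr hc hEV2,
          phiTerm_neg hr (Nat.lt_of_succ_lt hc) hAnot,
          phiTerm_neg hr hc hBnot] at key
        omega
      · intro a b ha hb hp hq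
        rw [mem_flip_union_iff]
        constructor
        · rintro (⟨h, -, -⟩ | h | h)
          · exact h
          · exact absurd h EV_ne_EH
          · exact absurd h EV_ne_EH
        · intro h
          refine Or.inl ⟨h, ?_, ?_⟩
          · rw [Ne, EV_inj]; rintro ⟨rfl, rfl⟩; exact hp rfl
          · rw [Ne, EV_inj]; rintro ⟨rfl, rfl⟩; exact hq rfl
    · -- x matched up: contradicts hJ
      exfalso
      subst hreq
      rw [Sym2.eq_swap] at hxw
      exact hJ r' (by omega) rfl hxw
    · -- x matched right
      have hEHx : EH r (c+1) (Nat.lt_of_succ_lt hr) h2 ∈ M := hxw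
      -- EV r (c+1) ∉ M and EV r (c+2) ∉ M, since x and (r,c+2) are matched to each other
      have hnotEVc1 : ∀ (h3 : r + 1 < m), EV r (c+1) h3 hc ∉ M := by
        intro h3 hbad
        have heq := partner_eq hM hxw hbad
        rw [vt_inj] at heq
        omega
      have hxw' : s(vt r (c+2) (Nat.lt_of_succ_lt hr) h2,
          vt r (c+1) (Nat.lt_of_succ_lt hr) hc) ∈ M := by
        rwa [Sym2.eq_swap] at hxw
      have hnotEVc2 : ∀ (h3 : r + 1 < m), EV r (c+2) h3 h2 ∉ M := by
        intro h3 hbad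
        have heq := partner_eq hM hxw' hbad
        rw [vt_inj] at heq
        omega
      obtain ⟨w', hyw, hwc'⟩ := partner_quad hM (r+1) (c+1) hr hc
      rcases hwc' with ⟨h4, rfl⟩ | ⟨r'', h'', hreq, rfl⟩ | ⟨h5, rfl⟩ | ⟨c'', h'', hceq, rfl⟩
      · -- y matched down: recurse
        have hEVy : EV (r+1) (c+1) h4 hc ∈ M := hyw
        have hJ' : ∀ (r'' : ℕ) (h : r'' + 1 < m), r + 1 = r'' + 1 → EV r'' (c+2) h h2 ∉ M := by
          rintro r'' h hr'' hbad
          obtain rfl : r'' = r := by omega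
          exact hnotEVc2 h hbad
        exact ih (r+1) (c+1) (by omega) h4 h2 hEVy hJ'
      · -- y matched up (to x): contradiction
        exfalso
        obtain rfl : r'' = r := by omega
        rw [Sym2.eq_swap] at hyw
        have heq := partner_eq hM hxw hyw
        rw [vt_inj] at heq
        omega
      · -- y matched right: double flip
        have hEHy : EH (r+1) (c+1) hr h5 ∈ M := hyw
        obtain ⟨hPM1, hstep1⟩ := flipHV hM (r := r) (c := c + 1) hr h2 hEHx hEHy
        set N1 := (M \ {EH r (c+1) (Nat.lt_of_succ_lt hr) h2, EH (r+1) (c+1) hr h2}) ∪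
            {EV r (c+1) hr (Nat.lt_of_succ_lt h2), EV r (c+1+1) hr h2} with hN1
        have hEV1 : EV r c hr (Nat.lt_of_succ_lt hc) ∈ N1 := by
          rw [hN1, mem_flip_union_iff]
          exact Or.inl ⟨hEV, EV_ne_EH, EV_ne_EH⟩
        have hEV2 : EV r (c+1) hr hc ∈ N1 := by
          rw [hN1, mem_flip_union_iff]
          exact Or.inr (Or.inl rfl)
        obtain ⟨hPM2, hstep2⟩ := flipVH hPM1 hr hc hEV1 hEV2
        set N2 := (N1 \ {EV r c hr (Nat.lt_of_succ_lt hc), EV r (c+1) hr hc}) ∪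
            {EH r c (Nat.lt_of_succ_lt hr) hc, EH (r+1) c hr hc} with hN2
        refine ⟨N2, hPM2, (Relation.ReflTransGen.single hstep1).tail hstep2, ?_⟩
        have hmemN2 :
            ∀ (a b : ℕ) (ha : a + 1 < m) (hb : b < n), EV a b ha hb ∈ N2 ↔
              ((EV a b ha hb ∈ M ∨ (a, b) = (r, c+1) ∨ (a, b) = (r, c+2)) ∧
                (a, b) ≠ (r, c) ∧ (a, b) ≠ (r, c+1)) := by
          intro a b ha hb
          rw [hN2, mem_flip_union_iff, hN1, mem_flip_union_iff]
          constructor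
          · rintro (⟨(⟨hin, -, -⟩ | hEq | hEq), hne1, hne2⟩ | hEq | hEq)
            · refine ⟨Or.inl hin, ?_, ?_⟩
              · intro hab; apply hne1; rw [EV_inj]
                exact ⟨congrArg Prod.fst hab, congrArg Prod.snd hab⟩
              · intro hab; apply hne2; rw [EV_inj]
                exact ⟨congrArg Prod.fst hab, congrArg Prod.snd hab⟩
            · rw [EV_inj] at hEq
              refine ⟨Or.inr (Or.inl (by simp [hEq.1, hEq.2])), ?_, ?_⟩
              · intro hab; apply hne1; rw [EV_inj]
                exact ⟨congrArg Prod.fst hab, congrArg Prod.snd hab⟩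
              · intro hab; apply hne2; rw [EV_inj]
                exact ⟨congrArg Prod.fst hab, congrArg Prod.snd hab⟩
            · rw [EV_inj] at hEq
              refine ⟨Or.inr (Or.inr (by simp [hEq.1, hEq.2])), ?_, ?_⟩
              · intro hab; apply hne1; rw [EV_inj]
                exact ⟨congrArg Prod.fst hab, congrArg Prod.snd hab⟩
              · intro hab; apply hne2; rw [EV_inj]
                exact ⟨congrArg Prod.fst hab, congrArg Prod.snd hab⟩
            · exact absurd hEq EV_ne_EH
            · exact absurd hEq EV_ne_EH
          · rintro ⟨hin | hab | hab, hne1, hne2⟩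
            · refine Or.inl ⟨Or.inl ⟨hin, EV_ne_EH, EV_ne_EH⟩, ?_, ?_⟩
              · rw [Ne, EV_inj]; rintro ⟨rfl, rfl⟩; exact hne1 rfl
              · rw [Ne, EV_inj]; rintro ⟨rfl, rfl⟩; exact hne2 rfl
            · exact absurd hab hne2
            · obtain ⟨rfl, rfl⟩ : a = r ∧ b = c + 2 :=
                ⟨congrArg Prod.fst hab, congrArg Prod.snd hab⟩
              refine Or.inl ⟨Or.inr (Or.inr rfl), ?_, ?_⟩
              · rw [Ne, EV_inj]; omega
              · rw [Ne, EV_inj]; omega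
        have hAnot : EV r c hr (Nat.lt_of_succ_lt hc) ∉ N2 := by
          rw [hmemN2]
          rintro ⟨-, hne, -⟩
          exact hne rfl
        have hCin : EV r (c+2) hr h2 ∈ N2 := by
          rw [hmemN2]
          refine ⟨Or.inr (Or.inr rfl), ?_, ?_⟩ <;> simp <;> omega
        have key := phi_swap (M := M) (N := N2) (p := (r, c)) (q := (r, c+2))
          (show r < m by omega) (show c < n by omega) (show r < m by omega)
          (show c + 2 < n from h2) (by simp) ?_
        · rw [phiTerm_pos hr (Nat.lt_of_succ_lt hc) hEV,
            phiTerm_neg hr h2 (hnotEVc2 hr),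
            phiTerm_neg hr (Nat.lt_of_succ_lt hc) hAnot,
            phiTerm_pos hr h2 hCin] at key
          omega
        · intro a b ha hb hp hq
          rw [hmemN2]
          constructor
          · rintro ⟨hin | hab | hab, hne1, hne2⟩
            · exact hin
            · exact absurd hab hne2
            · exact absurd hab hq
          · intro hin
            refine ⟨Or.inl hin, hp, ?_⟩
            rintro hab
            obtain ⟨rfl, rfl⟩ : a = r ∧ b = c + 1 :=
              ⟨congrArg Prod.fst hab, congrArg Prod.snd hab⟩
            exact hnotEVc1 ha hin
      · -- y matched left: contradiction with EV r c
        exfalso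
        have hveq : (vt (r+1) c'' hr h'' : Fin m × Fin n) =
            vt (r+1) c hr (Nat.lt_of_succ_lt (Nat.lt_of_succ_lt h2)) := by
          rw [vt_inj]; omega
        rw [hveq, Sym2.eq_swap] at hyw
        have hEV' : s(vt (r+1) c hr (Nat.lt_of_succ_lt (Nat.lt_of_succ_lt h2)),
            vt r c (Nat.lt_of_succ_lt hr) (Nat.lt_of_succ_lt (Nat.lt_of_succ_lt h2))) ∈ M := by
          rw [Sym2.eq_swap]; exact hEV
        have heq := partner_eq hM hEV' hyw
        rw [vt_inj] at heq
        omega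
    · -- x matched left: contradiction
      exfalso
      have hveq : (vt r c' (Nat.lt_of_succ_lt hr) h' : Fin m × Fin n) =
          vt r c (Nat.lt_of_succ_lt hr) (Nat.lt_of_succ_lt hc) := by
        rw [vt_inj]; omega
      rw [hveq, Sym2.eq_swap] at hxw
      have heq := partner_eq hM hEV hxw
      rw [vt_inj] at heq
      omega


lemma phi_zero_novert (h : phi M = 0) {a b : ℕ} (ha : a + 1 < m) (hb : b < n) :
    EV a b ha hb ∉ M := by
  intro hmem
  rw [phi] at h
  have := (Finset.sum_eq_zero_iff).mp h (a, b)
    (Finset.mem_product.mpr ⟨Finset.mem_range.mpr (by omega), Finset.mem_range.mpr hb⟩)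
  rw [phiTerm_pos ha hb hmem] at this
  omega

lemma lastcol (hM : IsPerfectMatching (gridGraph m n) M) (hEvenN : Even n) {i0 : ℕ}
    (hi0 : i0 + 1 < m) (hn1 : n - 1 < n)
    (hvert : EV i0 (n-1) hi0 hn1 ∈ M)
    (hrowmin : ∀ (r c : ℕ) (h1 : r + 1 < m) (h2 : c < n), r < i0 → EV r c h1 h2 ∉ M)
    (hleftmin : ∀ (c : ℕ) (h2 : c < n), c < n - 1 → EV i0 c hi0 h2 ∉ M) : False := by
  obtain ⟨t, ht⟩ := hEvenN
  have hn2 : 2 ≤ n := by omega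
  have hH : ∀ (c : ℕ) (hc : c + 1 < n),
      EH i0 c (Nat.lt_of_succ_lt hi0) hc ∈ M ∨
        (∃ (c' : ℕ) (h' : c' + 1 < n), c = c' + 1 ∧
          EH i0 c' (Nat.lt_of_succ_lt hi0) h' ∈ M) := by
    intro c hc
    obtain ⟨w, hw, hcase⟩ := partner_quad hM i0 c (Nat.lt_of_succ_lt hi0) (Nat.lt_of_succ_lt hc)
    rcases hcase with ⟨h, rfl⟩ | ⟨r', h, hreq, rfl⟩ | ⟨h, rfl⟩ | ⟨c', h, hceq, rfl⟩
    · exact absurd hw (hleftmin c (Nat.lt_of_succ_lt hc) (by omega))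
    · exfalso
      subst hreq
      rw [Sym2.eq_swap] at hw
      exact hrowmin r' c (by omega) (Nat.lt_of_succ_lt hc) (by omega) hw
    · exact Or.inl hw
    · right
      refine ⟨c', by omega, hceq, ?_⟩
      rw [Sym2.eq_swap] at hw
      have hv : (vt i0 c (Nat.lt_of_succ_lt hi0) (Nat.lt_of_succ_lt hc) : Fin m × Fin n) =
          vt i0 (c'+1) (Nat.lt_of_succ_lt hi0) (by omega) := by rw [vt_inj]; omega
      rw [hv] at hw
      exact hw
  have U : ∀ (k : ℕ) (hk : 2*k+1 < n),
      EH i0 (2*k) (Nat.lt_of_succ_lt hi0) hk ∈ M := by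
    intro k
    induction k with
    | zero =>
      intro hk
      rcases hH 0 (by omega) with h | ⟨c', h', hceq, -⟩
      · exact h
      · omega
    | succ k ih =>
      intro hk
      have hIH := ih (by omega)
      rcases hH (2*k+2) (by omega) with h | ⟨c', h', hceq, hEH'⟩
      · exact h
      · exfalso
        rw [EH] at hEH' hIH
        have hv : (vt i0 c' (Nat.lt_of_succ_lt hi0) (Nat.lt_of_succ_lt h') : Fin m × Fin n) =
            vt i0 (2*k+1) (Nat.lt_of_succ_lt hi0) (by omega) := by rw [vt_inj]; omega
        have hv2 : (vt i0 (c'+1) (Nat.lt_of_succ_lt hi0) h' : Fin m × Fin n) =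
            vt i0 (2*k+2) (Nat.lt_of_succ_lt hi0) (by omega) := by rw [vt_inj]; omega
        rw [hv, hv2] at hEH'
        rw [Sym2.eq_swap] at hIH
        have heq := partner_eq hM hIH hEH'
        rw [vt_inj] at heq
        omega
  have hkk : 2*(t-1)+1 < n := by omega
  have hEHlast := U (t-1) hkk
  rw [EH] at hEHlast
  have hv : (vt i0 (2*(t-1)+1) (Nat.lt_of_succ_lt hi0) hkk : Fin m × Fin n) =
      vt i0 (n-1) (Nat.lt_of_succ_lt hi0) hn1 := by rw [vt_inj]; omega
  rw [hv, Sym2.eq_swap] at hEHlast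
  rw [EV] at hvert
  have heq := partner_eq hM hEHlast hvert
  rw [vt_inj] at heq
  omega

lemma reduce (hEvenN : Even n) (hM : IsPerfectMatching (gridGraph m n) M) (hphi : phi M ≠ 0) :
    ∃ N, IsPerfectMatching (gridGraph m n) N ∧
      Relation.ReflTransGen (PlaqStep m n) M N ∧ phi N < phi M := by
  classical
  obtain ⟨a, b, ha, hb, hmem⟩ := exists_vert_of_phi_ne hphi
  have hPex : ∃ r, ∃ (c : ℕ) (h1 : r + 1 < m) (h2 : c < n), EV r c h1 h2 ∈ M :=
    ⟨a, b, ha, hb, hmem⟩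
  obtain ⟨c1, hic1, hic2, hicmem⟩ := Nat.find_spec hPex
  have hrowmin : ∀ (r c : ℕ) (h1 : r + 1 < m) (h2 : c < n), r < Nat.find hPex →
      EV r c h1 h2 ∉ M := by
    intro r c h1 h2 hlt hbad
    exact Nat.find_min hPex hlt ⟨c, h1, h2, hbad⟩
  have hQex : ∃ c, ∃ (h2 : c < n), EV (Nat.find hPex) c hic1 h2 ∈ M := ⟨c1, hic2, hicmem⟩
  obtain ⟨hc0lt, hc0mem⟩ := Nat.find_spec hQex
  have hleftmin : ∀ (c : ℕ) (h2 : c < n), c < Nat.find hQex →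
      EV (Nat.find hPex) c hic1 h2 ∉ M := by
    intro c h2 hlt hbad
    exact Nat.find_min hQex hlt ⟨h2, hbad⟩
  have hc0n : Nat.find hQex + 1 < n := by
    by_contra hge
    have hc0 : Nat.find hQex = n - 1 := by omega
    have hvert : EV (Nat.find hPex) (n-1) hic1 (by omega) ∈ M := by
      have hv : (EV (Nat.find hPex) (Nat.find hQex) hic1 hc0lt : Sym2 (Fin m × Fin n)) =
          EV (Nat.find hPex) (n-1) hic1 (by omega) := EV_inj.mpr ⟨rfl, hc0⟩
      rwa [hv] at hc0mem
    refine lastcol hM hEvenN hic1 (by omega) hvert hrowmin ?_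
    intro c h2 hlt
    exact hleftmin c h2 (by omega)
  have hJ : ∀ (r' : ℕ) (h : r' + 1 < m), Nat.find hPex = r' + 1 →
      EV r' (Nat.find hQex + 1) h hc0n ∉ M :=
    fun r' h heq => hrowmin r' (Nat.find hQex + 1) h hc0n (by omega)
  exact cascade hM (m - Nat.find hPex) (Nat.find hPex) (Nat.find hQex) le_rfl hic1 hc0n
    hc0mem hJ

lemma to_zero (hEvenN : Even n) :
    ∀ (k : ℕ) (M₀ : Set (Sym2 (Fin m × Fin n))), IsPerfectMatching (gridGraph m n) M₀ →
      phi M₀ ≤ k → ∃ N, IsPerfectMatching (gridGraph m n) N ∧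
        Relation.ReflTransGen (PlaqStep m n) M₀ N ∧ phi N = 0 := by
  intro k
  induction k with
  | zero =>
    intro M₀ h0 hle
    exact ⟨M₀, h0, Relation.ReflTransGen.refl, by omega⟩
  | succ k ih =>
    intro M₀ h0 hle
    by_cases hz : phi M₀ = 0
    · exact ⟨M₀, h0, Relation.ReflTransGen.refl, hz⟩
    · obtain ⟨N, hN, hrtg, hlt⟩ := reduce hEvenN h0 hz
      obtain ⟨N2, hN2, hrtg2, hz2⟩ := ih N hN (by omega)
      exact ⟨N2, hN2, hrtg.trans hrtg2, hz2⟩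

lemma mem_is_EH (hA : IsPerfectMatching (gridGraph m n) M) (h0 : phi M = 0) {e}
    (he : e ∈ M) :
    ∃ (a b : ℕ) (h1 : a < m) (h2 : b + 1 < n), e = EH a b h1 h2 := by
  have hadj := hA.1 he
  induction e using Sym2.ind with
  | _ u v =>
    rw [SimpleGraph.mem_edgeSet, adj_iff] at hadj
    have hu1 := u.1.isLt
    have hu2 := u.2.isLt
    have hv1 := v.1.isLt
    have hv2 := v.2.isLt
    rcases hadj with ⟨h1, h2 | h2⟩ | ⟨h1, h2 | h2⟩
    · refine ⟨(u.1 : ℕ), (u.2 : ℕ), u.1.isLt, by omega, ?_⟩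
      have hveq : (vt (u.1 : ℕ) ((u.2 : ℕ) + 1) u.1.isLt (by omega) : Fin m × Fin n) = v :=
        Prod.ext_iff.mpr ⟨Fin.ext (congrArg Fin.val h1),
          Fin.ext (show (u.2 : ℕ) + 1 = (v.2 : ℕ) by omega)⟩
      exact congrArg (fun x => s(u, x)) hveq.symm
    · refine ⟨(v.1 : ℕ), (v.2 : ℕ), v.1.isLt, by omega, ?_⟩
      have hveq : (vt (v.1 : ℕ) ((v.2 : ℕ) + 1) v.1.isLt (by omega) : Fin m × Fin n) = u :=
        Prod.ext_iff.mpr ⟨Fin.ext (congrArg Fin.val h1).symm,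
          Fin.ext (show (v.2 : ℕ) + 1 = (u.2 : ℕ) by omega)⟩
      exact Sym2.eq_swap.trans (congrArg (fun x => s(v, x)) hveq.symm)
    · exfalso
      refine phi_zero_novert h0 (show (u.1 : ℕ) + 1 < m by omega) u.2.isLt ?_
      have hveq : (vt ((u.1 : ℕ) + 1) (u.2 : ℕ) (by omega) u.2.isLt : Fin m × Fin n) = v :=
        Prod.ext_iff.mpr ⟨Fin.ext (show (u.1 : ℕ) + 1 = (v.1 : ℕ) by omega),
          Fin.ext (congrArg Fin.val h1)⟩
      exact Set.mem_of_eq_of_mem (congrArg (fun x => s(u, x)) hveq) he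
    · exfalso
      refine phi_zero_novert h0 (show (v.1 : ℕ) + 1 < m by omega) v.2.isLt ?_
      have hveq : (vt ((v.1 : ℕ) + 1) (v.2 : ℕ) (by omega) v.2.isLt : Fin m × Fin n) = u :=
        Prod.ext_iff.mpr ⟨Fin.ext (show (v.1 : ℕ) + 1 = (u.1 : ℕ) by omega),
          Fin.ext (congrArg Fin.val h1).symm⟩
      exact Set.mem_of_eq_of_mem
        ((congrArg (fun x => s(v, x)) hveq).trans Sym2.eq_swap) he

lemma canon_EH (hA : IsPerfectMatching (gridGraph m n) M) (h0 : phi M = 0) :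
    ∀ (k i : ℕ) (hi : i < m) (hk : 2*k+1 < n), EH i (2*k) hi hk ∈ M := by
  intro k
  induction k with
  | zero =>
    intro i hi hk
    obtain ⟨w, hw, hcase⟩ := partner_quad hA i 0 hi (by omega)
    rcases hcase with ⟨h, rfl⟩ | ⟨r', h, hreq, rfl⟩ | ⟨h, rfl⟩ | ⟨c', h, hceq, rfl⟩
    · exact absurd hw (phi_zero_novert h0 h (by omega))
    · exfalso
      subst hreq
      rw [Sym2.eq_swap] at hw
      exact phi_zero_novert h0 (by omega) (by omega) hw
    · exact hw
    · omega
  | succ k ih =>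
    intro i hi hk
    have hIH := ih i hi (by omega)
    obtain ⟨w, hw, hcase⟩ := partner_quad hA i (2*k+2) hi (by omega)
    rcases hcase with ⟨h, rfl⟩ | ⟨r', h, hreq, rfl⟩ | ⟨h, rfl⟩ | ⟨c', h, hceq, rfl⟩
    · exact absurd hw (phi_zero_novert h0 h (by omega))
    · exfalso
      subst hreq
      rw [Sym2.eq_swap] at hw
      exact phi_zero_novert h0 (by omega) (by omega) hw
    · exact hw
    · exfalso
      rw [EH] at hIH
      have hv : (vt i c' hi h : Fin m × Fin n) =
          vt i (2*k+1) hi (by omega) := by rw [vt_inj]; omega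
      rw [hv] at hw
      rw [Sym2.eq_swap] at hIH hw
      have heq := partner_eq hA hIH hw
      rw [vt_inj] at heq
      omega

lemma canon_sub {Ma Mb : Set (Sym2 (Fin m × Fin n))}
    (hA : IsPerfectMatching (gridGraph m n) Ma) (hB : IsPerfectMatching (gridGraph m n) Mb)
    (h0a : phi Ma = 0) (h0b : phi Mb = 0) : Ma ⊆ Mb := by
  intro e he
  obtain ⟨a, b, h1, h2, rfl⟩ := mem_is_EH hA h0a he
  rcases Nat.even_or_odd b with ⟨k, hk⟩ | ⟨k, hk⟩
  · obtain rfl : b = 2*k := by omega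
    exact canon_EH hB h0b k a h1 (by omega)
  · exfalso
    obtain rfl : b = 2*k+1 := by omega
    have hIH := canon_EH hA h0a k a h1 (by omega)
    rw [EH] at hIH he
    have hv : (vt a (2*k+1) h1 (Nat.lt_of_succ_lt h2) : Fin m × Fin n) =
        vt a (2*k+1) h1 (by omega) := rfl
    rw [Sym2.eq_swap] at hIH
    have heq := partner_eq hA hIH he
    rw [vt_inj] at heq
    omega

lemma canon_unique {Ma Mb : Set (Sym2 (Fin m × Fin n))}
    (hA : IsPerfectMatching (gridGraph m n) Ma) (hB : IsPerfectMatching (gridGraph m n) Mb)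
    (h0a : phi Ma = 0) (h0b : phi Mb = 0) : Ma = Mb :=
  Set.Subset.antisymm (canon_sub hA hB h0a h0b) (canon_sub hB hA h0b h0a)


lemma plaqStep_symm {N : Set (Sym2 (Fin m × Fin n))} (h : PlaqStep m n M N) :
    PlaqStep m n N M := by
  obtain ⟨l, hpl, halt, heq⟩ := h
  refine ⟨l, hpl, ?_, ?_⟩
  · have hmem : ∀ (i : ℕ) (hi : i < (cycEdges l).length),
        ((cycEdges l).get ⟨i, hi⟩ ∈ N ↔ (cycEdges l).get ⟨i, hi⟩ ∉ M) := by
      intro i hi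
      rw [heq, Set.mem_symmDiff]
      have hP : (cycEdges l).get ⟨i, hi⟩ ∈ {e | e ∈ cycEdges l} := List.get_mem _ _
      constructor
      · rintro (⟨-, hnot⟩ | ⟨-, hnot⟩)
        · exact absurd hP hnot
        · exact hnot
      · intro hnot
        exact Or.inr ⟨hP, hnot⟩
    rcases halt with h1 | h1
    · exact Or.inr fun i hi => (hmem i hi).trans (not_congr (h1 i hi))
    · exact Or.inl fun i hi => (hmem i hi).trans ((not_congr (h1 i hi)).trans not_not)
  · rw [heq, symmDiff_symmDiff_cancel_right]

lemma plaqStep_symmetric : Symmetric (PlaqStep m n) := fun _ _ => plaqStep_symm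

theorem evenCase (hEvenN : Even n) (M₁ M₂ : Set (Sym2 (Fin m × Fin n)))
    (h₁ : IsPerfectMatching (gridGraph m n) M₁) (h₂ : IsPerfectMatching (gridGraph m n) M₂) :
    Relation.ReflTransGen (PlaqStep m n) M₁ M₂ := by
  obtain ⟨N₁, hN₁, hr₁, hz₁⟩ := to_zero hEvenN (phi M₁) M₁ h₁ le_rfl
  obtain ⟨N₂, hN₂, hr₂, hz₂⟩ := to_zero hEvenN (phi M₂) M₂ h₂ le_rfl
  have hNN : N₁ = N₂ := canon_unique hN₁ hN₂ hz₁ hz₂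
  refine hr₁.trans ?_
  rw [hNN]
  exact @Std.Symm.symm _ _ (@Relation.ReflTransGen.symmetric _ _ ⟨fun _ _ h => plaqStep_symmetric h⟩) _ _ hr₂

/-! ### Transposition transport -/

def sw : Fin m × Fin n → Fin n × Fin m := fun p => (p.2, p.1)

lemma sw_inj : Function.Injective (sw (m := m) (n := n)) :=
  fun _ _ h => Prod.ext_iff.mpr ⟨congrArg Prod.snd h, congrArg Prod.fst h⟩

def tmap (M : Set (Sym2 (Fin m × Fin n))) : Set (Sym2 (Fin n × Fin m)) := (Sym2.map sw) '' M

lemma tmap_mem {e : Sym2 (Fin m × Fin n)} : Sym2.map sw e ∈ tmap M ↔ e ∈ M :=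
  Function.Injective.mem_set_image (Sym2.map.injective sw_inj)

lemma adj_sw {u v : Fin m × Fin n} (h : (gridGraph m n).Adj u v) :
    (gridGraph n m).Adj (sw u) (sw v) := by
  rw [adj_iff] at h ⊢
  exact Or.symm h

lemma tmap_PM (hM : IsPerfectMatching (gridGraph m n) M) :
    IsPerfectMatching (gridGraph n m) (tmap M) := by
  constructor
  · rintro e' ⟨e, heM, rfl⟩
    have hadj := hM.1 heM
    induction e using Sym2.ind with
    | _ u v =>
      rw [Sym2.map_pair_eq, SimpleGraph.mem_edgeSet]
      rw [SimpleGraph.mem_edgeSet] at hadj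
      exact adj_sw hadj
  · intro v'
    obtain ⟨e, ⟨heM, hve⟩, uniq⟩ := hM.2 (sw v')
    refine ⟨Sym2.map sw e, ⟨⟨e, heM, rfl⟩, ?_⟩, ?_⟩
    · rw [Sym2.mem_map]
      exact ⟨sw v', hve, rfl⟩
    · rintro y ⟨⟨e₀, he₀M, rfl⟩, hvy⟩
      rw [Sym2.mem_map] at hvy
      obtain ⟨a, hae, hav⟩ := hvy
      have ha : sw v' = a := by rw [← hav]; exact Prod.ext_iff.mpr ⟨rfl, rfl⟩
      rw [← ha] at hae
      exact congrArg (Sym2.map sw) (uniq e₀ ⟨he₀M, hae⟩)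

lemma alternates_four_iff {V : Type*} {X : Set (Sym2 V)} {f0 f1 f2 f3 : Sym2 V} :
    Alternates X [f0, f1, f2, f3] ↔
      ((f0 ∈ X ∧ f1 ∉ X ∧ f2 ∈ X ∧ f3 ∉ X) ∨ (f0 ∉ X ∧ f1 ∈ X ∧ f2 ∉ X ∧ f3 ∈ X)) := by
  constructor
  · rintro (h | h)
    · refine Or.inl ⟨(h 0 (by norm_num)).mpr (by decide), ?_, (h 2 (by norm_num)).mpr (by decide), ?_⟩
      · exact fun hm => (by decide : ¬ Even 1) ((h 1 (by norm_num)).mp hm)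
      · exact fun hm => (by decide : ¬ Even 3) ((h 3 (by norm_num)).mp hm)
    · refine Or.inr ⟨?_, (h 1 (by norm_num)).mpr (by decide), ?_, (h 3 (by norm_num)).mpr (by decide)⟩
      · exact fun hm => ((h 0 (by norm_num)).mp hm) (by decide)
      · exact fun hm => ((h 2 (by norm_num)).mp hm) (by decide)
  · rintro (⟨ha, hb, hc, hd⟩ | ⟨ha, hb, hc, hd⟩)
    · left
      rintro (_|_|_|_|i) h
      · exact iff_of_true ha (by decide)
      · exact iff_of_false hb (by decide)
      · exact iff_of_true hc (by decide)
      · exact iff_of_false hd (by decide)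
      · simp only [List.length] at h; omega
    · right
      rintro (_|_|_|_|i) h
      · exact iff_of_false ha (by decide)
      · exact iff_of_true hb (by decide)
      · exact iff_of_false hc (by decide)
      · exact iff_of_true hd (by decide)
      · simp only [List.length] at h; omega

lemma step_tmap {Y : Set (Sym2 (Fin n × Fin m))}
    (h : PlaqStep n m (tmap M) Y) : ∃ M', Y = tmap M' ∧ PlaqStep m n M M' := by
  obtain ⟨l', ⟨i, j, hi, hj, rfl⟩, halt, heq⟩ := h
  set A : Fin m × Fin n := (⟨j, Nat.lt_of_succ_lt hj⟩, ⟨i, Nat.lt_of_succ_lt hi⟩) with hA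
  set B : Fin m × Fin n := (⟨j+1, hj⟩, ⟨i, Nat.lt_of_succ_lt hi⟩) with hB
  set C : Fin m × Fin n := (⟨j+1, hj⟩, ⟨i+1, hi⟩) with hC
  set D : Fin m × Fin n := (⟨j, Nat.lt_of_succ_lt hj⟩, ⟨i+1, hi⟩) with hD
  set A' : Fin n × Fin m := (⟨i, Nat.lt_of_succ_lt hi⟩, ⟨j, Nat.lt_of_succ_lt hj⟩) with hA'
  set B' : Fin n × Fin m := (⟨i+1, hi⟩, ⟨j, Nat.lt_of_succ_lt hj⟩) with hB'
  set C' : Fin n × Fin m := (⟨i+1, hi⟩, ⟨j+1, hj⟩) with hC'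
  set D' : Fin n × Fin m := (⟨i, Nat.lt_of_succ_lt hi⟩, ⟨j+1, hj⟩) with hD'
  have hmap0 : Sym2.map (sw (m := m) (n := n)) s(A, B) = s(D', A') := by
    rw [Sym2.map_pair_eq]; exact Sym2.eq_swap
  have hmap1 : Sym2.map (sw (m := m) (n := n)) s(B, C) = s(C', D') := by
    rw [Sym2.map_pair_eq]; exact Sym2.eq_swap
  have hmap2 : Sym2.map (sw (m := m) (n := n)) s(C, D) = s(B', C') := by
    rw [Sym2.map_pair_eq]; exact Sym2.eq_swap
  have hmap3 : Sym2.map (sw (m := m) (n := n)) s(D, A) = s(A', B') := by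
    rw [Sym2.map_pair_eq]; exact Sym2.eq_swap
  have hPeq : {e | e ∈ cycEdges [A', B', C', D']} =
      tmap {e | e ∈ cycEdges [A, B, C, D]} := by
    ext e'
    constructor
    · intro he'
      rcases (by simpa [cycEdges, List.rotate] using he' :
          e' = s(A', B') ∨ e' = s(B', C') ∨ e' = s(C', D') ∨ e' = s(D', A')) with
        rfl | rfl | rfl | rfl
      · exact ⟨s(D, A), by simp [cycEdges, List.rotate], hmap3⟩
      · exact ⟨s(C, D), by simp [cycEdges, List.rotate], hmap2⟩
      · exact ⟨s(B, C), by simp [cycEdges, List.rotate], hmap1⟩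
      · exact ⟨s(A, B), by simp [cycEdges, List.rotate], hmap0⟩
    · rintro ⟨x, hx, rfl⟩
      rcases (by simpa [cycEdges, List.rotate] using hx :
          x = s(A, B) ∨ x = s(B, C) ∨ x = s(C, D) ∨ x = s(D, A)) with rfl | rfl | rfl | rfl
      · rw [hmap0]; simp [cycEdges, List.rotate]
      · rw [hmap1]; simp [cycEdges, List.rotate]
      · rw [hmap2]; simp [cycEdges, List.rotate]
      · rw [hmap3]; simp [cycEdges, List.rotate]
  have hfacts := alternates_four_iff.mp halt
  have hm0 : (s(A, B) ∈ M ↔ s(D', A') ∈ tmap M) := by rw [← hmap0]; exact tmap_mem.symm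
  have hm1 : (s(B, C) ∈ M ↔ s(C', D') ∈ tmap M) := by rw [← hmap1]; exact tmap_mem.symm
  have hm2 : (s(C, D) ∈ M ↔ s(B', C') ∈ tmap M) := by rw [← hmap2]; exact tmap_mem.symm
  have hm3 : (s(D, A) ∈ M ↔ s(A', B') ∈ tmap M) := by rw [← hmap3]; exact tmap_mem.symm
  have halt' : Alternates M (cycEdges [A, B, C, D]) := by
    rcases hfacts with ⟨f0, f1, f2, f3⟩ | ⟨f0, f1, f2, f3⟩
    · exact alternates_explicit' (fun hmem => f3 (hm0.mp hmem)) (hm1.mpr f2)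
        (fun hmem => f1 (hm2.mp hmem)) (hm3.mpr f0)
    · exact alternates_explicit (hm0.mpr f3) (fun hmem => f2 (hm1.mp hmem))
        (hm2.mpr f1) (fun hmem => f0 (hm3.mp hmem))
  refine ⟨symmDiff M {e | e ∈ cycEdges [A, B, C, D]}, ?_, ?_⟩
  · rw [heq, hPeq]
    exact (Set.image_symmDiff (Sym2.map.injective sw_inj) M _).symm
  · exact ⟨[A, B, C, D], ⟨j, i, hj, hi, rfl⟩, halt', rfl⟩

lemma rtg_tmap {M₀ : Set (Sym2 (Fin m × Fin n))} {X : Set (Sym2 (Fin n × Fin m))}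
    (h : Relation.ReflTransGen (PlaqStep n m) (tmap M₀) X) :
    ∃ M', X = tmap M' ∧ Relation.ReflTransGen (PlaqStep m n) M₀ M' := by
  induction h with
  | refl => exact ⟨M₀, rfl, Relation.ReflTransGen.refl⟩
  | tail hab hbc ih =>
    obtain ⟨M', rfl, hr⟩ := ih
    obtain ⟨M'', rfl, hstep⟩ := step_tmap hbc
    exact ⟨M'', rfl, hr.tail hstep⟩

end GridFlip

theorem grid_perfect_matchings_plaquette_ergodic' (m n : ℕ)
    (hm : 1 ≤ m) (hn : 1 ≤ n) (hmn : Even (m * n))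
    (M₁ M₂ : Set (Sym2 (Fin m × Fin n)))
    (h₁ : IsPerfectMatching (gridGraph m n) M₁)
    (h₂ : IsPerfectMatching (gridGraph m n) M₂) :
    Relation.ReflTransGen (PlaqStep m n) M₁ M₂ := by
  rcases Nat.even_or_odd n with hn2 | hodd
  · exact GridFlip.evenCase hn2 M₁ M₂ h₁ h₂
  · have hm2 : Even m := by
      rcases Nat.even_mul.mp hmn with h | h
      · exact h
      · exact absurd h (Nat.not_even_iff_odd.mpr hodd)
    have h₁' := GridFlip.tmap_PM h₁
    have h₂' := GridFlip.tmap_PM h₂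
    have hR := GridFlip.evenCase (m := n) (n := m) hm2 _ _ h₁' h₂'
    obtain ⟨M', hM', hr⟩ := GridFlip.rtg_tmap hR
    have hMM : M₂ = M' := by
      have hinj : Function.Injective (Set.image (Sym2.map (GridFlip.sw (m := m) (n := n)))) :=
        Set.image_injective.mpr (Sym2.map.injective GridFlip.sw_inj)
      exact hinj hM'
    rwa [hMM]

/-- For `m, n ≥ 1` with `m·n` even, any two perfect matchings of the
grid graph on `Fin m × Fin n` are related by a finite sequence of plaquette flips. -/
theorem grid_perfect_matchings_plaquette_ergodic (m n : ℕ)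
    (hm : 1 ≤ m) (hn : 1 ≤ n) (hmn : Even (m * n))
    (M₁ M₂ : Set (Sym2 (Fin m × Fin n)))
    (h₁ : IsPerfectMatching (gridGraph m n) M₁)
    (h₂ : IsPerfectMatching (gridGraph m n) M₂) :
    Relation.ReflTransGen (PlaqStep m n) M₁ M₂ :=
  grid_perfect_matchings_plaquette_ergodic' m n hm hn hmn M₁ M₂ h₁ h₂
end

section
/- The columnar configuration M_col = { {(2i,j), (2i+1,j)} : i, j ∈ ℤ } is a perfect matching of the triangular lattice on ℤ²; it admits at least one L-flip, but it admits no T-flip and no B-flip. -/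
/-- The triangular lattice on `ℤ²`: `u ~ v` iff `u - v ∈ {±(1,0), ±(0,1), ±(1,1)}`. -/
def triLattice : SimpleGraph V2 :=
  SimpleGraph.fromRel (fun u v => v - u ∈ ({(1,0), (0,1), (1,1)} : Set V2))

/-- `l` is the vertex list of a 4-cycle of the triangular lattice (an "L" tile). -/
def IsLCycle (l : List V2) : Prop :=
  l.Nodup ∧ l.length = 4 ∧ ∀ e ∈ cycEdges l, e ∈ triLattice.edgeSet

/-- The reference "T" (triangle) 6-cycle. -/
def TBase : List V2 := [(0,0), (1,0), (2,0), (2,1), (2,2), (1,1)]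

/-- The reference "B" (butterfly) 8-cycle. -/
def BBase : List V2 := [(0,-1), (1,0), (2,1), (1,1), (1,2), (0,1), (-1,0), (0,0)]

/-- `l` is an image of the reference T 6-cycle under a graph automorphism
of the triangular lattice. -/
def IsTCycle (l : List V2) : Prop :=
  ∃ φ : triLattice ≃g triLattice, l = TBase.map (fun x => φ x)

/-- `l` is an image of the reference B 8-cycle under a graph automorphism
of the triangular lattice. -/
def IsBCycle (l : List V2) : Prop :=
  ∃ φ : triLattice ≃g triLattice, l = BBase.map (fun x => φ x)

/-- `M` admits a flip along some cycle satisfying the cycle-shape predicate `P`. -/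
def AdmitsMove (M : Set (Sym2 V2)) (P : List V2 → Prop) : Prop :=
  ∃ l : List V2, P l ∧ Alternates M (cycEdges l)

/-- The columnar dimer configuration `{ {(2i,j), (2i+1,j)} : i, j ∈ ℤ }`. -/
def Mcol : Set (Sym2 V2) :=
  {e | ∃ i j : ℤ, e = s((2 * i, j), (2 * i + 1, j))}


/-! ### Auxiliary definitions and lemmas -/

def MCp (u v : V2) : Prop :=
  u.2 = v.2 ∧ ((u.1 % 2 = 0 ∧ v.1 = u.1 + 1) ∨ (v.1 % 2 = 0 ∧ u.1 = v.1 + 1))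

def AdjCp (u v : V2) : Prop :=
  (v.1 - u.1 = 1 ∧ v.2 - u.2 = 0) ∨ (v.1 - u.1 = -1 ∧ v.2 - u.2 = 0) ∨
  (v.1 - u.1 = 0 ∧ v.2 - u.2 = 1) ∨ (v.1 - u.1 = 0 ∧ v.2 - u.2 = -1) ∨
  (v.1 - u.1 = 1 ∧ v.2 - u.2 = 1) ∨ (v.1 - u.1 = -1 ∧ v.2 - u.2 = -1)

instance (u v : V2) : Decidable (MCp u v) := by unfold MCp; infer_instance
instance (u v : V2) : Decidable (AdjCp u v) := by unfold AdjCp; infer_instance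

lemma adj_iff (u v : V2) : triLattice.Adj u v ↔ AdjCp u v := by
  simp only [triLattice, SimpleGraph.fromRel_adj, Set.mem_insert_iff, Set.mem_singleton_iff,
    Prod.ext_iff, Prod.fst_sub, Prod.snd_sub, ne_eq, AdjCp]
  omega

lemma mem_Mcol (u v : V2) : s(u, v) ∈ Mcol ↔ MCp u v := by
  constructor
  · rintro ⟨i, j, h⟩
    rw [Sym2.eq_iff] at h
    rcases h with ⟨h1, h2⟩ | ⟨h1, h2⟩ <;>
      simp only [Prod.ext_iff] at h1 h2 <;> unfold MCp <;> omega
  · rintro ⟨h1, ⟨hp, he⟩ | ⟨hp, he⟩⟩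
    · refine ⟨u.1 / 2, u.2, ?_⟩
      rw [Sym2.eq_iff]; left
      constructor <;> rw [Prod.ext_iff] <;> constructor <;> simp <;> omega
    · refine ⟨v.1 / 2, v.2, ?_⟩
      rw [Sym2.eq_iff]; right
      constructor <;> rw [Prod.ext_iff] <;> constructor <;> simp <;> omega

def L2 : List V2 := [(1,0),(-1,0)]
def DL : List V2 := [(1,0),(-1,0),(0,1),(0,-1),(1,1),(-1,-1)]

lemma MCp_step {u v : V2} (h : MCp u v) : ∃ s ∈ L2, v = u + s := by
  rcases h with ⟨h1, ⟨hp, he⟩ | ⟨hp, he⟩⟩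
  · exact ⟨(1,0), by simp [L2], by rw [Prod.ext_iff]; simp; omega⟩
  · exact ⟨(-1,0), by simp [L2], by rw [Prod.ext_iff]; simp; omega⟩

lemma Adj_step {u v : V2} (h : AdjCp u v) : ∃ s ∈ DL, v = u + s := by
  rcases h with h|h|h|h|h|h
  · exact ⟨(1,0), by simp [DL], by rw [Prod.ext_iff]; simp; omega⟩
  · exact ⟨(-1,0), by simp [DL], by rw [Prod.ext_iff]; simp; omega⟩
  · exact ⟨(0,1), by simp [DL], by rw [Prod.ext_iff]; simp; omega⟩
  · exact ⟨(0,-1), by simp [DL], by rw [Prod.ext_iff]; simp; omega⟩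
  · exact ⟨(1,1), by simp [DL], by rw [Prod.ext_iff]; simp; omega⟩
  · exact ⟨(-1,-1), by simp [DL], by rw [Prod.ext_iff]; simp; omega⟩

lemma MCp_translate (c u v : V2) (hc : c.1 % 2 = 0) : MCp (u + c) (v + c) ↔ MCp u v := by
  unfold MCp; simp only [Prod.fst_add, Prod.snd_add]; omega

lemma AdjCp_translate (c u v : V2) : AdjCp (u + c) (v + c) ↔ AdjCp u v := by
  unfold AdjCp; simp only [Prod.fst_add, Prod.snd_add]; omega

lemma part1 : IsPerfectMatching triLattice Mcol := by
  constructor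
  · rintro e ⟨i, j, rfl⟩
    rw [SimpleGraph.mem_edgeSet, adj_iff]
    unfold AdjCp
    norm_num
  · intro v
    by_cases hv : v.1 % 2 = 0
    · refine ⟨s(v, (v.1 + 1, v.2)), ⟨(mem_Mcol _ _).2 ⟨rfl, Or.inl ⟨hv, rfl⟩⟩,
        Sym2.mem_mk_left _ _⟩, ?_⟩
      rintro e ⟨⟨i, j, rfl⟩, hve⟩
      rw [Sym2.mem_iff] at hve
      have : v = ((2*i : ℤ), (j : ℤ)) := by
        rcases hve with h | h
        · exact h
        · exfalso; rw [Prod.ext_iff] at h; omega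
      subst this
      rfl
    · refine ⟨s((v.1 - 1, v.2), v), ⟨(mem_Mcol _ _).2 ⟨rfl, Or.inl ⟨by omega, by omega⟩⟩,
        Sym2.mem_mk_right _ _⟩, ?_⟩
      rintro e ⟨⟨i, j, rfl⟩, hve⟩
      rw [Sym2.mem_iff] at hve
      have hv' : v = ((2*i + 1 : ℤ), (j : ℤ)) := by
        rcases hve with h | h
        · exfalso; rw [Prod.ext_iff] at h; omega
        · exact h
      subst hv'
      norm_num

lemma part2 : AdmitsMove Mcol IsLCycle := by
  refine ⟨[(0,0), (1,0), (1,1), (0,1)], ⟨by decide, rfl, ?_⟩, Or.inl ?_⟩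
  · intro e he
    have hc : cycEdges [((0:ℤ),(0:ℤ)), (1,0), (1,1), (0,1)] =
        [s(((0:ℤ),(0:ℤ)),((1:ℤ),(0:ℤ))), s(((1:ℤ),(0:ℤ)),((1:ℤ),(1:ℤ))),
         s(((1:ℤ),(1:ℤ)),((0:ℤ),(1:ℤ))), s(((0:ℤ),(1:ℤ)),((0:ℤ),(0:ℤ)))] := rfl
    rw [hc] at he
    simp only [List.mem_cons, List.mem_singleton, List.not_mem_nil, or_false] at he
    rcases he with rfl | rfl | rfl | rfl <;> rw [SimpleGraph.mem_edgeSet, adj_iff] <;> decide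
  · intro i h
    match i, h with
    | 0, h => exact (mem_Mcol _ _).trans (by decide)
    | 1, h => exact (mem_Mcol _ _).trans (by decide)
    | 2, h => exact (mem_Mcol _ _).trans (by decide)
    | 3, h => exact (mem_Mcol _ _).trans (by decide)
    | (n+4), h => exact absurd (show n + 4 < 4 from h) (by omega)

set_option maxRecDepth 100000 in
lemma TclaimA : ∀ P ∈ ([0,1] : List ℤ), ∀ s0 ∈ L2, ∀ s1 ∈ DL, ∀ s2 ∈ L2, ∀ s3 ∈ DL, ∀ s4 ∈ L2,
    ¬ (MCp (P,0) ((P,0)+s0) ∧ ¬ MCp ((P,0)+s0) ((P,0)+s0+s1) ∧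
       MCp ((P,0)+s0+s1) ((P,0)+s0+s1+s2) ∧ ¬ MCp ((P,0)+s0+s1+s2) ((P,0)+s0+s1+s2+s3) ∧
       MCp ((P,0)+s0+s1+s2+s3) ((P,0)+s0+s1+s2+s3+s4) ∧
       AdjCp ((P,0)+s0+s1+s2+s3+s4) (P,0) ∧ ¬ MCp ((P,0)+s0+s1+s2+s3+s4) (P,0)) := by
  decide

set_option maxRecDepth 100000 in
lemma TclaimB : ∀ P ∈ ([0,1] : List ℤ), ∀ s0 ∈ DL, ∀ s1 ∈ L2, ∀ s2 ∈ DL, ∀ s3 ∈ L2, ∀ s4 ∈ DL,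
    ¬ (¬ MCp (P,0) ((P,0)+s0) ∧ MCp ((P,0)+s0) ((P,0)+s0+s1) ∧
       ¬ MCp ((P,0)+s0+s1) ((P,0)+s0+s1+s2) ∧ MCp ((P,0)+s0+s1+s2) ((P,0)+s0+s1+s2+s3) ∧
       ¬ MCp ((P,0)+s0+s1+s2+s3) ((P,0)+s0+s1+s2+s3+s4) ∧
       MCp ((P,0)+s0+s1+s2+s3+s4) (P,0)) := by
  decide

lemma noT : ¬ AdmitsMove Mcol IsTCycle := by
  rintro ⟨l, ⟨φ, rfl⟩, halt⟩
  have hrw : cycEdges (TBase.map fun x => φ x) =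
      [s(φ (0,0), φ (1,0)), s(φ (1,0), φ (2,0)), s(φ (2,0), φ (2,1)),
       s(φ (2,1), φ (2,2)), s(φ (2,2), φ (1,1)), s(φ (1,1), φ (0,0))] := rfl
  rw [hrw] at halt
  -- adjacency facts for cycle edges
  have adj01 : AdjCp (φ (0,0)) (φ (1,0)) := by
    rw [← adj_iff]; exact φ.map_adj_iff.2 (by rw [adj_iff]; decide)
  have adj12 : AdjCp (φ (1,0)) (φ (2,0)) := by
    rw [← adj_iff]; exact φ.map_adj_iff.2 (by rw [adj_iff]; decide)
  have adj23 : AdjCp (φ (2,0)) (φ (2,1)) := by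
    rw [← adj_iff]; exact φ.map_adj_iff.2 (by rw [adj_iff]; decide)
  have adj34 : AdjCp (φ (2,1)) (φ (2,2)) := by
    rw [← adj_iff]; exact φ.map_adj_iff.2 (by rw [adj_iff]; decide)
  have adj45 : AdjCp (φ (2,2)) (φ (1,1)) := by
    rw [← adj_iff]; exact φ.map_adj_iff.2 (by rw [adj_iff]; decide)
  have adj50 : AdjCp (φ (1,1)) (φ (0,0)) := by
    rw [← adj_iff]; exact φ.map_adj_iff.2 (by rw [adj_iff]; decide)
  set w0 := φ (0,0)
  set w1 := φ (1,0)
  set w2 := φ (2,0)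
  set w3 := φ (2,1)
  set w4 := φ (2,2)
  set w5 := φ (1,1)
  set c : V2 := (w0.1 % 2 - w0.1, -w0.2) with hcdef
  have hc : c.1 % 2 = 0 := by simp [hcdef]
  have E0 : w0 + c = ((w0.1 % 2 : ℤ), (0 : ℤ)) := by
    rw [Prod.ext_iff]; simp [hcdef]
  have hP : (w0.1 % 2) ∈ ([0,1] : List ℤ) := by simp; omega
  rcases halt with hA | hB
  · have m0 : MCp w0 w1 := (mem_Mcol _ _).1 ((hA 0 (by norm_num)).2 (by decide))
    have m2 : MCp w2 w3 := (mem_Mcol _ _).1 ((hA 2 (by norm_num)).2 (by decide))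
    have m4 : MCp w4 w5 := (mem_Mcol _ _).1 ((hA 4 (by norm_num)).2 (by decide))
    have n1 : ¬ MCp w1 w2 := fun hm => by
      have := (hA 1 (by norm_num)).1 ((mem_Mcol _ _).2 hm); simp at this
    have n3 : ¬ MCp w3 w4 := fun hm => by
      have := (hA 3 (by norm_num)).1 ((mem_Mcol _ _).2 hm); simp [Nat.even_iff] at this
    have n5 : ¬ MCp w5 w0 := fun hm => by
      have := (hA 5 (by norm_num)).1 ((mem_Mcol _ _).2 hm); simp [Nat.even_iff] at this
    obtain ⟨s0, hs0, e1⟩ := MCp_step m0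
    obtain ⟨s1, hs1, e2⟩ := Adj_step adj12
    obtain ⟨s2, hs2, e3⟩ := MCp_step m2
    obtain ⟨s3, hs3, e4⟩ := Adj_step adj34
    obtain ⟨s4, hs4, e5⟩ := MCp_step m4
    have E1 : w1 + c = ((w0.1 % 2 : ℤ), (0:ℤ)) + s0 := by rw [e1, add_right_comm, E0]
    have E2 : w2 + c = ((w0.1 % 2 : ℤ), (0:ℤ)) + s0 + s1 := by rw [e2, add_right_comm, E1]
    have E3 : w3 + c = ((w0.1 % 2 : ℤ), (0:ℤ)) + s0 + s1 + s2 := by rw [e3, add_right_comm, E2]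
    have E4 : w4 + c = ((w0.1 % 2 : ℤ), (0:ℤ)) + s0 + s1 + s2 + s3 := by
      rw [e4, add_right_comm, E3]
    have E5 : w5 + c = ((w0.1 % 2 : ℤ), (0:ℤ)) + s0 + s1 + s2 + s3 + s4 := by
      rw [e5, add_right_comm, E4]
    exact TclaimA (w0.1 % 2) hP s0 hs0 s1 hs1 s2 hs2 s3 hs3 s4 hs4
      ⟨by rw [← E1, ← E0]; exact (MCp_translate c w0 w1 hc).2 m0,
       fun hm => n1 ((MCp_translate c w1 w2 hc).1 (by rwa [E1, E2])),
       by rw [← E3, ← E2]; exact (MCp_translate c w2 w3 hc).2 m2,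
       fun hm => n3 ((MCp_translate c w3 w4 hc).1 (by rwa [E3, E4])),
       by rw [← E5, ← E4]; exact (MCp_translate c w4 w5 hc).2 m4,
       by rw [← E5, ← E0]; exact (AdjCp_translate c w5 w0).2 adj50,
       fun hm => n5 ((MCp_translate c w5 w0 hc).1 (by rwa [E5, E0]))⟩
  · have m1 : MCp w1 w2 := (mem_Mcol _ _).1 ((hB 1 (by norm_num)).2 (by decide))
    have m3 : MCp w3 w4 := (mem_Mcol _ _).1 ((hB 3 (by norm_num)).2 (by decide))
    have m5 : MCp w5 w0 := (mem_Mcol _ _).1 ((hB 5 (by norm_num)).2 (by decide))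
    have n0 : ¬ MCp w0 w1 := fun hm =>
      ((hB 0 (by norm_num)).1 ((mem_Mcol _ _).2 hm)) (by decide)
    have n2 : ¬ MCp w2 w3 := fun hm =>
      ((hB 2 (by norm_num)).1 ((mem_Mcol _ _).2 hm)) (by decide)
    have n4 : ¬ MCp w4 w5 := fun hm =>
      ((hB 4 (by norm_num)).1 ((mem_Mcol _ _).2 hm)) (by decide)
    obtain ⟨s0, hs0, e1⟩ := Adj_step adj01
    obtain ⟨s1, hs1, e2⟩ := MCp_step m1
    obtain ⟨s2, hs2, e3⟩ := Adj_step adj23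
    obtain ⟨s3, hs3, e4⟩ := MCp_step m3
    obtain ⟨s4, hs4, e5⟩ := Adj_step adj45
    have E1 : w1 + c = ((w0.1 % 2 : ℤ), (0:ℤ)) + s0 := by rw [e1, add_right_comm, E0]
    have E2 : w2 + c = ((w0.1 % 2 : ℤ), (0:ℤ)) + s0 + s1 := by rw [e2, add_right_comm, E1]
    have E3 : w3 + c = ((w0.1 % 2 : ℤ), (0:ℤ)) + s0 + s1 + s2 := by rw [e3, add_right_comm, E2]
    have E4 : w4 + c = ((w0.1 % 2 : ℤ), (0:ℤ)) + s0 + s1 + s2 + s3 := by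
      rw [e4, add_right_comm, E3]
    have E5 : w5 + c = ((w0.1 % 2 : ℤ), (0:ℤ)) + s0 + s1 + s2 + s3 + s4 := by
      rw [e5, add_right_comm, E4]
    exact TclaimB (w0.1 % 2) hP s0 hs0 s1 hs1 s2 hs2 s3 hs3 s4 hs4
      ⟨fun hm => n0 ((MCp_translate c w0 w1 hc).1 (by rwa [E0, E1])),
       by rw [← E2, ← E1]; exact (MCp_translate c w1 w2 hc).2 m1,
       fun hm => n2 ((MCp_translate c w2 w3 hc).1 (by rwa [E2, E3])),
       by rw [← E4, ← E3]; exact (MCp_translate c w3 w4 hc).2 m3,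
       fun hm => n4 ((MCp_translate c w4 w5 hc).1 (by rwa [E4, E5])),
       by rw [← E5, ← E0]; exact (MCp_translate c w5 w0 hc).2 m5⟩

set_option maxRecDepth 1000000 in
lemma BclaimA : ∀ P ∈ ([0,1] : List ℤ), ∀ s0 ∈ L2, ∀ s1 ∈ DL, ∀ s2 ∈ L2, ∀ s3 ∈ DL,
    ∀ s4 ∈ L2, ∀ s5 ∈ DL, ∀ s6 ∈ L2,
    ¬ (MCp (P,0) ((P,0)+s0) ∧ ¬ MCp ((P,0)+s0) ((P,0)+s0+s1) ∧
       MCp ((P,0)+s0+s1) ((P,0)+s0+s1+s2) ∧ ¬ MCp ((P,0)+s0+s1+s2) ((P,0)+s0+s1+s2+s3) ∧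
       MCp ((P,0)+s0+s1+s2+s3) ((P,0)+s0+s1+s2+s3+s4) ∧
       ¬ MCp ((P,0)+s0+s1+s2+s3+s4) ((P,0)+s0+s1+s2+s3+s4+s5) ∧
       MCp ((P,0)+s0+s1+s2+s3+s4+s5) ((P,0)+s0+s1+s2+s3+s4+s5+s6) ∧
       AdjCp ((P,0)+s0+s1+s2+s3+s4+s5+s6) (P,0) ∧
       ¬ MCp ((P,0)+s0+s1+s2+s3+s4+s5+s6) (P,0) ∧
       AdjCp ((P,0)+s0) ((P,0)+s0+s1+s2) ∧
       AdjCp ((P,0)+s0) ((P,0)+s0+s1+s2+s3+s4+s5+s6) ∧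
       AdjCp ((P,0)+s0+s1+s2) ((P,0)+s0+s1+s2+s3+s4+s5+s6) ∧
       (P,0) ≠ ((P,0)+s0+s1+s2) ∧
       ((P,0)+s0+s1 : V2) ≠ ((P,0)+s0+s1+s2+s3+s4+s5+s6)) := by
  decide

set_option maxRecDepth 1000000 in
lemma BclaimB : ∀ P ∈ ([0,1] : List ℤ), ∀ s0 ∈ DL, ∀ s1 ∈ L2, ∀ s2 ∈ DL, ∀ s3 ∈ L2,
    ∀ s4 ∈ DL, ∀ s5 ∈ L2, ∀ s6 ∈ DL,
    ¬ (¬ MCp (P,0) ((P,0)+s0) ∧ MCp ((P,0)+s0) ((P,0)+s0+s1) ∧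
       ¬ MCp ((P,0)+s0+s1) ((P,0)+s0+s1+s2) ∧ MCp ((P,0)+s0+s1+s2) ((P,0)+s0+s1+s2+s3) ∧
       ¬ MCp ((P,0)+s0+s1+s2+s3) ((P,0)+s0+s1+s2+s3+s4) ∧
       MCp ((P,0)+s0+s1+s2+s3+s4) ((P,0)+s0+s1+s2+s3+s4+s5) ∧
       ¬ MCp ((P,0)+s0+s1+s2+s3+s4+s5) ((P,0)+s0+s1+s2+s3+s4+s5+s6) ∧
       MCp ((P,0)+s0+s1+s2+s3+s4+s5+s6) (P,0) ∧
       AdjCp ((P,0)+s0) ((P,0)+s0+s1+s2) ∧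
       AdjCp ((P,0)+s0) ((P,0)+s0+s1+s2+s3+s4+s5+s6) ∧
       AdjCp ((P,0)+s0+s1+s2) ((P,0)+s0+s1+s2+s3+s4+s5+s6) ∧
       (P,0) ≠ ((P,0)+s0+s1+s2) ∧
       ((P,0)+s0+s1 : V2) ≠ ((P,0)+s0+s1+s2+s3+s4+s5+s6)) := by
  decide

lemma noB : ¬ AdmitsMove Mcol IsBCycle := by
  rintro ⟨l, ⟨φ, rfl⟩, halt⟩
  have hrw : cycEdges (BBase.map fun x => φ x) = [s(φ (0,-1), φ (1,0)), s(φ (1,0), φ (2,1)), s(φ (2,1), φ (1,1)), s(φ (1,1), φ (1,2)), s(φ (1,2), φ (0,1)), s(φ (0,1), φ (-1,0)), s(φ (-1,0), φ (0,0)), s(φ (0,0), φ (0,-1))] := rfl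
  rw [hrw] at halt
  have adj01 : AdjCp (φ (0,-1)) (φ (1,0)) := by
    rw [← adj_iff]; exact φ.map_adj_iff.2 (by rw [adj_iff]; decide)
  have adj12 : AdjCp (φ (1,0)) (φ (2,1)) := by
    rw [← adj_iff]; exact φ.map_adj_iff.2 (by rw [adj_iff]; decide)
  have adj23 : AdjCp (φ (2,1)) (φ (1,1)) := by
    rw [← adj_iff]; exact φ.map_adj_iff.2 (by rw [adj_iff]; decide)
  have adj34 : AdjCp (φ (1,1)) (φ (1,2)) := by
    rw [← adj_iff]; exact φ.map_adj_iff.2 (by rw [adj_iff]; decide)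
  have adj45 : AdjCp (φ (1,2)) (φ (0,1)) := by
    rw [← adj_iff]; exact φ.map_adj_iff.2 (by rw [adj_iff]; decide)
  have adj56 : AdjCp (φ (0,1)) (φ (-1,0)) := by
    rw [← adj_iff]; exact φ.map_adj_iff.2 (by rw [adj_iff]; decide)
  have adj67 : AdjCp (φ (-1,0)) (φ (0,0)) := by
    rw [← adj_iff]; exact φ.map_adj_iff.2 (by rw [adj_iff]; decide)
  have adj70 : AdjCp (φ (0,0)) (φ (0,-1)) := by
    rw [← adj_iff]; exact φ.map_adj_iff.2 (by rw [adj_iff]; decide)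
  have cadj13 : AdjCp (φ (1,0)) (φ (1,1)) := by
    rw [← adj_iff]; exact φ.map_adj_iff.2 (by rw [adj_iff]; decide)
  have cadj17 : AdjCp (φ (1,0)) (φ (0,0)) := by
    rw [← adj_iff]; exact φ.map_adj_iff.2 (by rw [adj_iff]; decide)
  have cadj37 : AdjCp (φ (1,1)) (φ (0,0)) := by
    rw [← adj_iff]; exact φ.map_adj_iff.2 (by rw [adj_iff]; decide)
  have hne03 : φ (0,-1) ≠ φ (1,1) := fun h => absurd (φ.toEquiv.injective h) (by decide)
  have hne27 : φ (2,1) ≠ φ (0,0) := fun h => absurd (φ.toEquiv.injective h) (by decide)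
  set w0 := φ (0,-1)
  set w1 := φ (1,0)
  set w2 := φ (2,1)
  set w3 := φ (1,1)
  set w4 := φ (1,2)
  set w5 := φ (0,1)
  set w6 := φ (-1,0)
  set w7 := φ (0,0)
  set c : V2 := (w0.1 % 2 - w0.1, -w0.2) with hcdef
  have hc : c.1 % 2 = 0 := by simp [hcdef]
  have E0 : w0 + c = ((w0.1 % 2 : ℤ), (0 : ℤ)) := by rw [Prod.ext_iff]; simp [hcdef]
  have hP : (w0.1 % 2) ∈ ([0,1] : List ℤ) := by simp; omega
  rcases halt with hA | hB
  · have m0 : MCp w0 w1 := (mem_Mcol _ _).1 ((hA 0 (by norm_num)).2 (by decide))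
    have m2 : MCp w2 w3 := (mem_Mcol _ _).1 ((hA 2 (by norm_num)).2 (by decide))
    have m4 : MCp w4 w5 := (mem_Mcol _ _).1 ((hA 4 (by norm_num)).2 (by decide))
    have m6 : MCp w6 w7 := (mem_Mcol _ _).1 ((hA 6 (by norm_num)).2 (by decide))
    have n1 : ¬ MCp w1 w2 := fun hm => by
      have := (hA 1 (by norm_num)).1 ((mem_Mcol _ _).2 hm); simp [Nat.even_iff] at this
    have n3 : ¬ MCp w3 w4 := fun hm => by
      have := (hA 3 (by norm_num)).1 ((mem_Mcol _ _).2 hm); simp [Nat.even_iff] at this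
    have n5 : ¬ MCp w5 w6 := fun hm => by
      have := (hA 5 (by norm_num)).1 ((mem_Mcol _ _).2 hm); simp [Nat.even_iff] at this
    have n7 : ¬ MCp w7 w0 := fun hm => by
      have := (hA 7 (by norm_num)).1 ((mem_Mcol _ _).2 hm); simp [Nat.even_iff] at this
    obtain ⟨s0, hs0, e1⟩ := MCp_step m0
    obtain ⟨s1, hs1, e2⟩ := Adj_step adj12
    obtain ⟨s2, hs2, e3⟩ := MCp_step m2
    obtain ⟨s3, hs3, e4⟩ := Adj_step adj34
    obtain ⟨s4, hs4, e5⟩ := MCp_step m4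
    obtain ⟨s5, hs5, e6⟩ := Adj_step adj56
    obtain ⟨s6, hs6, e7⟩ := MCp_step m6
    have E1 : w1 + c = ((w0.1 % 2 : ℤ), (0:ℤ)) + s0 := by rw [e1, add_right_comm, E0]
    have E2 : w2 + c = ((w0.1 % 2 : ℤ), (0:ℤ)) + s0 + s1 := by rw [e2, add_right_comm, E1]
    have E3 : w3 + c = ((w0.1 % 2 : ℤ), (0:ℤ)) + s0 + s1 + s2 := by rw [e3, add_right_comm, E2]
    have E4 : w4 + c = ((w0.1 % 2 : ℤ), (0:ℤ)) + s0 + s1 + s2 + s3 := by rw [e4, add_right_comm, E3]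
    have E5 : w5 + c = ((w0.1 % 2 : ℤ), (0:ℤ)) + s0 + s1 + s2 + s3 + s4 := by rw [e5, add_right_comm, E4]
    have E6 : w6 + c = ((w0.1 % 2 : ℤ), (0:ℤ)) + s0 + s1 + s2 + s3 + s4 + s5 := by rw [e6, add_right_comm, E5]
    have E7 : w7 + c = ((w0.1 % 2 : ℤ), (0:ℤ)) + s0 + s1 + s2 + s3 + s4 + s5 + s6 := by rw [e7, add_right_comm, E6]
    exact BclaimA (w0.1 % 2) hP s0 hs0 s1 hs1 s2 hs2 s3 hs3 s4 hs4 s5 hs5 s6 hs6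
      ⟨by rw [← E1, ← E0]; exact (MCp_translate c w0 w1 hc).2 m0,
       fun hm => n1 ((MCp_translate c w1 w2 hc).1 (by rwa [E1, E2])),
       by rw [← E3, ← E2]; exact (MCp_translate c w2 w3 hc).2 m2,
       fun hm => n3 ((MCp_translate c w3 w4 hc).1 (by rwa [E3, E4])),
       by rw [← E5, ← E4]; exact (MCp_translate c w4 w5 hc).2 m4,
       fun hm => n5 ((MCp_translate c w5 w6 hc).1 (by rwa [E5, E6])),
       by rw [← E7, ← E6]; exact (MCp_translate c w6 w7 hc).2 m6,
       by rw [← E7, ← E0]; exact (AdjCp_translate c w7 w0).2 adj70,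
       fun hm => n7 ((MCp_translate c w7 w0 hc).1 (by rwa [E7, E0])),
       by rw [← E3, ← E1]; exact (AdjCp_translate c w1 w3).2 cadj13,
       by rw [← E7, ← E1]; exact (AdjCp_translate c w1 w7).2 cadj17,
       by rw [← E7, ← E3]; exact (AdjCp_translate c w3 w7).2 cadj37,
       by rw [← E3, ← E0]; exact fun h => hne03 (add_right_cancel h),
       by rw [← E7, ← E2]; exact fun h => hne27 (add_right_cancel h)⟩
  · have m1 : MCp w1 w2 := (mem_Mcol _ _).1 ((hB 1 (by norm_num)).2 (by decide))
    have m3 : MCp w3 w4 := (mem_Mcol _ _).1 ((hB 3 (by norm_num)).2 (by decide))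
    have m5 : MCp w5 w6 := (mem_Mcol _ _).1 ((hB 5 (by norm_num)).2 (by decide))
    have m7 : MCp w7 w0 := (mem_Mcol _ _).1 ((hB 7 (by norm_num)).2 (by decide))
    have n0 : ¬ MCp w0 w1 := fun hm =>
      ((hB 0 (by norm_num)).1 ((mem_Mcol _ _).2 hm)) (by decide)
    have n2 : ¬ MCp w2 w3 := fun hm =>
      ((hB 2 (by norm_num)).1 ((mem_Mcol _ _).2 hm)) (by decide)
    have n4 : ¬ MCp w4 w5 := fun hm =>
      ((hB 4 (by norm_num)).1 ((mem_Mcol _ _).2 hm)) (by decide)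
    have n6 : ¬ MCp w6 w7 := fun hm =>
      ((hB 6 (by norm_num)).1 ((mem_Mcol _ _).2 hm)) (by decide)
    obtain ⟨s0, hs0, e1⟩ := Adj_step adj01
    obtain ⟨s1, hs1, e2⟩ := MCp_step m1
    obtain ⟨s2, hs2, e3⟩ := Adj_step adj23
    obtain ⟨s3, hs3, e4⟩ := MCp_step m3
    obtain ⟨s4, hs4, e5⟩ := Adj_step adj45
    obtain ⟨s5, hs5, e6⟩ := MCp_step m5
    obtain ⟨s6, hs6, e7⟩ := Adj_step adj67
    have E1 : w1 + c = ((w0.1 % 2 : ℤ), (0:ℤ)) + s0 := by rw [e1, add_right_comm, E0]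
    have E2 : w2 + c = ((w0.1 % 2 : ℤ), (0:ℤ)) + s0 + s1 := by rw [e2, add_right_comm, E1]
    have E3 : w3 + c = ((w0.1 % 2 : ℤ), (0:ℤ)) + s0 + s1 + s2 := by rw [e3, add_right_comm, E2]
    have E4 : w4 + c = ((w0.1 % 2 : ℤ), (0:ℤ)) + s0 + s1 + s2 + s3 := by rw [e4, add_right_comm, E3]
    have E5 : w5 + c = ((w0.1 % 2 : ℤ), (0:ℤ)) + s0 + s1 + s2 + s3 + s4 := by rw [e5, add_right_comm, E4]
    have E6 : w6 + c = ((w0.1 % 2 : ℤ), (0:ℤ)) + s0 + s1 + s2 + s3 + s4 + s5 := by rw [e6, add_right_comm, E5]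
    have E7 : w7 + c = ((w0.1 % 2 : ℤ), (0:ℤ)) + s0 + s1 + s2 + s3 + s4 + s5 + s6 := by rw [e7, add_right_comm, E6]
    exact BclaimB (w0.1 % 2) hP s0 hs0 s1 hs1 s2 hs2 s3 hs3 s4 hs4 s5 hs5 s6 hs6
      ⟨fun hm => n0 ((MCp_translate c w0 w1 hc).1 (by rwa [E0, E1])),
       by rw [← E2, ← E1]; exact (MCp_translate c w1 w2 hc).2 m1,
       fun hm => n2 ((MCp_translate c w2 w3 hc).1 (by rwa [E2, E3])),
       by rw [← E4, ← E3]; exact (MCp_translate c w3 w4 hc).2 m3,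
       fun hm => n4 ((MCp_translate c w4 w5 hc).1 (by rwa [E4, E5])),
       by rw [← E6, ← E5]; exact (MCp_translate c w5 w6 hc).2 m5,
       fun hm => n6 ((MCp_translate c w6 w7 hc).1 (by rwa [E6, E7])),
       by rw [← E7, ← E0]; exact (MCp_translate c w7 w0 hc).2 m7,
       by rw [← E3, ← E1]; exact (AdjCp_translate c w1 w3).2 cadj13,
       by rw [← E7, ← E1]; exact (AdjCp_translate c w1 w7).2 cadj17,
       by rw [← E7, ← E3]; exact (AdjCp_translate c w3 w7).2 cadj37,
       by rw [← E3, ← E0]; exact fun h => hne03 (add_right_cancel h),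
       by rw [← E7, ← E2]; exact fun h => hne27 (add_right_cancel h)⟩
/-- The columnar configuration is a perfect matching of the triangular
lattice; it admits an L-flip, but no T-flip and no B-flip. -/
theorem columnar_admits_only_L :
    IsPerfectMatching triLattice Mcol ∧
    AdmitsMove Mcol IsLCycle ∧
    ¬ AdmitsMove Mcol IsTCycle ∧
    ¬ AdmitsMove Mcol IsBCycle := by
  exact ⟨part1, part2, noT, noB⟩
end

section
/- There exists a perfect matching of the triangular lattice on ℤ² that admits a B-flip but admits no L-flip and no T-flip. -/
/- ### Auxiliary development -/

/-- The six neighbor directions of the triangular lattice. -/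
def D6 : Fin 6 → V2 := ![(1,0),(0,1),(1,1),(-1,0),(0,-1),(-1,-1)]

/-- Table of matching directions, period 4 in each coordinate. -/
def Ftbl : Fin 4 → Fin 4 → V2 :=
  ![![(-1,0),(1,1),(-1,0),(1,1)],
    ![(-1,-1),(1,0),(-1,-1),(1,0)],
    ![(1,1),(-1,0),(1,1),(-1,0)],
    ![(1,0),(-1,-1),(1,0),(-1,-1)]]

def F (r : ZMod 4 × ZMod 4) : V2 := Ftbl r.1 r.2

/-- Reduction of a lattice point mod 4. -/
def pim (p : V2) : ZMod 4 × ZMod 4 := ((p.1 : ZMod 4), (p.2 : ZMod 4))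

/-- The matching direction at a vertex. -/
def g (v : V2) : V2 := F (pim v)

/-- The perfect matching: `v` is matched with `v + g v`. -/
def Mset : Set (Sym2 V2) := {e | ∃ v : V2, e = s(v, v + g v)}

def step (r : ZMod 4 × ZMod 4) (i : Fin 6) : V2 := F r + D6 i

set_option maxRecDepth 10000 in
lemma no4 : ∀ (r : ZMod 4 × ZMod 4) (i j : Fin 6),
    step r i + step (r + pim (step r i)) j = 0 → step r i = 0 := by decide

set_option maxRecDepth 100000 in
set_option maxHeartbeats 4000000 in
lemma no6 : ∀ (r : ZMod 4 × ZMod 4) (i j k : Fin 6),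
    step r i + step (r + pim (step r i)) j
      + step (r + pim (step r i) + pim (step (r + pim (step r i)) j)) k = 0 →
    (step r i = 0 ∨ step (r + pim (step r i)) j = 0 ∨
      step r i + step (r + pim (step r i)) j = 0) := by decide

lemma hinv : ∀ r : ZMod 4 × ZMod 4, F (r + pim (F r)) = - F r := by decide
lemma hFne : ∀ r, F r ≠ 0 := by decide
lemma hFD : ∀ r, ∃ i : Fin 6, F r = D6 i := by decide

lemma pim_add (p q : V2) : pim (p + q) = pim p + pim q := by
  simp [pim, Prod.ext_iff]

lemma ginv (v : V2) : g (v + g v) = - g v := by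
  show F (pim (v + g v)) = - F (pim v)
  rw [pim_add]; exact hinv (pim v)

lemma gne (v : V2) : g v ≠ 0 := hFne (pim v)

lemma edge_mem {a b : V2} : s(a, b) ∈ Mset ↔ b = a + g a := by
  constructor
  · rintro ⟨v, hv⟩
    rcases Sym2.eq_iff.mp hv with ⟨h1, h2⟩ | ⟨h1, h2⟩
    · subst h1; exact h2
    · subst h1; subst h2
      rw [ginv]; ring
  · intro h; exact ⟨a, by rw [h]⟩

lemma not_mem_edge {a b : V2} (h : b ≠ a + g a) : s(a, b) ∉ Mset :=
  fun hm => h (edge_mem.mp hm)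

lemma step_of_edge {u v : V2} (h : s(u,v) ∈ triLattice.edgeSet) :
    ∃ i : Fin 6, v - u = D6 i := by
  rw [SimpleGraph.mem_edgeSet] at h
  simp only [triLattice, SimpleGraph.fromRel_adj, Set.mem_insert_iff,
    Set.mem_singleton_iff] at h
  obtain ⟨hne, h⟩ := h
  rcases h with (h|h|h)|(h|h|h)
  · exact ⟨0, h⟩
  · exact ⟨1, h⟩
  · exact ⟨2, h⟩
  · exact ⟨3, by rw [show v - u = -(u - v) by ring, h]; decide⟩
  · exact ⟨4, by rw [show v - u = -(u - v) by ring, h]; decide⟩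
  · exact ⟨5, by rw [show v - u = -(u - v) by ring, h]; decide⟩

lemma adj_mk {u v : V2} (hne : u ≠ v)
    (h : v - u = (1,0) ∨ v - u = (0,1) ∨ v - u = (1,1) ∨
         u - v = (1,0) ∨ u - v = (0,1) ∨ u - v = (1,1)) : triLattice.Adj u v := by
  simp only [triLattice, SimpleGraph.fromRel_adj, Set.mem_insert_iff,
    Set.mem_singleton_iff]
  exact ⟨hne, by tauto⟩

lemma key4 (a c : V2) (hne : c ≠ a) (i j : Fin 6)
    (h1 : c - (a + g a) = D6 i) (h2 : a - (c + g c) = D6 j) : False := by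
  have hc : c = a + (g a + D6 i) := by linear_combination h1
  have hpc : pim c = pim a + pim (g a + D6 i) := by rw [hc, pim_add]
  have hF2 : F (pim a + pim (g a + D6 i)) = g c := by rw [← hpc]; rfl
  have hcl : step (pim a) i + step (pim a + pim (step (pim a) i)) j = 0 := by
    show g a + D6 i + (F (pim a + pim (g a + D6 i)) + D6 j) = 0
    rw [hF2]
    linear_combination -h1 - h2
  have h0 : g a + D6 i = 0 := no4 (pim a) i j hcl
  exact hne (sub_eq_zero.mp (by linear_combination h1 + h0))

lemma key6 (a c e : V2) (hca : c ≠ a) (hec : e ≠ c) (hae : a ≠ e) (i j k : Fin 6)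
    (h1 : c - (a + g a) = D6 i) (h2 : e - (c + g c) = D6 j)
    (h3 : a - (e + g e) = D6 k) : False := by
  have hc : c = a + (g a + D6 i) := by linear_combination h1
  have hpc : pim c = pim a + pim (g a + D6 i) := by rw [hc, pim_add]
  have he : e = c + (g c + D6 j) := by linear_combination h2
  have hpe : pim e = pim c + pim (g c + D6 j) := by rw [he, pim_add]
  have hF2 : F (pim a + pim (g a + D6 i)) = g c := by rw [← hpc]; rfl
  have hF3 : F (pim a + pim (g a + D6 i) + pim (g c + D6 j)) = g e := by
    rw [← hpc, ← hpe]; rfl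
  have hcl : step (pim a) i + step (pim a + pim (step (pim a) i)) j
      + step (pim a + pim (step (pim a) i)
          + pim (step (pim a + pim (step (pim a) i)) j)) k = 0 := by
    show g a + D6 i + (F (pim a + pim (g a + D6 i)) + D6 j)
      + (F (pim a + pim (g a + D6 i) + pim (F (pim a + pim (g a + D6 i)) + D6 j)) + D6 k) = 0
    rw [hF2, hF3]
    linear_combination -h1 - h2 - h3
  rcases no6 (pim a) i j k hcl with h|h|h
  · have h' : g a + D6 i = 0 := h
    exact hca (sub_eq_zero.mp (by linear_combination h1 + h'))
  · have h' : F (pim a + pim (g a + D6 i)) + D6 j = 0 := h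
    rw [hF2] at h'
    exact hec (sub_eq_zero.mp (by linear_combination h2 + h'))
  · have h' : g a + D6 i + (F (pim a + pim (g a + D6 i)) + D6 j) = 0 := h
    rw [hF2] at h'
    have : e = a := sub_eq_zero.mp (by linear_combination h1 + h2 + h')
    exact hae this.symm

lemma hFD6 : ∀ r, F r = (1,0) ∨ F r = (0,1) ∨ F r = (1,1) ∨
    F r = (-1,0) ∨ F r = (0,-1) ∨ F r = (-1,-1) := by decide

lemma M_sub : Mset ⊆ triLattice.edgeSet := by
  rintro e ⟨v, rfl⟩
  rw [SimpleGraph.mem_edgeSet]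
  apply adj_mk
  · intro h
    exact gne v (by linear_combination -h)
  · have h1 : v + g v - v = g v := by ring
    have h2 : v - (v + g v) = -(g v) := by ring
    rcases hFD6 (pim v) with h|h|h|h|h|h <;>
      [ exact Or.inl (by rw [h1]; exact h);
        exact Or.inr (Or.inl (by rw [h1]; exact h));
        exact Or.inr (Or.inr (Or.inl (by rw [h1]; exact h)));
        exact Or.inr (Or.inr (Or.inr (Or.inl
          (by rw [h2, show g v = (-1,0) from h]; decide))));
        exact Or.inr (Or.inr (Or.inr (Or.inr (Or.inl
          (by rw [h2, show g v = (0,-1) from h]; decide)))));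
        exact Or.inr (Or.inr (Or.inr (Or.inr (Or.inr
          (by rw [h2, show g v = (-1,-1) from h]; decide))))) ]

lemma M_matching (v : V2) : ∃! e, e ∈ Mset ∧ v ∈ e := by
  refine ⟨s(v, v + g v), ⟨⟨v, rfl⟩, Sym2.mem_mk_left _ _⟩, ?_⟩
  rintro e ⟨⟨w, rfl⟩, hv⟩
  rcases Sym2.mem_iff.mp hv with h|h
  · subst h; rfl
  · have hw : w = v + g v := by rw [h, ginv]; ring
    rw [← h, hw]
    exact Sym2.eq_swap

/-- There is a perfect matching of the triangular lattice on `ℤ²`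
admitting a B-flip but no L-flip and no T-flip. -/
theorem exists_matching_admitting_only_B :
    ∃ M : Set (Sym2 V2), IsPerfectMatching triLattice M ∧
      AdmitsMove M IsBCycle ∧
      ¬ AdmitsMove M IsLCycle ∧
      ¬ AdmitsMove M IsTCycle := by
  refine ⟨Mset, ⟨M_sub, M_matching⟩, ?_, ?_, ?_⟩
  · -- B-flip: the base butterfly itself alternates
    refine ⟨BBase, ⟨RelIso.refl _, rfl⟩, Or.inl ?_⟩
    intro i h
    have h8 : i < 8 := h
    interval_cases i
    · exact iff_of_true (edge_mem.mpr
        (show ((1:ℤ),(0:ℤ)) = ((0:ℤ),(-1:ℤ)) + g ((0:ℤ),(-1:ℤ)) by decide)) (by decide)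
    · exact iff_of_false (not_mem_edge (a := ((1:ℤ),(0:ℤ))) (b := ((2:ℤ),(1:ℤ)))
        (by decide)) (by decide)
    · exact iff_of_true (edge_mem.mpr
        (show ((1:ℤ),(1:ℤ)) = ((2:ℤ),(1:ℤ)) + g ((2:ℤ),(1:ℤ)) by decide)) (by decide)
    · exact iff_of_false (not_mem_edge (a := ((1:ℤ),(1:ℤ))) (b := ((1:ℤ),(2:ℤ)))
        (by decide)) (by decide)
    · exact iff_of_true (edge_mem.mpr
        (show ((0:ℤ),(1:ℤ)) = ((1:ℤ),(2:ℤ)) + g ((1:ℤ),(2:ℤ)) by decide)) (by decide)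
    · exact iff_of_false (not_mem_edge (a := ((0:ℤ),(1:ℤ))) (b := ((-1:ℤ),(0:ℤ)))
        (by decide)) (by decide)
    · exact iff_of_true (edge_mem.mpr
        (show ((0:ℤ),(0:ℤ)) = ((-1:ℤ),(0:ℤ)) + g ((-1:ℤ),(0:ℤ)) by decide)) (by decide)
    · exact iff_of_false (not_mem_edge (a := ((0:ℤ),(0:ℤ))) (b := ((0:ℤ),(-1:ℤ)))
        (by decide)) (by decide)
  · -- no L-flip
    rintro ⟨l, ⟨hnd, hlen, hedge⟩, halt⟩
    rcases l with _ | ⟨a, l⟩; · simp at hlen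
    rcases l with _ | ⟨b, l⟩; · simp at hlen
    rcases l with _ | ⟨c, l⟩; · simp at hlen
    rcases l with _ | ⟨d, l⟩; · simp at hlen
    rcases l with _ | ⟨x, l⟩
    swap
    · simp at hlen
    have hca : c ≠ a := fun hh => by subst hh; simp at hnd
    have hdb : d ≠ b := fun hh => by subst hh; simp at hnd
    have e0 : s(a,b) ∈ triLattice.edgeSet := hedge _ (by left)
    have e1 : s(b,c) ∈ triLattice.edgeSet := hedge _ (by right; left)
    have e2 : s(c,d) ∈ triLattice.edgeSet := hedge _ (by right; right; left)
    have e3 : s(d,a) ∈ triLattice.edgeSet := hedge _ (by right; right; right; left)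
    have hlen4 : (cycEdges [a,b,c,d]).length = 4 := rfl
    rcases halt with h|h
    · have h0 : s(a,b) ∈ Mset := (h 0 (by rw [hlen4]; norm_num)).mpr (by decide)
      have h2 : s(c,d) ∈ Mset := (h 2 (by rw [hlen4]; norm_num)).mpr (by decide)
      have hb : b = a + g a := edge_mem.mp h0
      have hd : d = c + g c := edge_mem.mp h2
      obtain ⟨i, hi⟩ := step_of_edge e1
      obtain ⟨j, hj⟩ := step_of_edge e3
      exact key4 a c hca i j (by rw [← hb]; exact hi) (by rw [← hd]; exact hj)
    · have h1 : s(b,c) ∈ Mset := (h 1 (by rw [hlen4]; norm_num)).mpr (by decide)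
      have h3 : s(d,a) ∈ Mset := (h 3 (by rw [hlen4]; norm_num)).mpr (by decide)
      have hc : c = b + g b := edge_mem.mp h1
      have ha : a = d + g d := edge_mem.mp h3
      obtain ⟨i, hi⟩ := step_of_edge e2
      obtain ⟨j, hj⟩ := step_of_edge e0
      exact key4 b d hdb i j (by rw [← hc]; exact hi) (by rw [← ha]; exact hj)
  · -- no T-flip
    rintro ⟨l, ⟨φ, rfl⟩, halt⟩
    have hinj : Function.Injective (fun x : V2 => φ x) := fun u v huv => φ.injective huv
    have hmap : ∀ u v : V2, triLattice.Adj u v → s(φ u, φ v) ∈ triLattice.edgeSet :=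
      fun u v hadj => (SimpleGraph.mem_edgeSet triLattice).mpr (φ.map_adj_iff.mpr hadj)
    have e0 : s(φ ((0:ℤ),(0:ℤ)), φ ((1:ℤ),(0:ℤ))) ∈ triLattice.edgeSet :=
      hmap _ _ (adj_mk (by decide) (by decide))
    have e1 : s(φ ((1:ℤ),(0:ℤ)), φ ((2:ℤ),(0:ℤ))) ∈ triLattice.edgeSet :=
      hmap _ _ (adj_mk (by decide) (by decide))
    have e2 : s(φ ((2:ℤ),(0:ℤ)), φ ((2:ℤ),(1:ℤ))) ∈ triLattice.edgeSet :=
      hmap _ _ (adj_mk (by decide) (by decide))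
    have e3 : s(φ ((2:ℤ),(1:ℤ)), φ ((2:ℤ),(2:ℤ))) ∈ triLattice.edgeSet :=
      hmap _ _ (adj_mk (by decide) (by decide))
    have e4 : s(φ ((2:ℤ),(2:ℤ)), φ ((1:ℤ),(1:ℤ))) ∈ triLattice.edgeSet :=
      hmap _ _ (adj_mk (by decide) (by decide))
    have e5 : s(φ ((1:ℤ),(1:ℤ)), φ ((0:ℤ),(0:ℤ))) ∈ triLattice.edgeSet :=
      hmap _ _ (adj_mk (by decide) (by decide))
    have hlen6 : (cycEdges (List.map (fun x => φ x) TBase)).length = 6 := rfl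
    rcases halt with h|h
    · have h0 : s(φ ((0:ℤ),(0:ℤ)), φ ((1:ℤ),(0:ℤ))) ∈ Mset := (h 0 (by rw [hlen6]; norm_num)).mpr (by decide)
      have h2 : s(φ ((2:ℤ),(0:ℤ)), φ ((2:ℤ),(1:ℤ))) ∈ Mset := (h 2 (by rw [hlen6]; norm_num)).mpr (by decide)
      have h4 : s(φ ((2:ℤ),(2:ℤ)), φ ((1:ℤ),(1:ℤ))) ∈ Mset := (h 4 (by rw [hlen6]; norm_num)).mpr (by decide)
      have hb : φ ((1:ℤ),(0:ℤ)) = φ ((0:ℤ),(0:ℤ)) + g (φ ((0:ℤ),(0:ℤ))) := edge_mem.mp h0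
      have hd : φ ((2:ℤ),(1:ℤ)) = φ ((2:ℤ),(0:ℤ)) + g (φ ((2:ℤ),(0:ℤ))) := edge_mem.mp h2
      have hf : φ ((1:ℤ),(1:ℤ)) = φ ((2:ℤ),(2:ℤ)) + g (φ ((2:ℤ),(2:ℤ))) := edge_mem.mp h4
      obtain ⟨i, hi⟩ := step_of_edge e1
      obtain ⟨j, hj⟩ := step_of_edge e3
      obtain ⟨k, hk⟩ := step_of_edge e5
      exact key6 (φ ((0:ℤ),(0:ℤ))) (φ ((2:ℤ),(0:ℤ))) (φ ((2:ℤ),(2:ℤ)))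
        (fun hh => absurd (φ.injective hh) (by decide))
        (fun hh => absurd (φ.injective hh) (by decide))
        (fun hh => absurd (φ.injective hh) (by decide))
        i j k (by rw [← hb]; exact hi) (by rw [← hd]; exact hj) (by rw [← hf]; exact hk)
    · have h1 : s(φ ((1:ℤ),(0:ℤ)), φ ((2:ℤ),(0:ℤ))) ∈ Mset := (h 1 (by rw [hlen6]; norm_num)).mpr (by decide)
      have h3 : s(φ ((2:ℤ),(1:ℤ)), φ ((2:ℤ),(2:ℤ))) ∈ Mset := (h 3 (by rw [hlen6]; norm_num)).mpr (by decide)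
      have h5 : s(φ ((1:ℤ),(1:ℤ)), φ ((0:ℤ),(0:ℤ))) ∈ Mset := (h 5 (by rw [hlen6]; norm_num)).mpr (by decide)
      have hb : φ ((2:ℤ),(0:ℤ)) = φ ((1:ℤ),(0:ℤ)) + g (φ ((1:ℤ),(0:ℤ))) := edge_mem.mp h1
      have hd : φ ((2:ℤ),(2:ℤ)) = φ ((2:ℤ),(1:ℤ)) + g (φ ((2:ℤ),(1:ℤ))) := edge_mem.mp h3
      have hf : φ ((0:ℤ),(0:ℤ)) = φ ((1:ℤ),(1:ℤ)) + g (φ ((1:ℤ),(1:ℤ))) := edge_mem.mp h5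
      obtain ⟨i, hi⟩ := step_of_edge e2
      obtain ⟨j, hj⟩ := step_of_edge e4
      obtain ⟨k, hk⟩ := step_of_edge e0
      exact key6 (φ ((1:ℤ),(0:ℤ))) (φ ((2:ℤ),(1:ℤ))) (φ ((1:ℤ),(1:ℤ)))
        (fun hh => absurd (φ.injective hh) (by decide))
        (fun hh => absurd (φ.injective hh) (by decide))
        (fun hh => absurd (φ.injective hh) (by decide))
        i j k (by rw [← hb]; exact hi) (by rw [← hd]; exact hj) (by rw [← hf]; exact hk)
end

section
/- On the square-octagon lattice, the set M of all bridge edges, M = { {(v,1),(v+(1,0),3)}, {(v,0),(v+(0,1),2)} : v ∈ ℤ² }, is a perfect matching; every octagonal face admits a flip with respect to M, but no square face admits a flip with respect to M. Hence the octagon flip is necessary for ergodicity of perfect matchings on this lattice. -/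
/-- Vertices of the square-octagon `(4,8²)` lattice: one square cell of four vertices
per site of `ℤ²`. -/
abbrev SO : Type := V2 × Fin 4

/-- The square-octagon lattice: in-cell square 4-cycles `(v,0),(v,1),(v,2),(v,3)`
together with the bridge edges `{(v,1),(v+(1,0),3)}` and `{(v,0),(v+(0,1),2)}`. -/
def soLattice : SimpleGraph SO :=
  SimpleGraph.fromRel (fun a b =>
    (b.1 = a.1 ∧ ((a.2, b.2) ∈ ([(0,1), (1,2), (2,3), (3,0)] : List (Fin 4 × Fin 4)))) ∨
    (a.2 = 1 ∧ b.2 = 3 ∧ b.1 = a.1 + (1,0)) ∨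
    (a.2 = 0 ∧ b.2 = 2 ∧ b.1 = a.1 + (0,1)))

/-- The square face at `v`. -/
def sqFace (v : V2) : List SO := [(v,0), (v,1), (v,2), (v,3)]

/-- The octagonal face at `v`. -/
def octFace (v : V2) : List SO :=
  [(v,0), (v,1), (v+(1,0),3), (v+(1,0),0), (v+(1,1),2), (v+(1,1),3),
   (v+(0,1),1), (v+(0,1),2)]

/-- The matching consisting of all bridge edges. -/
def Mbr : Set (Sym2 SO) :=
  {e | ∃ v : V2, e = s((v,1), (v+(1,0),3)) ∨ e = s((v,0), (v+(0,1),2))}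

lemma mem1 (w : V2) : s(((w,1):SO),(w+(1,0),3)) ∈ Mbr := ⟨w, Or.inl rfl⟩
lemma mem2 (w : V2) : s(((w,0):SO),(w+(0,1),2)) ∈ Mbr := ⟨w, Or.inr rfl⟩

lemma sameCell_not_mem (v : V2) (a b : Fin 4) : s(((v,a):SO),(v,b)) ∉ Mbr := by
  rintro ⟨w, h | h⟩ <;> rw [Sym2.eq_iff] at h <;>
    obtain ⟨h1, h2⟩ | ⟨h1, h2⟩ := h <;>
    simp only [Prod.ext_iff, Prod.fst_add, Prod.snd_add] at h1 h2 <;> omega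

lemma cycSq (v : V2) : cycEdges (sqFace v) =
    [s(((v,0):SO),(v,1)), s(((v,1):SO),(v,2)), s(((v,2):SO),(v,3)), s(((v,3):SO),(v,0))] := rfl

lemma cycOct (v : V2) : cycEdges (octFace v) =
    [s(((v,0):SO),(v,1)), s(((v,1):SO),(v+(1,0),3)), s(((v+(1,0),3):SO),(v+(1,0),0)),
     s(((v+(1,0),0):SO),(v+(1,1),2)), s(((v+(1,1),2):SO),(v+(1,1),3)),
     s(((v+(1,1),3):SO),(v+(0,1),1)), s(((v+(0,1),1):SO),(v+(0,1),2)),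
     s(((v+(0,1),2):SO),(v,0))] := rfl

lemma sq_no_flip (v : V2) : ¬ AdmitsFlip Mbr (sqFace v) := by
  rintro (h | h)
  · exact sameCell_not_mem v 0 1 ((h 0 (by norm_num [cycSq])).mpr (by decide))
  · exact sameCell_not_mem v 1 2 ((h 1 (by norm_num [cycSq])).mpr (by decide))

lemma oct_flip (v : V2) : AdmitsFlip Mbr (octFace v) := by
  right
  intro i h
  rw [cycOct] at h
  simp only [List.length] at h
  have e13 : v + ((1:ℤ),(1:ℤ)) = v + (1,0) + (0,1) := by
    rw [add_assoc]; norm_num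
  have e31 : v + ((1:ℤ),(1:ℤ)) = v + (0,1) + (1,0) := by
    rw [add_assoc]; norm_num
  interval_cases i
  · exact iff_of_false (sameCell_not_mem v 0 1) (by decide)
  · exact iff_of_true (mem1 v) (by decide)
  · exact iff_of_false (sameCell_not_mem (v+(1,0)) 3 0) (by decide)
  · refine iff_of_true ?_ (by decide)
    show s(((v+(1,0),0):SO),(v+(1,1),2)) ∈ Mbr
    rw [e13]; exact mem2 _
  · exact iff_of_false (sameCell_not_mem (v+(1,1)) 2 3) (by decide)
  · refine iff_of_true ?_ (by decide)
    show s(((v+(1,1),3):SO),(v+(0,1),1)) ∈ Mbr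
    rw [Sym2.eq_swap, e31]; exact mem1 _
  · exact iff_of_false (sameCell_not_mem (v+(0,1)) 1 2) (by decide)
  · refine iff_of_true ?_ (by decide)
    show s(((v+(0,1),2):SO),(v,0)) ∈ Mbr
    rw [Sym2.eq_swap]; exact mem2 _

lemma sub_add_V2 (a b : V2) : a - b + b = a := sub_add_cancel a b

lemma pm_sub : Mbr ⊆ soLattice.edgeSet := by
  rintro e ⟨w, rfl | rfl⟩ <;> rw [SimpleGraph.mem_edgeSet, soLattice, SimpleGraph.fromRel_adj]
  · exact ⟨fun h => absurd (congrArg Prod.snd h) (by simp),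
      Or.inl (Or.inr (Or.inl ⟨rfl, rfl, rfl⟩))⟩
  · exact ⟨fun h => absurd (congrArg Prod.snd h) (by simp),
      Or.inl (Or.inr (Or.inr ⟨rfl, rfl, rfl⟩))⟩

lemma pm_uniq : ∀ x : SO, ∃! e, e ∈ Mbr ∧ x ∈ e := by
  rintro ⟨v, i⟩
  fin_cases i
  · refine ⟨s(((v,0):SO),(v+(0,1),2)), ⟨mem2 v, Sym2.mem_mk_left _ _⟩, ?_⟩
    rintro e ⟨⟨w, rfl | rfl⟩, hv⟩ <;> rw [Sym2.mem_iff] at hv <;> rcases hv with h | h <;>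
      simp at h
    · obtain rfl := h; rfl
  · refine ⟨s(((v,1):SO),(v+(1,0),3)), ⟨mem1 v, Sym2.mem_mk_left _ _⟩, ?_⟩
    rintro e ⟨⟨w, rfl | rfl⟩, hv⟩ <;> rw [Sym2.mem_iff] at hv <;> rcases hv with h | h <;>
      simp at h
    · obtain rfl := h; rfl
  · refine ⟨s(((v-(0,1),0):SO),(v,2)), ⟨⟨v-(0,1), Or.inr (by rw [sub_add_V2])⟩,
      Sym2.mem_mk_right _ _⟩, ?_⟩
    rintro e ⟨⟨w, rfl | rfl⟩, hv⟩ <;> rw [Sym2.mem_iff] at hv <;> rcases hv with h | h <;>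
      simp at h
    · obtain rfl : w = v - (0,1) := eq_sub_of_add_eq h.symm
      rw [sub_add_V2]
  · refine ⟨s(((v-(1,0),1):SO),(v,3)), ⟨⟨v-(1,0), Or.inl (by rw [sub_add_V2])⟩,
      Sym2.mem_mk_right _ _⟩, ?_⟩
    rintro e ⟨⟨w, rfl | rfl⟩, hv⟩ <;> rw [Sym2.mem_iff] at hv <;> rcases hv with h | h <;>
      simp at h
    · obtain rfl : w = v - (1,0) := eq_sub_of_add_eq h.symm
      rw [sub_add_V2]

/-- The set of all bridge edges is a perfect matching of the
square-octagon lattice; every octagonal face admits a flip with respect to it,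
but no square face does. Hence the octagon flip is necessary for ergodicity. -/
theorem square_octagon_octagon_flip_necessary :
    IsPerfectMatching soLattice Mbr ∧
    (∀ v : V2, AdmitsFlip Mbr (octFace v)) ∧
    (∀ v : V2, ¬ AdmitsFlip Mbr (sqFace v)) :=
  ⟨⟨pm_sub, pm_uniq⟩, oct_flip, sq_no_flip⟩
end

section
/- There exists a perfect matching of the truncated trihexagonal ((4,6,12)) lattice with respect to which some square face admits a flip but no hexagonal face admits a flip and no dodecagonal face admits a flip. Hence the square flip is necessary for ergodicity of perfect matchings on this lattice. -/
/-- Vertices of the truncated trihexagonal `(4,6,12)` lattice: one dodecagon of twelve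
vertices per site of the triangular Bravais lattice `ℤ²`. -/
abbrev TT : Type := V2 × Fin 12

/-- The truncated trihexagonal lattice: in each cell the dodecagon 12-cycle
`(v,0), …, (v,11)`, and pairs of bridge edges joining each dodecagon to each of its six
neighbouring dodecagons (in directions `±(1,0)`, `±(0,1)`, `±(1,1)`), each pair forming
a square face; the remaining faces are hexagons. -/
def ttLattice : SimpleGraph TT :=
  SimpleGraph.fromRel (fun a b =>
    (b.1 = a.1 ∧ b.2 = a.2 + 1) ∨
    (a.2 = 1 ∧ b.2 = 6 ∧ b.1 = a.1 + (1,0)) ∨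
    (a.2 = 0 ∧ b.2 = 7 ∧ b.1 = a.1 + (1,0)) ∨
    (a.2 = 3 ∧ b.2 = 8 ∧ b.1 = a.1 + (1,1)) ∨
    (a.2 = 2 ∧ b.2 = 9 ∧ b.1 = a.1 + (1,1)) ∨
    (a.2 = 5 ∧ b.2 = 10 ∧ b.1 = a.1 + (0,1)) ∨
    (a.2 = 4 ∧ b.2 = 11 ∧ b.1 = a.1 + (0,1)))

/-- The dodecagonal face at `v`. -/
def dodecFace (v : V2) : List TT := (List.finRange 12).map (fun i => (v, i))

/-- The square face between the dodecagons at `v` and `v + (1,0)`. -/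
def sqFaceA (v : V2) : List TT := [(v,0), (v,1), (v+(1,0),6), (v+(1,0),7)]

/-- The square face between the dodecagons at `v` and `v + (1,1)`. -/
def sqFaceB (v : V2) : List TT := [(v,2), (v,3), (v+(1,1),8), (v+(1,1),9)]

/-- The square face between the dodecagons at `v` and `v + (0,1)`. -/
def sqFaceC (v : V2) : List TT := [(v,4), (v,5), (v+(0,1),10), (v+(0,1),11)]

/-- The hexagonal face between the dodecagons at `v`, `v + (1,0)` and `v + (1,1)`. -/
def hexUp (v : V2) : List TT :=
  [(v,1), (v,2), (v+(1,1),9), (v+(1,1),10), (v+(1,0),5), (v+(1,0),6)]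

/-- The hexagonal face between the dodecagons at `v`, `v + (1,1)` and `v + (0,1)`. -/
def hexDown (v : V2) : List TT :=
  [(v,3), (v,4), (v+(0,1),11), (v+(0,1),0), (v+(1,1),7), (v+(1,1),8)]

/-- Partner function of our matching. -/
def pf : TT → TT
  | (v, 0) => (v + (1,0), 7)
  | (v, 1) => (v + (1,0), 6)
  | (v, 2) => (v, 3)
  | (v, 3) => (v, 2)
  | (v, 4) => (v, 5)
  | (v, 5) => (v, 4)
  | (v, 6) => (v - (1,0), 1)
  | (v, 7) => (v - (1,0), 0)
  | (v, 8) => (v, 9)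
  | (v, 9) => (v, 8)
  | (v, 10) => (v, 11)
  | (v, 11) => (v, 10)

def MM : Set (Sym2 TT) := {e | ∃ x, e = s(x, pf x)}

theorem pf_invol (x : TT) : pf (pf x) = x := by
  obtain ⟨v, i⟩ := x
  fin_cases i <;> simp [pf]

theorem mem_MM {a b : TT} : s(a, b) ∈ MM ↔ pf a = b := by
  constructor
  · rintro ⟨x, hx⟩
    rw [Sym2.eq_iff] at hx
    rcases hx with ⟨rfl, rfl⟩ | ⟨h1, h2⟩
    · rfl
    · rw [h1, pf_invol, h2]
  · rintro rfl; exact ⟨a, rfl⟩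

theorem pf_adj (x : TT) : ttLattice.Adj x (pf x) := by
  obtain ⟨v, i⟩ := x
  fin_cases i <;>
    simp only [ttLattice, SimpleGraph.fromRel_adj, pf] <;>
    exact ⟨by simp [Prod.ext_iff], by simp [Prod.ext_iff, sub_add_cancel]⟩

theorem MM_perfect : IsPerfectMatching ttLattice MM := by
  constructor
  · rintro e ⟨x, rfl⟩
    rw [SimpleGraph.mem_edgeSet]
    exact pf_adj x
  · intro v
    refine ⟨s(v, pf v), ⟨⟨v, rfl⟩, Sym2.mem_mk_left _ _⟩, ?_⟩
    rintro e ⟨⟨x, rfl⟩, hv⟩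
    rcases Sym2.mem_iff.mp hv with rfl | h
    · rfl
    · subst h
      rw [pf_invol]
      exact Sym2.eq_swap

theorem cycA (v : V2) : cycEdges (sqFaceA v) =
    [s((v,0),(v,1)), s((v,1),(v+(1,0),6)),
     s((v+(1,0),6),(v+(1,0),7)), s((v+(1,0),7),(v,0))] := rfl

theorem cycHU (v : V2) : (cycEdges (hexUp v)).length = 6 := rfl

theorem cycHD (v : V2) : (cycEdges (hexDown v)).length = 6 := rfl

theorem cycD (v : V2) : (cycEdges (dodecFace v)).length = 12 := rfl

/-- There is a perfect matching of the `(4,6,12)` lattice with respect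
to which some square face admits a flip but no hexagonal and no dodecagonal face does.
Hence the square flip is necessary for ergodicity. -/
theorem trunc_trihex_square_flip_necessary :
    ∃ M : Set (Sym2 TT), IsPerfectMatching ttLattice M ∧
      (∃ v : V2, AdmitsFlip M (sqFaceA v) ∨ AdmitsFlip M (sqFaceB v) ∨
        AdmitsFlip M (sqFaceC v)) ∧
      (∀ v : V2, ¬ AdmitsFlip M (hexUp v) ∧ ¬ AdmitsFlip M (hexDown v)) ∧
      (∀ v : V2, ¬ AdmitsFlip M (dodecFace v)) := by
  refine ⟨MM, MM_perfect, ⟨(0,0), Or.inl ?_⟩, ?_, ?_⟩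
  · right
    intro i h
    have h4 : i < 4 := by simpa [cycA] using h
    interval_cases i
    · exact iff_of_false
        (fun hm => by simpa [pf, Prod.ext_iff] using mem_MM.mp hm) (by decide)
    · exact iff_of_true ⟨(((0:ℤ),(0:ℤ)), 1), rfl⟩ (by decide)
    · exact iff_of_false
        (fun hm => by simpa [pf, Prod.ext_iff] using mem_MM.mp hm) (by decide)
    · exact iff_of_true ⟨(((0:ℤ),(0:ℤ)) + ((1:ℤ),(0:ℤ)), 7), rfl⟩ (by decide)
  · intro v
    constructor
    · rintro (h | h)
      · have h0 : pf (v, 1) = (v, 2) :=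
          mem_MM.mp ((h 0 (by rw [cycHU]; norm_num)).mpr (by decide))
        simpa [pf, Prod.ext_iff] using h0
      · have h1 : pf (v, 2) = (v + (1,1), 9) :=
          mem_MM.mp ((h 1 (by rw [cycHU]; norm_num)).mpr (by decide))
        simpa [pf, Prod.ext_iff] using h1
    · rintro (h | h)
      · have h0 : pf (v, 3) = (v, 4) :=
          mem_MM.mp ((h 0 (by rw [cycHD]; norm_num)).mpr (by decide))
        simpa [pf, Prod.ext_iff] using h0
      · have h1 : pf (v, 4) = (v + (0,1), 11) :=
          mem_MM.mp ((h 1 (by rw [cycHD]; norm_num)).mpr (by decide))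
        simpa [pf, Prod.ext_iff] using h1
  · intro v
    rintro (h | h)
    · have h0 : pf (v, 0) = (v, 1) :=
        mem_MM.mp ((h 0 (by rw [cycD]; norm_num)).mpr (by decide))
      simpa [pf, Prod.ext_iff] using h0
    · have h1 : pf (v, 1) = (v, 2) :=
        mem_MM.mp ((h 1 (by rw [cycD]; norm_num)).mpr (by decide))
      simpa [pf, Prod.ext_iff] using h1
end

section
/- There exists a perfect matching M of the truncated trihexagonal ((4,6,12)) lattice such that some dodecagonal face admits a flip with respect to M, and such that for every matching M′ obtainable from M by a finite sequence of flips along square faces only, no hexagonal face admits a flip with respect to M′. Hence the dodecagon flip is necessary for ergodicity of perfect matchings on this lattice. -/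
/-- One flip along a square face. -/
def SqStep (M M' : Set (Sym2 TT)) : Prop :=
  ∃ v : V2, FlipAlong M M' (sqFaceA v) ∨ FlipAlong M M' (sqFaceB v) ∨
    FlipAlong M M' (sqFaceC v)


section Aux

def eps (v : V2) : ℕ := if (3:ℤ) ∣ (v.1 + v.2) then 0 else 1

lemma eps_le_one (v : V2) : eps v ≤ 1 := by unfold eps; split <;> simp
lemma eps_eq_zero (v : V2) : eps v = 0 ↔ (3:ℤ) ∣ (v.1 + v.2) := by unfold eps; split <;> simp [*]
lemma eps_eq_one (v : V2) : eps v = 1 ↔ ¬ (3:ℤ) ∣ (v.1 + v.2) := by unfold eps; split <;> simp [*]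

def Mtt : Set (Sym2 TT) := {e | ∃ (v : V2) (i : Fin 12), i.val % 2 = eps v ∧ e = s((v,i),(v,i+1))}

lemma val_add_one (k : Fin 12) : ((k+1 : Fin 12)).val = (k.val + 1) % 12 := by
  rw [Fin.val_add]; rfl

lemma val_sub_one (i : Fin 12) : ((i - 1 : Fin 12)).val = (i.val + 11) % 12 := by
  rw [Fin.sub_def]; simp; omega

lemma memMtt (v : V2) (i : Fin 12) : s((v,i),(v,i+1)) ∈ Mtt ↔ i.val % 2 = eps v := by
  constructor
  · rintro ⟨w, k, hk, he⟩
    rcases Sym2.eq_iff.mp he with ⟨h1, h2⟩ | ⟨h1, h2⟩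
    · rw [Prod.mk.injEq] at h1; obtain ⟨rfl, rfl⟩ := h1; exact hk
    · exfalso
      rw [Prod.mk.injEq] at h1 h2
      obtain ⟨rfl, rfl⟩ := h1
      have h3 := congrArg Fin.val h2.2
      rw [val_add_one, val_add_one] at h3
      have := k.isLt
      omega
  · intro h; exact ⟨v, i, h, rfl⟩

lemma not_bridge (a b : TT) (h : a.1 ≠ b.1) : s(a,b) ∉ Mtt := by
  rintro ⟨w, k, hk, he⟩
  rcases Sym2.eq_iff.mp he with ⟨h1, h2⟩ | ⟨h1, h2⟩ <;>
    exact h (by rw [congrArg Prod.fst h1, congrArg Prod.fst h2])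

lemma ne_shift (v : V2) (a b : ℤ) (hab : ¬(a = 0 ∧ b = 0)) : v ≠ v + (a,b) := by
  intro hc
  have h1 := congrArg Prod.fst hc
  have h2 := congrArg Prod.snd hc
  simp [Prod.fst_add, Prod.snd_add] at h1 h2
  exact hab ⟨h1, h2⟩

lemma Mtt_pm : IsPerfectMatching ttLattice Mtt := by
  constructor
  · rintro e ⟨v, i, hk, rfl⟩
    rw [SimpleGraph.mem_edgeSet, ttLattice, SimpleGraph.fromRel_adj]
    refine ⟨?_, Or.inl (Or.inl ⟨rfl, rfl⟩)⟩
    intro hc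
    rw [Prod.mk.injEq] at hc
    have h3 := congrArg Fin.val hc.2
    rw [val_add_one] at h3
    have := i.isLt
    omega
  · rintro ⟨v, i⟩
    by_cases hi : i.val % 2 = eps v
    · refine ⟨s((v,i),(v,i+1)), ⟨(memMtt v i).mpr hi, Sym2.mem_mk_left _ _⟩, ?_⟩
      rintro e ⟨⟨w, k, hk, rfl⟩, hx⟩
      rcases Sym2.mem_iff.mp hx with h | h
      · rw [Prod.mk.injEq] at h; obtain ⟨rfl, rfl⟩ := h; rfl
      · exfalso
        rw [Prod.mk.injEq] at h
        obtain ⟨rfl, hik⟩ := h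
        rw [hik, val_add_one] at hi
        have := k.isLt
        have := eps_le_one v
        omega
    · have hmem : ((i - 1 : Fin 12)).val % 2 = eps v := by
        rw [val_sub_one]
        have := i.isLt
        have := eps_le_one v
        omega
      refine ⟨s((v,i-1),(v,(i-1)+1)), ⟨(memMtt v (i-1)).mpr hmem, ?_⟩, ?_⟩
      · rw [sub_add_cancel]; exact Sym2.mem_mk_right _ _
      · rintro e ⟨⟨w, k, hk, rfl⟩, hx⟩
        rcases Sym2.mem_iff.mp hx with h | h
        · rw [Prod.mk.injEq] at h; obtain ⟨rfl, rfl⟩ := h; exact absurd hk hi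
        · rw [Prod.mk.injEq] at h
          obtain ⟨rfl, rfl⟩ := h
          rw [add_sub_cancel_right]

lemma no_sq (M' : Set (Sym2 TT)) : ¬ SqStep Mtt M' := by
  rintro ⟨v, hA | hB | hC⟩
  · obtain ⟨ha, -⟩ := hA
    rw [show cycEdges (sqFaceA v) =
      [s(((v:V2),(0:Fin 12)),(v,1)), s((v,1),(v+(1,0),6)), s((v+(1,0),6),(v+(1,0),7)),
       s((v+(1,0),7),(v,0))] from rfl] at ha
    rcases ha with h | h
    · have h0 := (memMtt v 0).mp ((h 0 (by norm_num)).mpr (by decide))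
      have h2 := (memMtt (v+(1,0)) 6).mp ((h 2 (by norm_num)).mpr (by decide))
      have d0 := (eps_eq_zero v).mp h0.symm
      have d2 := (eps_eq_zero (v+(1,0))).mp h2.symm
      simp [Prod.fst_add, Prod.snd_add] at d2
      omega
    · exact not_bridge _ _ (ne_shift v 1 0 (by norm_num)) ((h 1 (by norm_num)).mpr (by decide))
  · obtain ⟨ha, -⟩ := hB
    rw [show cycEdges (sqFaceB v) =
      [s(((v:V2),(2:Fin 12)),(v,3)), s((v,3),(v+(1,1),8)), s((v+(1,1),8),(v+(1,1),9)),
       s((v+(1,1),9),(v,2))] from rfl] at ha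
    rcases ha with h | h
    · have h0 := (memMtt v 2).mp ((h 0 (by norm_num)).mpr (by decide))
      have h2 := (memMtt (v+(1,1)) 8).mp ((h 2 (by norm_num)).mpr (by decide))
      have d0 := (eps_eq_zero v).mp h0.symm
      have d2 := (eps_eq_zero (v+(1,1))).mp h2.symm
      simp [Prod.fst_add, Prod.snd_add] at d2
      omega
    · exact not_bridge _ _ (ne_shift v 1 1 (by norm_num)) ((h 1 (by norm_num)).mpr (by decide))
  · obtain ⟨ha, -⟩ := hC
    rw [show cycEdges (sqFaceC v) =
      [s(((v:V2),(4:Fin 12)),(v,5)), s((v,5),(v+(0,1),10)), s((v+(0,1),10),(v+(0,1),11)),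
       s((v+(0,1),11),(v,4))] from rfl] at ha
    rcases ha with h | h
    · have h0 := (memMtt v 4).mp ((h 0 (by norm_num)).mpr (by decide))
      have h2 := (memMtt (v+(0,1)) 10).mp ((h 2 (by norm_num)).mpr (by decide))
      have d0 := (eps_eq_zero v).mp h0.symm
      have d2 := (eps_eq_zero (v+(0,1))).mp h2.symm
      simp [Prod.fst_add, Prod.snd_add] at d2
      omega
    · exact not_bridge _ _ (ne_shift v 0 1 (by norm_num)) ((h 1 (by norm_num)).mpr (by decide))

lemma no_hexUp (v : V2) : ¬ AdmitsFlip Mtt (hexUp v) := by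
  intro ha
  rw [AdmitsFlip, show cycEdges (hexUp v) =
    [s(((v:V2),(1:Fin 12)),(v,2)), s((v,2),(v+(1,1),9)), s((v+(1,1),9),(v+(1,1),10)),
     s((v+(1,1),10),(v+(1,0),5)), s((v+(1,0),5),(v+(1,0),6)), s((v+(1,0),6),(v,1))] from rfl] at ha
  rcases ha with h | h
  · have h0 := (memMtt v 1).mp ((h 0 (by norm_num)).mpr (by decide))
    have h2 := (memMtt (v+(1,1)) 9).mp ((h 2 (by norm_num)).mpr (by decide))
    have h4 := (memMtt (v+(1,0)) 5).mp ((h 4 (by norm_num)).mpr (by decide))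
    have d0 := (eps_eq_one v).mp h0.symm
    have d2 := (eps_eq_one (v+(1,1))).mp h2.symm
    have d4 := (eps_eq_one (v+(1,0))).mp h4.symm
    simp [Prod.fst_add, Prod.snd_add] at d2 d4
    omega
  · exact not_bridge _ _ (ne_shift v 1 1 (by norm_num)) ((h 1 (by norm_num)).mpr (by decide))

lemma no_hexDown (v : V2) : ¬ AdmitsFlip Mtt (hexDown v) := by
  intro ha
  rw [AdmitsFlip, show cycEdges (hexDown v) =
    [s(((v:V2),(3:Fin 12)),(v,4)), s((v,4),(v+(0,1),11)), s((v+(0,1),11),(v+(0,1),0)),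
     s((v+(0,1),0),(v+(1,1),7)), s((v+(1,1),7),(v+(1,1),8)), s((v+(1,1),8),(v,3))] from rfl] at ha
  rcases ha with h | h
  · have h0 := (memMtt v 3).mp ((h 0 (by norm_num)).mpr (by decide))
    have h2 := (memMtt (v+(0,1)) 11).mp ((h 2 (by norm_num)).mpr (by decide))
    have h4 := (memMtt (v+(1,1)) 7).mp ((h 4 (by norm_num)).mpr (by decide))
    have d0 := (eps_eq_one v).mp h0.symm
    have d2 := (eps_eq_one (v+(0,1))).mp h2.symm
    have d4 := (eps_eq_one (v+(1,1))).mp h4.symm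
    simp [Prod.fst_add, Prod.snd_add] at d2 d4
    omega
  · exact not_bridge _ _ (ne_shift v 0 1 (by norm_num)) ((h 1 (by norm_num)).mpr (by decide))

lemma dodec_flip : AdmitsFlip Mtt (dodecFace (0,0)) := by
  have heps : eps (0,0) = 0 := by norm_num [eps]
  rw [AdmitsFlip, show cycEdges (dodecFace ((0,0) : V2)) =
    [s((((0,0):V2),(0:Fin 12)),((0,0),1)), s(((0,0),1),((0,0),2)), s(((0,0),2),((0,0),3)),
     s(((0,0),3),((0,0),4)), s(((0,0),4),((0,0),5)), s(((0,0),5),((0,0),6)),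
     s(((0,0),6),((0,0),7)), s(((0,0),7),((0,0),8)), s(((0,0),8),((0,0),9)),
     s(((0,0),9),((0,0),10)), s(((0,0),10),((0,0),11)), s(((0,0),11),((0,0),0))] from rfl]
  left
  intro i h
  have h12 : i < 12 := by simpa using h
  interval_cases i <;>
    first
      | exact iff_of_true ((memMtt (0,0) _).mpr (by rw [heps]; decide)) (by decide)
      | exact iff_of_false
          (fun hm => absurd ((memMtt (0,0) _).mp hm) (by rw [heps]; decide)) (by decide)

end Aux

/-- There is a perfect matching `M` of the `(4,6,12)` lattice such that
some dodecagonal face admits a flip with respect to `M`, while for every matching `M'`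
obtainable from `M` by a finite sequence of square-face flips no hexagonal face admits a
flip with respect to `M'`. Hence the dodecagon flip is necessary for ergodicity. -/
theorem trunc_trihex_dodecagon_flip_necessary :
    ∃ M : Set (Sym2 TT), IsPerfectMatching ttLattice M ∧
      (∃ v : V2, AdmitsFlip M (dodecFace v)) ∧
      (∀ M' : Set (Sym2 TT), Relation.ReflTransGen SqStep M M' →
        ∀ v : V2, ¬ AdmitsFlip M' (hexUp v) ∧ ¬ AdmitsFlip M' (hexDown v)) := by
  refine ⟨Mtt, Mtt_pm, ⟨(0,0), dodec_flip⟩, ?_⟩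
  intro M' hM' v
  have hM : M' = Mtt := by
    rcases (Relation.ReflTransGen.cases_head hM') with h | ⟨c, hc, -⟩
    · exact h.symm
    · exact absurd hc (no_sq c)
  rw [hM]
  exact ⟨no_hexUp v, no_hexDown v⟩
end

section
/- There exists a perfect matching of the ruby ((3,4,6,4)) lattice with respect to which some hexagonal face admits a flip, but no square face admits a flip and no diamond 6-cycle (the boundary cycle of a square face together with the two triangles attached to a pair of opposite edges of that square) admits a flip. Hence the hexagon flip is necessary for ergodicity of perfect matchings on this lattice. -/
/-- Vertices of the ruby `(3,4,6,4)` lattice: one hexagon of six vertices per site of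
the triangular Bravais lattice `ℤ²`. -/
abbrev RB : Type := V2 × Fin 6

/-- The six neighbour directions of the triangular Bravais lattice, indexed so that
`rdir (i+3) = -(rdir i)` and `rdir (i+1) = rdir i - rdir (i-1)`. -/
def rdir : Fin 6 → V2 := ![(1,0), (1,1), (0,1), (-1,0), (-1,-1), (0,-1)]

/-- The ruby lattice: in each cell the hexagon 6-cycle `(v,0), …, (v,5)`, and bridge
edges `{(v,i), (v + rdir i, i+4)}`; each hexagon edge borders a square face joining it by
two bridge edges to an edge of the neighbouring hexagon, and the remaining faces are
triangles (all of whose edges are bridge edges). -/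
def rubyLattice : SimpleGraph RB :=
  SimpleGraph.fromRel (fun a b =>
    (b.1 = a.1 ∧ b.2 = a.2 + 1) ∨
    (b.1 = a.1 + rdir a.2 ∧ b.2 = a.2 + 4))

/-- The hexagonal face at `v`. -/
def rHex (v : V2) : List RB := (List.finRange 6).map (fun i => (v, i))

/-- The square face attached to the hexagon edge `(v,i)–(v,i+1)`. -/
def rSquare (v : V2) (i : Fin 6) : List RB :=
  [(v,i), (v,i+1), (v + rdir i, i+3), (v + rdir i, i+4)]

/-- The diamond 6-cycle: the boundary of the square face at `(v,i)` together with the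
two triangles attached to its pair of opposite bridge edges. -/
def rDiamond (v : V2) (i : Fin 6) : List RB :=
  [(v,i), (v,i+1), (v + rdir (i+1), i+5), (v + rdir i, i+3), (v + rdir i, i+4),
   (v + rdir (i-1), i+2)]

def M0 : Set (Sym2 RB) :=
  {e | ∃ v : V2, e = s((v,0),(v,1)) ∨ e = s((v,2),(v,3)) ∨ e = s((v,4),(v,5))}

lemma memM_iff (w₁ w₂ : V2) (a b : Fin 6) :
    s((w₁,a),(w₂,b)) ∈ M0 ↔ w₁ = w₂ ∧
      ((a=0∧b=1)∨(a=1∧b=0)∨(a=2∧b=3)∨(a=3∧b=2)∨(a=4∧b=5)∨(a=5∧b=4)) := by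
  constructor
  · rintro ⟨v, h|h|h⟩ <;>
      simp only [Sym2.eq_iff, Prod.mk.injEq] at h <;>
      rcases h with ⟨⟨h1,h2⟩,⟨h3,h4⟩⟩|⟨⟨h1,h2⟩,⟨h3,h4⟩⟩ <;> subst h1 <;> subst h3 <;>
      simp [h2, h4]
  · rintro ⟨rfl, h⟩
    refine ⟨w₁, ?_⟩
    rcases h with ⟨rfl,rfl⟩|⟨rfl,rfl⟩|⟨rfl,rfl⟩|⟨rfl,rfl⟩|⟨rfl,rfl⟩|⟨rfl,rfl⟩ <;>
      simp [Sym2.eq_iff]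

lemma M0_cell {w₁ w₂ : V2} {a b : Fin 6} (h : s((w₁,a),(w₂,b)) ∈ M0) : w₁ = w₂ :=
  ((memM_iff _ _ _ _).1 h).1

lemma M0_sub : M0 ⊆ rubyLattice.edgeSet := by
  rintro e ⟨v, rfl|rfl|rfl⟩ <;>
    simp [rubyLattice, SimpleGraph.mem_edgeSet, SimpleGraph.fromRel_adj, Prod.ext_iff]

lemma M0_pm : ∀ v : RB, ∃! e, e ∈ M0 ∧ v ∈ e := by
  rintro ⟨w, j⟩
  fin_cases j
  · refine ⟨s((w,0),(w,1)), ⟨⟨w, Or.inl rfl⟩, by simp⟩, ?_⟩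
    rintro e ⟨⟨u, rfl|rfl|rfl⟩, hm⟩ <;>
      simp only [Sym2.mem_iff, Prod.mk.injEq] at hm <;>
      rcases hm with ⟨rfl, h⟩|⟨rfl, h⟩ <;> simp_all
  · refine ⟨s((w,0),(w,1)), ⟨⟨w, Or.inl rfl⟩, by simp⟩, ?_⟩
    rintro e ⟨⟨u, rfl|rfl|rfl⟩, hm⟩ <;>
      simp only [Sym2.mem_iff, Prod.mk.injEq] at hm <;>
      rcases hm with ⟨rfl, h⟩|⟨rfl, h⟩ <;> simp_all
  · refine ⟨s((w,2),(w,3)), ⟨⟨w, Or.inr (Or.inl rfl)⟩, by simp⟩, ?_⟩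
    rintro e ⟨⟨u, rfl|rfl|rfl⟩, hm⟩ <;>
      simp only [Sym2.mem_iff, Prod.mk.injEq] at hm <;>
      rcases hm with ⟨rfl, h⟩|⟨rfl, h⟩ <;> simp_all
  · refine ⟨s((w,2),(w,3)), ⟨⟨w, Or.inr (Or.inl rfl)⟩, by simp⟩, ?_⟩
    rintro e ⟨⟨u, rfl|rfl|rfl⟩, hm⟩ <;>
      simp only [Sym2.mem_iff, Prod.mk.injEq] at hm <;>
      rcases hm with ⟨rfl, h⟩|⟨rfl, h⟩ <;> simp_all
  · refine ⟨s((w,4),(w,5)), ⟨⟨w, Or.inr (Or.inr rfl)⟩, by simp⟩, ?_⟩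
    rintro e ⟨⟨u, rfl|rfl|rfl⟩, hm⟩ <;>
      simp only [Sym2.mem_iff, Prod.mk.injEq] at hm <;>
      rcases hm with ⟨rfl, h⟩|⟨rfl, h⟩ <;> simp_all
  · refine ⟨s((w,4),(w,5)), ⟨⟨w, Or.inr (Or.inr rfl)⟩, by simp⟩, ?_⟩
    rintro e ⟨⟨u, rfl|rfl|rfl⟩, hm⟩ <;>
      simp only [Sym2.mem_iff, Prod.mk.injEq] at hm <;>
      rcases hm with ⟨rfl, h⟩|⟨rfl, h⟩ <;> simp_all


lemma hex_flip (v : V2) : Alternates M0 (cycEdges (rHex v)) := by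
  left
  show ∀ (i : ℕ) (h : i < ([s((v,0),(v,1)),s((v,1),(v,2)),s((v,2),(v,3)),
      s((v,3),(v,4)),s((v,4),(v,5)),s((v,5),(v,0))] : List (Sym2 RB)).length),
      ([s((v,0),(v,1)),s((v,1),(v,2)),s((v,2),(v,3)),
      s((v,3),(v,4)),s((v,4),(v,5)),s((v,5),(v,0))] : List (Sym2 RB)).get ⟨i, h⟩ ∈ M0 ↔ Even i
  intro i h
  simp only [List.length] at h
  interval_cases i <;> simp [List.get, memM_iff] <;> decide

lemma square_noflip (v : V2) (i : Fin 6) : ¬ Alternates M0 (cycEdges (rSquare v i)) := by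
  rintro (h|h)
  · have h0 : s((v,i),(v,i+1)) ∈ M0 := (h 0 (by show (0:ℕ) < 4; norm_num)).2 (by decide)
    have h2 : s((v + rdir i, i+3),(v + rdir i, i+4)) ∈ M0 := (h 2 (by show (2:ℕ) < 4; norm_num)).2 (by decide)
    rw [memM_iff] at h0 h2
    obtain ⟨-, h0⟩ := h0
    obtain ⟨-, h2⟩ := h2
    revert h0 h2
    fin_cases i <;> decide
  · have h1 : s((v,i+1),(v + rdir i, i+3)) ∈ M0 := (h 1 (by show (1:ℕ) < 4; norm_num)).2 (by decide)
    have hv := M0_cell h1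
    have hz : rdir i = 0 := by
      have := congrArg (fun x => x - v) hv
      simpa using this.symm
    revert hz
    fin_cases i <;> decide

lemma diamond_noflip (v : V2) (i : Fin 6) : ¬ Alternates M0 (cycEdges (rDiamond v i)) := by
  rintro (h|h)
  · have h2 : s((v + rdir (i+1), i+5),(v + rdir i, i+3)) ∈ M0 := (h 2 (by show (2:ℕ) < 6; norm_num)).2 (by decide)
    have hv := M0_cell h2
    have hz : rdir (i+1) = rdir i := by
      have := congrArg (fun x => x - v) hv
      simpa using this
    revert hz
    fin_cases i <;> decide
  · have h1 : s((v,i+1),(v + rdir (i+1), i+5)) ∈ M0 := (h 1 (by show (1:ℕ) < 6; norm_num)).2 (by decide)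
    have hv := M0_cell h1
    have hz : rdir (i+1) = 0 := by
      have := congrArg (fun x => x - v) hv
      simpa using this.symm
    revert hz
    fin_cases i <;> decide

/-- There is a perfect matching of the ruby lattice with respect to
which some hexagonal face admits a flip, but no square face and no diamond 6-cycle does.
Hence the hexagon flip is necessary for ergodicity. -/
theorem ruby_hexagon_flip_necessary :
    ∃ M : Set (Sym2 RB), IsPerfectMatching rubyLattice M ∧
      (∃ v : V2, AdmitsFlip M (rHex v)) ∧
      (∀ (v : V2) (i : Fin 6), ¬ AdmitsFlip M (rSquare v i)) ∧
      (∀ (v : V2) (i : Fin 6), ¬ AdmitsFlip M (rDiamond v i)) :=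
  ⟨M0, ⟨M0_sub, M0_pm⟩, ⟨0, hex_flip 0⟩, square_noflip, diamond_noflip⟩
end

section
/- Let q_{L0}, q_{L1}, q_{L2}, q_{B1} be nonzero complex numbers and set P = q_{L0}·q_{L1}·q_{L2}. Then the consistency equations q_{L1}·q_{L0}·q_{B1}⁻¹·q_{L2}·q_{L1} = P⁻¹ and q_{L0}·q_{L2}·q_{B1} = P⁻¹ hold simultaneously if and only if P⁴ = 1 and q_{B1} = q_{L1}·P²; in particular, in that case q_{B1} = q_{L1} or q_{B1} = −q_{L1}, and P ∈ {1, −1, i, −i}. -/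
/-- For nonzero complex deformation parameters with
`P = q_{L0} q_{L1} q_{L2}`, the cocycle consistency equations
`q_{L1} q_{L0} q_{B1}⁻¹ q_{L2} q_{L1} = P⁻¹` and `q_{L0} q_{L2} q_{B1} = P⁻¹` hold
simultaneously iff `P⁴ = 1` and `q_{B1} = q_{L1} P²`; in particular, in that case
`q_{B1} = ± q_{L1}` and `P ∈ {1, -1, i, -i}`. -/
theorem qdeformed_consistency (qL0 qL1 qL2 qB1 : ℂ)
    (h0 : qL0 ≠ 0) (h1 : qL1 ≠ 0) (h2 : qL2 ≠ 0) (hB : qB1 ≠ 0)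
    (P : ℂ) (hP : P = qL0 * qL1 * qL2) :
    ((qL1 * qL0 * qB1⁻¹ * qL2 * qL1 = P⁻¹ ∧ qL0 * qL2 * qB1 = P⁻¹) ↔
      (P ^ 4 = 1 ∧ qB1 = qL1 * P ^ 2)) ∧
    ((qL1 * qL0 * qB1⁻¹ * qL2 * qL1 = P⁻¹ ∧ qL0 * qL2 * qB1 = P⁻¹) →
      (qB1 = qL1 ∨ qB1 = -qL1) ∧
        P ∈ ({1, -1, Complex.I, -Complex.I} : Set ℂ)) := by
  have hP0 : P ≠ 0 := by
    rw [hP]; exact mul_ne_zero (mul_ne_zero h0 h1) h2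
  have key : (qL1 * qL0 * qB1⁻¹ * qL2 * qL1 = P⁻¹ ∧ qL0 * qL2 * qB1 = P⁻¹) ↔
      (P ^ 4 = 1 ∧ qB1 = qL1 * P ^ 2) := by
    constructor
    · rintro ⟨e1, e2⟩
      field_simp at e1 e2
      have hb : qB1 = qL1 * P ^ 2 := by
        linear_combination -e1 - qL1 * P * hP
      exact ⟨by linear_combination e2 - qL0 * qL2 * P * hb + P ^ 3 * hP, hb⟩
    · rintro ⟨h4, hb⟩
      subst hb
      constructor
      · field_simp
        linear_combination -hP
      · field_simp
        linear_combination h4 - P ^ 3 * hP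
  refine ⟨key, fun h => ?_⟩
  obtain ⟨h4, hb⟩ := key.mp h
  have hsq : (P ^ 2 - 1) * (P ^ 2 + 1) = 0 := by linear_combination h4
  constructor
  · rcases mul_eq_zero.mp hsq with h' | h'
    · left; rw [hb, sub_eq_zero.mp h', mul_one]
    · right; rw [hb]
      have h2' : P ^ 2 = -1 := by linear_combination h'
      rw [h2']; ring
  · have hch : (P - 1) * (P + 1) * (P - Complex.I) * (P + Complex.I) = 0 := by
      linear_combination h4 + (1 - P ^ 2) * Complex.I_sq
    rcases mul_eq_zero.mp hch with h' | h'
    · rcases mul_eq_zero.mp h' with h'' | h''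
      · rcases mul_eq_zero.mp h'' with h3 | h3
        · have : P = 1 := by linear_combination h3
          simp [this]
        · have : P = -1 := by linear_combination h3
          simp [this]
      · have : P = Complex.I := by linear_combination h''
        simp [this]
    · have : P = -Complex.I := by linear_combination h'
      simp [this]
end

section
/- Let R be a finite induced subgraph of the triangular lattice, and for a matching M of R let n₁(M) be the number of edges of M whose endpoints differ by ±(0,1) and n₂(M) the number of edges of M whose endpoints differ by ±(1,1); set w(M) = exp(iπ(n₁(M) + 2·n₂(M))/3). If M′ is obtained from M by an L-flip that replaces a pair of edges in direction (1,0) by a pair in direction (0,1), or a pair in direction (0,1) by a pair in direction (1,1), or a pair in direction (1,1) by a pair in direction (1,0), then w(M′) = e^{2πi/3}·w(M); consequently every L-flip multiplies w by e^{2πi/3} or by e^{−2πi/3}. -/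
/-- `M` is a matching of the induced subgraph of the triangular lattice on `R`. -/
def IsMatchingOn (R : Set V2) (M : Set (Sym2 V2)) : Prop :=
  (∀ e ∈ M, e ∈ triLattice.edgeSet ∧ ∀ x ∈ e, x ∈ R) ∧
  ∀ v : V2, ∀ e ∈ M, ∀ f ∈ M, v ∈ e → v ∈ f → e = f

/-- The number of edges of `M` whose endpoints differ by `±(0,1)`. -/
noncomputable def n1 (M : Set (Sym2 V2)) : ℕ :=
  {e ∈ M | ∃ a : V2, e = s(a, a + (0,1))}.ncard

/-- The number of edges of `M` whose endpoints differ by `±(1,1)`. -/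
noncomputable def n2 (M : Set (Sym2 V2)) : ℕ :=
  {e ∈ M | ∃ a : V2, e = s(a, a + (1,1))}.ncard

/-- The ground-state weight `w(M) = exp(iπ(n₁(M) + 2 n₂(M))/3)`. -/
noncomputable def wt (M : Set (Sym2 V2)) : ℂ :=
  Complex.exp ((Real.pi : ℂ) * Complex.I * ((n1 M : ℂ) + 2 * (n2 M : ℂ)) / 3)

/-- An L-flip within `R` along the 4-cycle `a, a+d, a+d+d', a+d'` that replaces the pair
of `M`-edges in direction `d` by the pair in direction `d'`. -/
def LFlipDir (R : Set V2) (M M' : Set (Sym2 V2)) (d d' : V2) : Prop :=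
  ∃ a : V2, a ∈ R ∧ a + d ∈ R ∧ a + d' ∈ R ∧ a + d + d' ∈ R ∧
    s(a, a + d) ∈ M ∧ s(a + d', a + d + d') ∈ M ∧
    s(a, a + d') ∉ M ∧ s(a + d, a + d + d') ∉ M ∧
    M' = (M \ {s(a, a + d), s(a + d', a + d + d')}) ∪
          {s(a, a + d'), s(a + d, a + d + d')}

/-- The six ordered pairs of distinct lattice directions: every 4-cycle of the
triangular lattice consists of two opposite edges in one direction and two in another,
so every L-flip is an `LFlipDir` for one of these pairs. -/
def dirPairs : List (V2 × V2) :=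
  [((1,0),(0,1)), ((0,1),(1,1)), ((1,1),(1,0)),
   ((0,1),(1,0)), ((1,1),(0,1)), ((1,0),(1,1))]


section AuxLflip

lemma sym2_dir_iff (x a d e : V2) (h : d + e ≠ 0) :
    s(x, x + d) = s(a, a + e) ↔ d = e ∧ x = a := by
  rw [Sym2.eq_iff]
  constructor
  · rintro (⟨h1, h2⟩ | ⟨h1, h2⟩)
    · subst h1; exact ⟨add_left_cancel h2, rfl⟩
    · exfalso; apply h
      have h3 : a + e + d = a := by rw [← h1, h2]
      have h4 : a + (e + d) = a + 0 := by rw [add_zero, ← add_assoc]; exact h3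
      have h5 := add_left_cancel h4
      rw [add_comm] at h5; exact h5
  · rintro ⟨rfl, rfl⟩; exact Or.inl ⟨rfl, rfl⟩

lemma exists_dir_iff (x d e : V2) (h : d + e ≠ 0) :
    (∃ a, s(x, x + d) = s(a, a + e)) ↔ d = e := by
  constructor
  · rintro ⟨a, ha⟩; exact ((sym2_dir_iff x a d e h).1 ha).1
  · rintro rfl; exact ⟨x, rfl⟩

lemma e_ne (a d d' : V2) (hdd : d + d ≠ 0) (hd' : d' ≠ 0) :
    s(a, a + d) ≠ s(a + d', a + d + d') := by
  intro hc
  rw [show a + d + d' = (a + d') + d by ring] at hc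
  obtain ⟨-, h2⟩ := (sym2_dir_iff a (a + d') d d hdd).1 hc
  apply hd'
  have : a + d' = a + 0 := by rw [add_zero, ← h2]
  exact add_left_cancel this

lemma filter_flip {α : Type*} (M : Set α) (e1 e2 f1 f2 : α) (P : α → Prop) :
    {x ∈ (M \ {e1, e2}) ∪ {f1, f2} | P x}
      = ({x ∈ M | P x} \ {e1, e2}) ∪ ({f1, f2} ∩ {x | P x}) := by
  ext x
  simp only [Set.mem_setOf_eq, Set.mem_union, Set.mem_diff, Set.mem_insert_iff,
    Set.mem_singleton_iff, Set.mem_inter_iff, Set.sep_setOf]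
  tauto

lemma ncard_add2 {α : Type*} (S : Set α) (hS : S.Finite) (f1 f2 : α) (h1 : f1 ∉ S) (h2 : f2 ∉ S)
    (h : f1 ≠ f2) : (S ∪ {f1, f2}).ncard = S.ncard + 2 := by
  rw [show S ∪ {f1, f2} = insert f1 (insert f2 S) by
    ext x; simp only [Set.mem_union, Set.mem_insert_iff, Set.mem_singleton_iff]; tauto]
  rw [Set.ncard_insert_of_notMem (by simp [h1, h]) (hS.insert f2),
    Set.ncard_insert_of_notMem h2 hS]

lemma ncard_sub2 {α : Type*} (S : Set α) (hS : S.Finite) (e1 e2 : α) (h1 : e1 ∈ S) (h2 : e2 ∈ S)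
    (h : e1 ≠ e2) : (S \ {e1, e2}).ncard + 2 = S.ncard := by
  have h3 : S \ {e1, e2} = (S \ {e2}) \ {e1} := by ext x; simp; tauto
  rw [h3]
  have h4 : e1 ∈ S \ {e2} := ⟨h1, by simp [h]⟩
  have t1 := Set.ncard_diff_singleton_add_one h4 hS.diff
  have t2 := Set.ncard_diff_singleton_add_one h2 hS
  omega

section Count
variable (M M' : Set (Sym2 V2)) (a d d' c : V2)

lemma countA (hMfin : M.Finite)
    (hdc : d + c ≠ 0) (hd'c : d' + c ≠ 0) (hd'd' : d' + d' ≠ 0) (hd0 : d ≠ 0)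
    (hf1 : s(a, a+d') ∉ M) (hf2 : s(a+d, a+d+d') ∉ M)
    (hM' : M' = (M \ {s(a,a+d), s(a+d',a+d+d')}) ∪ {s(a,a+d'), s(a+d,a+d+d')})
    (hc1 : d' = c) (hc2 : d ≠ c) :
    {e ∈ M' | ∃ x, e = s(x, x + c)}.ncard = {e ∈ M | ∃ x, e = s(x, x + c)}.ncard + 2 := by
  subst hM'
  rw [filter_flip]
  have Pe1 := exists_dir_iff a d c hdc
  have Pe2 : (∃ x, s(a+d', a+d+d') = s(x, x+c)) ↔ d = c := by
    rw [show a+d+d' = a+d'+d by ring]; exact exists_dir_iff (a+d') d c hdc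
  have Pf1 := exists_dir_iff a d' c hd'c
  have Pf2 : (∃ x, s(a+d, a+d+d') = s(x, x+c)) ↔ d' = c := exists_dir_iff (a+d) d' c hd'c
  have hdiff : {e ∈ M | ∃ x, e = s(x,x+c)} \ {s(a,a+d), s(a+d',a+d+d')}
      = {e ∈ M | ∃ x, e = s(x,x+c)} := by
    ext e
    simp only [Set.mem_diff, Set.mem_setOf_eq, Set.mem_insert_iff, Set.mem_singleton_iff]
    constructor
    · exact fun h => h.1
    · intro h
      refine ⟨h, ?_⟩
      push_neg
      constructor <;> rintro rfl
      · exact hc2 (Pe1.1 h.2)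
      · exact hc2 (Pe2.1 h.2)
  have hint : ({s(a,a+d'), s(a+d,a+d+d')} : Set (Sym2 V2)) ∩ {e | ∃ x, e = s(x,x+c)}
      = {s(a,a+d'), s(a+d,a+d+d')} := by
    ext e
    simp only [Set.mem_inter_iff, Set.mem_insert_iff, Set.mem_singleton_iff, Set.mem_setOf_eq]
    constructor
    · exact fun h => h.1
    · intro h
      refine ⟨h, ?_⟩
      rcases h with rfl | rfl
      · exact Pf1.2 hc1
      · exact Pf2.2 hc1
  rw [hdiff, hint]
  have hfne : s(a, a+d') ≠ s(a+d, a+d+d') := by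
    have h := e_ne a d' d hd'd' hd0
    rw [show a+d'+d = a+d+d' by ring] at h
    exact h
  exact ncard_add2 _ (hMfin.subset (Set.sep_subset _ _)) _ _
    (fun hc => hf1 hc.1) (fun hc => hf2 hc.1) hfne

lemma countB (hMfin : M.Finite)
    (hdc : d + c ≠ 0) (hd'c : d' + c ≠ 0) (hdd : d + d ≠ 0) (hd'0 : d' ≠ 0)
    (he1 : s(a, a+d) ∈ M) (he2 : s(a+d', a+d+d') ∈ M)
    (hM' : M' = (M \ {s(a,a+d), s(a+d',a+d+d')}) ∪ {s(a,a+d'), s(a+d,a+d+d')})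
    (hc1 : d = c) (hc2 : d' ≠ c) :
    {e ∈ M' | ∃ x, e = s(x, x + c)}.ncard + 2 = {e ∈ M | ∃ x, e = s(x, x + c)}.ncard := by
  subst hM'
  rw [filter_flip]
  have Pe1 := exists_dir_iff a d c hdc
  have Pe2 : (∃ x, s(a+d', a+d+d') = s(x, x+c)) ↔ d = c := by
    rw [show a+d+d' = a+d'+d by ring]; exact exists_dir_iff (a+d') d c hdc
  have Pf1 := exists_dir_iff a d' c hd'c
  have Pf2 : (∃ x, s(a+d, a+d+d') = s(x, x+c)) ↔ d' = c := exists_dir_iff (a+d) d' c hd'c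
  have hint : ({s(a,a+d'), s(a+d,a+d+d')} : Set (Sym2 V2)) ∩ {e | ∃ x, e = s(x,x+c)}
      = (∅ : Set (Sym2 V2)) := by
    ext e
    simp only [Set.mem_inter_iff, Set.mem_insert_iff, Set.mem_singleton_iff, Set.mem_setOf_eq,
      Set.mem_empty_iff_false, iff_false, not_and]
    rintro (rfl | rfl) h
    · exact hc2 (Pf1.1 h)
    · exact hc2 (Pf2.1 h)
  rw [hint, Set.union_empty]
  exact ncard_sub2 _ (hMfin.subset (Set.sep_subset _ _)) _ _
    ⟨he1, Pe1.2 hc1⟩ ⟨he2, Pe2.2 hc1⟩ (e_ne a d d' hdd hd'0)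

lemma countC
    (hdc : d + c ≠ 0) (hd'c : d' + c ≠ 0)
    (hM' : M' = (M \ {s(a,a+d), s(a+d',a+d+d')}) ∪ {s(a,a+d'), s(a+d,a+d+d')})
    (hc1 : d ≠ c) (hc2 : d' ≠ c) :
    {e ∈ M' | ∃ x, e = s(x, x + c)}.ncard = {e ∈ M | ∃ x, e = s(x, x + c)}.ncard := by
  subst hM'
  rw [filter_flip]
  have Pe1 := exists_dir_iff a d c hdc
  have Pe2 : (∃ x, s(a+d', a+d+d') = s(x, x+c)) ↔ d = c := by
    rw [show a+d+d' = a+d'+d by ring]; exact exists_dir_iff (a+d') d c hdc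
  have Pf1 := exists_dir_iff a d' c hd'c
  have Pf2 : (∃ x, s(a+d, a+d+d') = s(x, x+c)) ↔ d' = c := exists_dir_iff (a+d) d' c hd'c
  congr 1
  have hint : ({s(a,a+d'), s(a+d,a+d+d')} : Set (Sym2 V2)) ∩ {e | ∃ x, e = s(x,x+c)}
      = (∅ : Set (Sym2 V2)) := by
    ext e
    simp only [Set.mem_inter_iff, Set.mem_insert_iff, Set.mem_singleton_iff, Set.mem_setOf_eq,
      Set.mem_empty_iff_false, iff_false, not_and]
    rintro (rfl | rfl) h
    · exact hc2 (Pf1.1 h)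
    · exact hc2 (Pf2.1 h)
  have hdiff : {e ∈ M | ∃ x, e = s(x,x+c)} \ {s(a,a+d), s(a+d',a+d+d')}
      = {e ∈ M | ∃ x, e = s(x,x+c)} := by
    ext e
    simp only [Set.mem_diff, Set.mem_setOf_eq, Set.mem_insert_iff, Set.mem_singleton_iff]
    constructor
    · exact fun h => h.1
    · intro h
      refine ⟨h, ?_⟩
      push_neg
      constructor <;> rintro rfl
      · exact hc1 (Pe1.1 h.2)
      · exact hc1 (Pe2.1 h.2)
  rw [hint, hdiff, Set.union_empty]

end Count

lemma M_finite (R : Set V2) (hR : R.Finite) (M : Set (Sym2 V2)) (hM : IsMatchingOn R M) :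
    M.Finite := by
  apply Set.Finite.subset ((hR.prod hR).image (fun p : V2 × V2 => s(p.1, p.2)))
  intro e
  induction e using Sym2.ind with
  | _ x y =>
    intro he
    exact ⟨(x, y), Set.mk_mem_prod ((hM.1 _ he).2 x (by simp)) ((hM.1 _ he).2 y (by simp)), rfl⟩

lemma exp_sub_period (z : ℂ) :
    Complex.exp (z - 2 * (Real.pi : ℂ) * Complex.I) = Complex.exp z := by
  rw [Complex.exp_sub, Complex.exp_two_pi_mul_I, div_one]

lemma exp_add_period (z : ℂ) :
    Complex.exp (z + 2 * (Real.pi : ℂ) * Complex.I) = Complex.exp z := by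
  rw [Complex.exp_add, Complex.exp_two_pi_mul_I, mul_one]

lemma wt_shift (M M' : Set (Sym2 V2)) (p q : ℤ)
    (h1 : (n1 M' : ℤ) = n1 M + p) (h2 : (n2 M' : ℤ) = n2 M + q) :
    wt M' = Complex.exp ((Real.pi : ℂ) * Complex.I * (((p : ℤ) : ℂ) + 2 * ((q : ℤ) : ℂ)) / 3)
      * wt M := by
  unfold wt
  rw [← Complex.exp_add]
  congr 1
  have c1 : (n1 M' : ℂ) = (n1 M : ℂ) + (p : ℂ) := by exact_mod_cast h1
  have c2 : (n2 M' : ℂ) = (n2 M : ℂ) + (q : ℂ) := by exact_mod_cast h2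
  rw [c1, c2]; ring

end AuxLflip

/-- For a matching `M` of a finite induced subgraph `R` of the
triangular lattice, any L-flip replacing a `(1,0)`-pair by a `(0,1)`-pair, a
`(0,1)`-pair by a `(1,1)`-pair, or a `(1,1)`-pair by a `(1,0)`-pair multiplies the
weight `wt` by `e^{2πi/3}`; consequently every L-flip multiplies `wt` by `e^{2πi/3}`
or by `e^{-2πi/3}`. -/
theorem L_flip_weight (R : Set V2) (hR : R.Finite) (M M' : Set (Sym2 V2))
    (hM : IsMatchingOn R M) :
    ((LFlipDir R M M' (1,0) (0,1) ∨ LFlipDir R M M' (0,1) (1,1) ∨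
        LFlipDir R M M' (1,1) (1,0)) →
      wt M' = Complex.exp (2 * (Real.pi : ℂ) * Complex.I / 3) * wt M) ∧
    ((∃ d d', (d, d') ∈ dirPairs ∧ LFlipDir R M M' d d') →
      wt M' = Complex.exp (2 * (Real.pi : ℂ) * Complex.I / 3) * wt M ∨
      wt M' = Complex.exp (-(2 * (Real.pi : ℂ) * Complex.I) / 3) * wt M) := by
  classical
  have hMfin : M.Finite := M_finite R hR M hM
  have main1 : LFlipDir R M M' (1,0) (0,1) →
      wt M' = Complex.exp (2 * (Real.pi : ℂ) * Complex.I / 3) * wt M := by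
    rintro ⟨a, -, -, -, -, he1, he2, hf1, hf2, hM'⟩
    have hn1 : n1 M' = n1 M + 2 := countA M M' a (1,0) (0,1) (0,1) hMfin
      (by decide) (by decide) (by decide) (by decide) hf1 hf2 hM' rfl (by decide)
    have hn2 : n2 M' = n2 M := countC M M' a (1,0) (0,1) (1,1)
      (by decide) (by decide) hM' (by decide) (by decide)
    rw [wt_shift M M' 2 0 (by omega) (by omega)]
    congr 2
    push_cast; ring
  have main2 : LFlipDir R M M' (0,1) (1,1) →
      wt M' = Complex.exp (2 * (Real.pi : ℂ) * Complex.I / 3) * wt M := by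
    rintro ⟨a, -, -, -, -, he1, he2, hf1, hf2, hM'⟩
    have hn1 : n1 M' + 2 = n1 M := countB M M' a (0,1) (1,1) (0,1) hMfin
      (by decide) (by decide) (by decide) (by decide) he1 he2 hM' rfl (by decide)
    have hn2 : n2 M' = n2 M + 2 := countA M M' a (0,1) (1,1) (1,1) hMfin
      (by decide) (by decide) (by decide) (by decide) hf1 hf2 hM' rfl (by decide)
    rw [wt_shift M M' (-2) 2 (by omega) (by omega)]
    congr 2
    push_cast; ring
  have main3 : LFlipDir R M M' (1,1) (1,0) →
      wt M' = Complex.exp (2 * (Real.pi : ℂ) * Complex.I / 3) * wt M := by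
    rintro ⟨a, -, -, -, -, he1, he2, hf1, hf2, hM'⟩
    have hn1 : n1 M' = n1 M := countC M M' a (1,1) (1,0) (0,1)
      (by decide) (by decide) hM' (by decide) (by decide)
    have hn2 : n2 M' + 2 = n2 M := countB M M' a (1,1) (1,0) (1,1) hMfin
      (by decide) (by decide) (by decide) (by decide) he1 he2 hM' rfl (by decide)
    rw [wt_shift M M' 0 (-2) (by omega) (by omega),
      show (Real.pi : ℂ) * Complex.I * ((((0 : ℤ) : ℤ) : ℂ) + 2 * ((((-2 : ℤ) : ℤ)) : ℂ)) / 3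
          = 2 * (Real.pi : ℂ) * Complex.I / 3 - 2 * (Real.pi : ℂ) * Complex.I by
        push_cast; ring,
      exp_sub_period]
  have rev1 : LFlipDir R M M' (0,1) (1,0) →
      wt M' = Complex.exp (-(2 * (Real.pi : ℂ) * Complex.I) / 3) * wt M := by
    rintro ⟨a, -, -, -, -, he1, he2, hf1, hf2, hM'⟩
    have hn1 : n1 M' + 2 = n1 M := countB M M' a (0,1) (1,0) (0,1) hMfin
      (by decide) (by decide) (by decide) (by decide) he1 he2 hM' rfl (by decide)
    have hn2 : n2 M' = n2 M := countC M M' a (0,1) (1,0) (1,1)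
      (by decide) (by decide) hM' (by decide) (by decide)
    rw [wt_shift M M' (-2) 0 (by omega) (by omega)]
    congr 2
    push_cast; ring
  have rev2 : LFlipDir R M M' (1,1) (0,1) →
      wt M' = Complex.exp (-(2 * (Real.pi : ℂ) * Complex.I) / 3) * wt M := by
    rintro ⟨a, -, -, -, -, he1, he2, hf1, hf2, hM'⟩
    have hn1 : n1 M' = n1 M + 2 := countA M M' a (1,1) (0,1) (0,1) hMfin
      (by decide) (by decide) (by decide) (by decide) hf1 hf2 hM' rfl (by decide)
    have hn2 : n2 M' + 2 = n2 M := countB M M' a (1,1) (0,1) (1,1) hMfin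
      (by decide) (by decide) (by decide) (by decide) he1 he2 hM' rfl (by decide)
    rw [wt_shift M M' 2 (-2) (by omega) (by omega)]
    congr 2
    push_cast; ring
  have rev3 : LFlipDir R M M' (1,0) (1,1) →
      wt M' = Complex.exp (-(2 * (Real.pi : ℂ) * Complex.I) / 3) * wt M := by
    rintro ⟨a, -, -, -, -, he1, he2, hf1, hf2, hM'⟩
    have hn1 : n1 M' = n1 M := countC M M' a (1,0) (1,1) (0,1)
      (by decide) (by decide) hM' (by decide) (by decide)
    have hn2 : n2 M' = n2 M + 2 := countA M M' a (1,0) (1,1) (1,1) hMfin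
      (by decide) (by decide) (by decide) (by decide) hf1 hf2 hM' rfl (by decide)
    rw [wt_shift M M' 0 2 (by omega) (by omega),
      show (Real.pi : ℂ) * Complex.I * ((((0 : ℤ) : ℤ) : ℂ) + 2 * (((2 : ℤ) : ℤ) : ℂ)) / 3
          = -(2 * (Real.pi : ℂ) * Complex.I) / 3 + 2 * (Real.pi : ℂ) * Complex.I by
        push_cast; ring,
      exp_add_period]
  refine ⟨fun h => ?_, fun ⟨d, d', hmem, h⟩ => ?_⟩
  · rcases h with h | h | h
    · exact main1 h
    · exact main2 h
    · exact main3 h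
  · simp only [dirPairs, List.mem_cons, List.not_mem_nil, or_false, Prod.mk.injEq] at hmem
    rcases hmem with ⟨rfl, rfl⟩ | ⟨rfl, rfl⟩ | ⟨rfl, rfl⟩ | ⟨rfl, rfl⟩ | ⟨rfl, rfl⟩ | ⟨rfl, rfl⟩
    · exact Or.inl (main1 h)
    · exact Or.inl (main2 h)
    · exact Or.inl (main3 h)
    · exact Or.inr (rev1 h)
    · exact Or.inr (rev2 h)
    · exact Or.inr (rev3 h)
end

section
/- There exists a perfect matching of the elongated triangular ((3³,4²)) lattice with respect to which some square face admits a flip, but no lozenge 4-cycle (a unit 4-cycle (x,y), (x+1,y), (x+1,y+1), (x,y+1) with y even, which is split into two triangles by the diagonal edge) admits a flip and no diamond 6-cycle (the boundary cycle of a square face together with the two triangles attached to its bottom and top horizontal edges) admits a flip. Hence the square flip is necessary for ergodicity of perfect matchings on this lattice. -/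
/-- The elongated triangular `(3³,4²)` lattice on `ℤ²`: `(x,y)` is adjacent to
`(x±1,y)` and `(x,y±1)`, and additionally to `(x+1,y+1)` whenever `y` is even. -/
def etLattice : SimpleGraph V2 :=
  SimpleGraph.fromRel (fun u v =>
    v = u + (1,0) ∨ v = u + (0,1) ∨ (v = u + (1,1) ∧ Even u.2))

/-- The unit 4-cycle with lower-left corner `p`; it is a square face when `p.2` is odd
and a lozenge (split into two triangles by a diagonal) when `p.2` is even. -/
def unitCycle (p : V2) : List V2 := [p, p + (1,0), p + (1,1), p + (0,1)]

/-- The diamond 6-cycle: the boundary of the square face at `p` (with `p.2` odd)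
together with the two triangles attached to its bottom and top horizontal edges. -/
def etDiamond (p : V2) : List V2 :=
  [p + (0,-1), p + (1,0), p + (1,1), p + (1,2), p + (0,1), p]


/-! ### Auxiliary construction -/

/-- Row offset: 1 when `y % 4 ∈ {1,2}`, else 0. -/
def aaET (y : ℤ) : ℤ := if y % 4 = 1 ∨ y % 4 = 2 then 1 else 0

/-- The matching: horizontal dominoes `(x,y)-(x+1,y)` with `x + aaET y` even. -/
def MMET : Set (Sym2 V2) := {e | ∃ v : V2, e = s(v, v + (1,0)) ∧ Even (v.1 + aaET v.2)}

lemma mem_MMET_iff (u v : V2) : s(u,v) ∈ MMET ↔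
    (v = u + (1,0) ∧ Even (u.1 + aaET u.2)) ∨ (u = v + (1,0) ∧ Even (v.1 + aaET v.2)) := by
  constructor
  · rintro ⟨w, hw, he⟩
    rw [Sym2.eq_iff] at hw
    rcases hw with ⟨h1, h2⟩ | ⟨h1, h2⟩
    · subst h1; exact Or.inl ⟨h2, he⟩
    · subst h2; exact Or.inr ⟨h1, he⟩
  · rintro (⟨h1, h2⟩ | ⟨h1, h2⟩)
    · exact ⟨u, by rw [h1], h2⟩
    · exact ⟨v, by rw [h1, Sym2.eq_swap], h2⟩

lemma MMET_snd {u v : V2} (h : s(u,v) ∈ MMET) : u.2 = v.2 := by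
  rcases (mem_MMET_iff u v).mp h with ⟨h1,_⟩|⟨h1,_⟩ <;> rw [h1] <;> simp

lemma horiz_mem (p : V2) : s(p, p + (1,0)) ∈ MMET ↔ Even (p.1 + aaET p.2) := by
  rw [mem_MMET_iff]
  constructor
  · rintro (⟨_, h⟩|⟨h, _⟩)
    · exact h
    · exfalso; have := congrArg Prod.fst h; simp at this; omega
  · exact fun h => Or.inl ⟨rfl, h⟩

lemma top_mem (p : V2) : s(p+(1,1), p+(0,1)) ∈ MMET ↔ Even (p.1 + aaET (p.2+1)) := by
  have h : p + ((1:ℤ),(1:ℤ)) = (p + (0,1)) + (1,0) := by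
    apply Prod.ext <;> simp
  rw [h, Sym2.eq_swap, horiz_mem]
  simp

lemma aaET_flip {y : ℤ} (hy : Even y) : aaET y + aaET (y+1) = 1 := by
  have h2 : y % 2 = 0 := Int.even_iff.mp hy
  unfold aaET
  have h4 : y % 4 = 0 ∨ y % 4 = 2 := by omega
  have h4' : (y+1) % 4 = y % 4 + 1 := by omega
  rcases h4 with h|h <;> simp [h, h4']

lemma MMET_pm : IsPerfectMatching etLattice MMET := by
  constructor
  · rintro e ⟨v, rfl, -⟩
    rw [SimpleGraph.mem_edgeSet, etLattice, SimpleGraph.fromRel_adj]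
    refine ⟨?_, Or.inl (Or.inl rfl)⟩
    intro h; have := congrArg Prod.fst h; simp at this
  · intro v
    by_cases h : Even (v.1 + aaET v.2)
    · refine ⟨s(v, v + (1,0)), ⟨(horiz_mem v).mpr h, Sym2.mem_mk_left _ _⟩, ?_⟩
      rintro e ⟨⟨w, rfl, hw⟩, hv⟩
      rw [Sym2.mem_iff] at hv
      rcases hv with rfl | hv
      · rfl
      · exfalso
        obtain ⟨h1, h2⟩ : v.1 = w.1 + 1 ∧ v.2 = w.2 := by rw [hv]; exact ⟨rfl, by simp⟩
        rw [h1, h2, Int.even_iff] at h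
        rw [Int.even_iff] at hw
        omega
    · have he : v - ((1:ℤ),(0:ℤ)) + (1,0) = v := by apply Prod.ext <;> simp
      have hkey : Even ((v - ((1:ℤ),(0:ℤ))).1 + aaET ((v - ((1:ℤ),(0:ℤ))).2)) := by
        have h1 : (v - ((1:ℤ),(0:ℤ))).1 = v.1 - 1 := rfl
        have h2 : (v - ((1:ℤ),(0:ℤ))).2 = v.2 := by simp
        rw [h1, h2, Int.even_iff]
        rw [Int.even_iff] at h
        omega
      refine ⟨s(v - (1,0), v), ⟨?_, Sym2.mem_mk_right _ _⟩, ?_⟩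
      · have := (horiz_mem (v - (1,0))).mpr hkey
        rwa [he] at this
      rintro e ⟨⟨w, rfl, hw⟩, hv⟩
      rw [Sym2.mem_iff] at hv
      rcases hv with rfl | hv
      · exfalso; exact h hw
      · have hw' : w = v - (1,0) := by rw [hv]; apply Prod.ext <;> simp
        rw [hw', he]

lemma cycEdges_unitCycle (p : V2) : cycEdges (unitCycle p) =
    [s(p, p+(1,0)), s(p+(1,0), p+(1,1)), s(p+(1,1), p+(0,1)), s(p+(0,1), p)] := by
  rfl

lemma cycEdges_etDiamond (p : V2) : cycEdges (etDiamond p) =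
    [s(p+(0,-1), p+(1,0)), s(p+(1,0), p+(1,1)), s(p+(1,1), p+(1,2)),
     s(p+(1,2), p+(0,1)), s(p+(0,1), p), s(p, p+(0,-1))] := by
  rfl

lemma snd_ne_not_mem {u v : V2} (h : u.2 ≠ v.2) : s(u,v) ∉ MMET :=
  fun hm => h (MMET_snd hm)

/-- There is a perfect matching of the elongated triangular lattice
with respect to which some square face admits a flip, but no lozenge 4-cycle and no
diamond 6-cycle does. Hence the square flip is necessary for ergodicity. -/
theorem elongated_triangular_square_flip_necessary :
    ∃ M : Set (Sym2 V2), IsPerfectMatching etLattice M ∧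
      (∃ p : V2, Odd p.2 ∧ AdmitsFlip M (unitCycle p)) ∧
      (∀ p : V2, Even p.2 → ¬ AdmitsFlip M (unitCycle p)) ∧
      (∀ p : V2, Odd p.2 → ¬ AdmitsFlip M (etDiamond p)) := by
  refine ⟨MMET, MMET_pm, ⟨(1,1), ⟨0, rfl⟩, ?_⟩, ?_, ?_⟩
  · -- the square face at (1,1) admits a flip
    left
    rw [cycEdges_unitCycle]
    intro i hi
    simp only [List.length_cons, List.length_nil] at hi
    interval_cases i
    · show s(((1:ℤ),(1:ℤ)), (1,1)+(1,0)) ∈ MMET ↔ Even 0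
      rw [horiz_mem]; decide
    · show s(((1:ℤ),(1:ℤ))+(1,0), (1,1)+(1,1)) ∈ MMET ↔ Even 1
      exact iff_of_false (snd_ne_not_mem (by decide)) (by decide)
    · show s(((1:ℤ),(1:ℤ))+(1,1), (1,1)+(0,1)) ∈ MMET ↔ Even 2
      rw [top_mem]; decide
    · show s(((1:ℤ),(1:ℤ))+(0,1), (1,1)) ∈ MMET ↔ Even 3
      exact iff_of_false (snd_ne_not_mem (by decide)) (by decide)
  · -- no lozenge admits a flip
    intro p hp hA
    rcases hA with h | h
    · have h0 : s(p, p+(1,0)) ∈ MMET ↔ Even 0 := h 0 (by rw [cycEdges_unitCycle]; norm_num)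
      have h2 : s(p+(1,1), p+(0,1)) ∈ MMET ↔ Even 2 := h 2 (by rw [cycEdges_unitCycle]; norm_num)
      have hb : Even (p.1 + aaET p.2) := (horiz_mem p).mp (h0.mpr (by decide))
      have ht : Even (p.1 + aaET (p.2+1)) := (top_mem p).mp (h2.mpr (by decide))
      have hf := aaET_flip hp
      rw [Int.even_iff] at hb ht
      omega
    · have h1 : s(p+(1,0), p+(1,1)) ∈ MMET ↔ ¬ Even 1 := h 1 (by rw [cycEdges_unitCycle]; norm_num)
      have := MMET_snd (h1.mpr (by decide))
      simp at this
  · -- no diamond admits a flip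
    intro p hp hA
    rcases hA with h | h
    · have h0 : s(p+(0,-1), p+(1,0)) ∈ MMET ↔ Even 0 := h 0 (by rw [cycEdges_etDiamond]; norm_num)
      have := MMET_snd (h0.mpr (by decide))
      simp at this
    · have h1 : s(p+(1,0), p+(1,1)) ∈ MMET ↔ ¬ Even 1 := h 1 (by rw [cycEdges_etDiamond]; norm_num)
      have := MMET_snd (h1.mpr (by decide))
      simp at this
end
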